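/- arXiv:1402.4983 — 7 statements merged into one kernel-verified Lean document; each statement's English description precedes it below -/
import Mathlib

section
/- For every ε > ε' > 0 and every pair of non-decreasing functions x_t, y_t with x_t → ∞ and y_t → ∞ as t → ∞, there exists t' > 0 such that for all t > t': if L(x_t) > (1 + ε)·L(y_t) then L(x_t − y_t) > (1 + ε')·L(y_t). -/
open MeasureTheory Filter

/-- Lemma 2.7 of the paper.
`L : [0,∞) → (0,∞)` is càdlàg, non-decreasing, unbounded and slowly varying at infinity.
For every `ε > ε' > 0` and every pair of non-decreasing functions `x_t, y_t → ∞`,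
there exists `t' > 0` such that for all `t > t'`:
if `L(x_t) > (1 + ε) L(y_t)` then `L(x_t - y_t) > (1 + ε') L(y_t)`. -/
theorem slowly_varying_jump_comparison
    (L : ℝ → ℝ)
    (hLpos : ∀ x, 0 ≤ x → 0 < L x)
    (hLmono : MonotoneOn L (Set.Ici 0))
    (hLcadlag : ∀ x ≥ 0, ContinuousWithinAt L (Set.Ici x) x)
    (hLunb : Tendsto L atTop atTop)
    (hLsv : ∀ v > 0, Tendsto (fun u => L (u * v) / L u) atTop (nhds 1))
    (ε ε' : ℝ) (hε' : 0 < ε') (hε : ε' < ε)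
    (x y : ℝ → ℝ) (hx : Monotone x) (hy : Monotone y)
    (hxtop : Tendsto x atTop atTop) (hytop : Tendsto y atTop atTop) :
    ∃ t' > (0 : ℝ), ∀ t > t',
      (1 + ε) * L (y t) < L (x t) → (1 + ε') * L (y t) < L (x t - y t) := by
  set δ : ℝ := (ε - ε') / (2 * (1 + ε')) with hδdef
  have hδpos : 0 < δ := by
    apply div_pos <;> nlinarith
  have hδε : δ < ε := by
    rw [hδdef, div_lt_iff₀ (by nlinarith)]
    nlinarith
  have hδmul : (1 + δ) * (1 + ε') < 1 + ε := by
    have h1 : δ * (1 + ε') = (ε - ε') / 2 := by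
      rw [hδdef]; field_simp
    nlinarith
  have hev : ∀ᶠ u in atTop, L (u * 2) / L u < 1 + δ :=
    (hLsv 2 (by norm_num)).eventually_lt_const (by linarith)
  obtain ⟨U0, hU0⟩ := eventually_atTop.mp hev
  set U : ℝ := max U0 1 with hUdef
  have hU1 : (1 : ℝ) ≤ U := le_max_right _ _
  have hUprop : ∀ u, U ≤ u → L (u * 2) < (1 + δ) * L u := by
    intro u hu
    have hu0 : (0 : ℝ) < u := lt_of_lt_of_le (by linarith) hu
    have hLu : 0 < L u := hLpos u hu0.le
    have := hU0 u (le_trans (le_max_left _ _) hu)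
    rw [div_lt_iff₀ hLu] at this
    linarith
  obtain ⟨Tx, hTx⟩ := eventually_atTop.mp (hxtop.eventually_ge_atTop (2 * U))
  obtain ⟨Ty, hTy⟩ := eventually_atTop.mp (hytop.eventually_ge_atTop U)
  refine ⟨max (max Tx Ty) 1, lt_of_lt_of_le one_pos (le_max_right _ _), ?_⟩
  intro t ht hcond
  have htx : 2 * U ≤ x t := hTx t (le_of_lt (lt_of_le_of_lt (le_trans (le_max_left _ _) (le_max_left _ _)) ht))
  have hty : U ≤ y t := hTy t (le_of_lt (lt_of_le_of_lt (le_trans (le_max_right _ _) (le_max_left _ _)) ht))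
  have hy0 : (0 : ℝ) < y t := lt_of_lt_of_le (by linarith) hty
  have hx0 : (0 : ℝ) < x t := by linarith
  have hLy : 0 < L (y t) := hLpos _ hy0.le
  -- Step 1: x t > 2 * y t
  have hgt : 2 * y t < x t := by
    by_contra hle
    push_neg at hle
    have h1 : L (x t) ≤ L (2 * y t) :=
      hLmono (Set.mem_Ici.2 hx0.le) (Set.mem_Ici.2 (by linarith)) hle
    have h2 : L (y t * 2) < (1 + δ) * L (y t) := hUprop _ hty
    rw [mul_comm] at h2
    nlinarith
  -- Step 2
  have hhalf : U ≤ x t / 2 := by linarith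
  have hx2pos : (0 : ℝ) < x t / 2 := by linarith
  have key : L (x t) < (1 + δ) * L (x t / 2) := by
    have := hUprop (x t / 2) hhalf
    rwa [div_mul_cancel₀ _ (two_ne_zero)] at this
  have hsub : x t / 2 ≤ x t - y t := by linarith
  have hmono : L (x t / 2) ≤ L (x t - y t) :=
    hLmono (Set.mem_Ici.2 hx2pos.le) (Set.mem_Ici.2 (by linarith)) hsub
  have hL2 : 0 < L (x t / 2) := hLpos _ hx2pos.le
  nlinarith
end

section
/- As t → ∞, P( Y_{n_{ℓ_t}} > t·h_t² / r_t ) → 1; i.e. the value of the first term of the sequence exceeding the level ℓ_t is with overwhelming probability larger than t h_t² / r_t. -/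
open MeasureTheory Filter ProbabilityTheory

set_option maxHeartbeats 1000000

/-- Proposition: lower bound on first exceedance.
With `L` càdlàg, non-decreasing, unbounded and slowly varying, `ℓ t := min {s ≥ 0 : s·L s ≥ t}`,
`r t := L (ℓ t)`, `(Y_n)_{n ≥ 1}` i.i.d. strictly positive with `P(Y_1 > x) = 1/L x`,
`n_l := min {n ≥ 1 : Y_n > l}`, and a scaling function `h` with `h_t → ∞`, `h_t² = o(r_t)` and
eventually `L(ℓ_t/h_t³) > L(ℓ_t)(1 - 1/h_t)` and `L(ℓ_t h_t³) < L(ℓ_t)(1 + 1/h_t)`, we have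
`P( Y_{n_{ℓ_t}} > t h_t² / r_t ) → 1` as `t → ∞`. -/
theorem first_exceedance_value_large
    {Ω : Type*} [MeasurableSpace Ω] (P : Measure Ω) [IsProbabilityMeasure P]
    (L : ℝ → ℝ)
    (hLpos : ∀ x, 0 ≤ x → 0 < L x)
    (hLmono : MonotoneOn L (Set.Ici 0))
    (hLcadlag : ∀ x ≥ 0, ContinuousWithinAt L (Set.Ici x) x)
    (hLunb : Tendsto L atTop atTop)
    (hLsv : ∀ v > 0, Tendsto (fun u => L (u * v) / L u) atTop (nhds 1))
    (ℓ : ℝ → ℝ)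
    (hℓ : ∀ t, IsLeast {s : ℝ | 0 ≤ s ∧ t ≤ s * L s} (ℓ t))
    (r : ℝ → ℝ) (hr : ∀ t, r t = L (ℓ t))
    (Y : ℕ → Ω → ℝ)
    (hYmeas : ∀ i, Measurable (Y i))
    (hYindep : iIndepFun Y P)
    (hYid : ∀ i, Measure.map (Y i) P = Measure.map (Y 1) P)
    (hYpos : ∀ i, ∀ᵐ ω ∂P, 0 < Y i ω)
    (hYtail : ∀ x : ℝ, 0 ≤ x → P {ω | x < Y 1 ω} = ENNReal.ofReal (1 / L x))
    (n : ℝ → Ω → ℕ)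
    (hnmeas : ∀ l, Measurable (n l))
    (hn : ∀ l, ∀ᵐ ω ∂P, IsLeast {k : ℕ | 1 ≤ k ∧ l < Y k ω} (n l ω))
    (h : ℝ → ℝ)
    (hhmono : Monotone h) (hhpos : ∀ t, 0 < h t)
    (hhtop : Tendsto h atTop atTop)
    (hho : (fun t => (h t) ^ 2) =o[atTop] r)
    (hhL : ∀ᶠ t in atTop,
      L (ℓ t) * (1 - 1 / h t) < L (ℓ t / (h t) ^ 3) ∧
      L (ℓ t * (h t) ^ 3) < L (ℓ t) * (1 + 1 / h t)) :
    Tendsto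
      (fun t =>
        (P {ω | t * (h t) ^ 2 / r t < Y (n (ℓ t) ω) ω}).toReal)
      atTop (nhds 1) := by
  classical
  have hL0 : 0 < L 0 := hLpos 0 le_rfl
  -- measurability of the event
  have hEmeas : ∀ (l x : ℝ), MeasurableSet {ω | x < Y (n l ω) ω} := by
    intro l x
    have hset : {ω | x < Y (n l ω) ω}
        = ⋃ k : ℕ, ((n l) ⁻¹' {k} ∩ (Y k) ⁻¹' Set.Ioi x) := by
      ext ω
      simp only [Set.mem_setOf_eq, Set.mem_iUnion, Set.mem_inter_iff, Set.mem_preimage,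
        Set.mem_singleton_iff, Set.mem_Ioi]
      exact ⟨fun hx => ⟨n l ω, rfl, hx⟩, fun ⟨k, hk, hx⟩ => hk ▸ hx⟩
    rw [hset]
    exact MeasurableSet.iUnion fun k =>
      (hnmeas l (measurableSet_singleton k)).inter ((hYmeas k) measurableSet_Ioi)
  -- tail of each Y k
  have htail : ∀ x : ℝ, 0 ≤ x → ∀ k, P ((Y k) ⁻¹' Set.Ioi x) = ENNReal.ofReal (1 / L x) := by
    intro x hx k
    have h1 : P ((Y k) ⁻¹' Set.Ioi x) = Measure.map (Y k) P (Set.Ioi x) :=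
      (Measure.map_apply (hYmeas k) measurableSet_Ioi).symm
    rw [h1, hYid k, Measure.map_apply (hYmeas 1) measurableSet_Ioi]
    exact hYtail x hx
  -- the bound function tends to 0
  have hsq : Tendsto (fun t => Real.sqrt (h t)) atTop atTop := by
    rw [Filter.tendsto_atTop]
    intro C
    filter_upwards [hhtop.eventually_ge_atTop (C ^ 2)] with t hC
    calc C ≤ |C| := le_abs_self C
      _ = Real.sqrt (C ^ 2) := (Real.sqrt_sq_eq_abs C).symm
      _ ≤ Real.sqrt (h t) := Real.sqrt_le_sqrt hC
  set b : ℝ → ℝ :=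
    fun t => 1 / Real.sqrt (h t) + 1 / (h t * L 0) + Real.exp (-Real.sqrt (h t)) with hbdef
  have hb0 : Tendsto b atTop (nhds 0) := by
    have h1 : Tendsto (fun t => 1 / Real.sqrt (h t)) atTop (nhds 0) := by
      simp only [one_div]
      exact hsq.inv_tendsto_atTop
    have h2 : Tendsto (fun t => 1 / (h t * L 0)) atTop (nhds 0) := by
      simp only [one_div]
      exact (hhtop.atTop_mul_const hL0).inv_tendsto_atTop
    have h3 : Tendsto (fun t => Real.exp (-Real.sqrt (h t))) atTop (nhds 0) :=
      Real.tendsto_exp_atBot.comp (tendsto_neg_atTop_atBot.comp hsq)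
    rw [hbdef]
    simpa only [add_zero] using (h1.add h2).add h3
  -- the key eventual lower bound
  have key : ∀ᶠ t in atTop,
      1 - b t ≤ (P {ω | t * (h t) ^ 2 / r t < Y (n (ℓ t) ω) ω}).toReal := by
    filter_upwards [hhL, hhtop.eventually_ge_atTop 2, eventually_gt_atTop (0 : ℝ)]
      with t hLt hh2 ht0
    obtain ⟨hL1, hL2⟩ := hLt
    set l := ℓ t with hldef
    have hl0 : 0 ≤ l := (hℓ t).1.1
    have hts : t ≤ l * L l := (hℓ t).1.2
    have hrl : r t = L l := hr t
    have hrpos : 0 < L l := hLpos l hl0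
    have hh0 : (0 : ℝ) < h t := hhpos t
    have hh1 : (1 : ℝ) < h t := by linarith
    have hlpos : 0 < l := by
      rcases hl0.lt_or_eq with h' | h'
      · exact h'
      · exfalso
        rw [← h'] at hts
        simp only [zero_mul] at hts
        exact absurd hts (not_le.mpr ht0)
    set X := t * h t ^ 2 / r t with hXdef
    -- lower bound on t
    have hstep : (l / h t) * L (l / h t) < t := by
      have hlt : l / h t < l := div_lt_self hlpos hh1
      have hnotmem : l / h t ∉ {s : ℝ | 0 ≤ s ∧ t ≤ s * L s} := fun hmem =>
        absurd ((hℓ t).2 hmem) (not_le.mpr hlt)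
      have hx : ¬ t ≤ (l / h t) * L (l / h t) := fun hc => hnotmem ⟨by positivity, hc⟩
      exact not_le.mp hx
    have hcube : h t ≤ h t ^ 3 := by nlinarith
    have hL13 : L (l / h t ^ 3) ≤ L (l / h t) := by
      apply hLmono (Set.mem_Ici.mpr (by positivity)) (Set.mem_Ici.mpr (by positivity))
      gcongr
    have hLlow : L l * (1 - 1 / h t) < L (l / h t) := lt_of_lt_of_le hL1 hL13
    -- l ≤ X
    have hlX : l ≤ X := by
      rw [hXdef, hrl, le_div_iff₀ hrpos]
      have h1 : (l / h t) * (L l * (1 - 1 / h t)) < t :=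
        calc (l / h t) * (L l * (1 - 1 / h t))
            ≤ (l / h t) * L (l / h t) :=
              mul_le_mul_of_nonneg_left hLlow.le (by positivity)
          _ < t := hstep
      have e : (l / h t) * (L l * (1 - 1 / h t)) = l * L l * (h t - 1) / h t ^ 2 := by
        field_simp
      rw [e, div_lt_iff₀ (by positivity)] at h1
      nlinarith [mul_nonneg (mul_nonneg hl0 hrpos.le) (by linarith : (0 : ℝ) ≤ h t - 2)]
    have hX0 : 0 ≤ X := le_trans hl0 hlX
    have hXle : X ≤ l * h t ^ 3 := by
      rw [hXdef, hrl, div_le_iff₀ hrpos]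
      nlinarith [mul_nonneg (mul_nonneg hl0 hrpos.le)
          (by nlinarith : (0 : ℝ) ≤ h t ^ 3 - h t ^ 2),
        mul_le_mul_of_nonneg_right hts (by positivity : (0 : ℝ) ≤ h t ^ 2)]
    have hLX1 : L l ≤ L X := hLmono (Set.mem_Ici.mpr hl0) (Set.mem_Ici.mpr hX0) hlX
    have hLX2 : L X < L l * (1 + 1 / h t) :=
      lt_of_le_of_lt
        (hLmono (Set.mem_Ici.mpr hX0) (Set.mem_Ici.mpr (by positivity)) hXle) hL2
    have hLXpos : 0 < L X := lt_of_lt_of_le hrpos hLX1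
    have hinv1 : 1 / L l ≤ 1 := by
      have h1 : ENNReal.ofReal (1 / L l) ≤ 1 := by
        rw [← hYtail l hl0]
        exact prob_le_one
      exact ENNReal.ofReal_le_one.mp h1
    set N := ⌈L l * Real.sqrt (h t)⌉₊ with hNdef
    have hsqpos : 0 < Real.sqrt (h t) := Real.sqrt_pos.mpr hh0
    have hN1 : L l * Real.sqrt (h t) ≤ (N : ℝ) := Nat.le_ceil _
    have hN2 : (N : ℝ) ≤ L l * Real.sqrt (h t) + 1 :=
      (Nat.ceil_lt_add_one (by positivity)).le
    set δ : ℝ := 1 / L l - 1 / L X with hδdef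
    have hδ0 : 0 ≤ δ := by
      have := one_div_le_one_div_of_le hrpos hLX1
      rw [hδdef]
      linarith
    have hδle : δ ≤ 1 / (h t * L l) := by
      rw [hδdef, div_sub_div _ _ (ne_of_gt hrpos) (ne_of_gt hLXpos),
        div_le_div_iff₀ (by positivity) (by positivity)]
      have e2 : h t * (L l * (1 + 1 / h t)) = h t * L l + L l := by
        field_simp
      have h6 := mul_lt_mul_of_pos_left hLX2 hh0
      rw [e2] at h6
      nlinarith [mul_lt_mul_of_pos_right h6 hrpos,
        mul_le_mul_of_nonneg_left hLX1 hrpos.le]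
    -- the events
    set A : Set Ω := ⋃ k ∈ Finset.Icc 1 N, (Y k) ⁻¹' Set.Ioc l X with hAdef
    set B : Set Ω := ⋂ k ∈ Finset.Icc 1 N, (Y k) ⁻¹' Set.Iic l with hBdef
    set E : Set Ω := {ω | X < Y (n l ω) ω} with hEdef
    have hEms : MeasurableSet E := hEmeas l X
    have hsub : P Eᶜ ≤ P (A ∪ B) := by
      apply measure_mono_ae
      filter_upwards [hn l] with ω hω hc
      have hcc : ¬ X < Y (n l ω) ω := hc
      by_cases hk : n l ω ≤ N
      · left
        refine Set.mem_biUnion (Finset.mem_Icc.mpr ⟨hω.1.1, hk⟩) ?_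
        exact Set.mem_preimage.mpr ⟨hω.1.2, not_lt.mp hcc⟩
      · right
        refine Set.mem_biInter fun k hk' => ?_
        rcases Finset.mem_Icc.mp hk' with ⟨hk1, hk2⟩
        simp only [Set.mem_preimage, Set.mem_Iic]
        by_contra hY
        have hle : n l ω ≤ k := hω.2 ⟨hk1, not_le.mp hY⟩
        omega
    have hterm : ∀ k, P ((Y k) ⁻¹' Set.Ioc l X) = ENNReal.ofReal δ := by
      intro k
      have hpre : (Y k) ⁻¹' Set.Ioc l X = ((Y k) ⁻¹' Set.Ioi l) \ ((Y k) ⁻¹' Set.Ioi X) := by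
        rw [← Set.preimage_diff, Set.Ioi_diff_Ioi]
      rw [hpre,
        measure_diff (Set.preimage_mono (Set.Ioi_subset_Ioi hlX))
          ((hYmeas k) measurableSet_Ioi).nullMeasurableSet (measure_ne_top P _),
        htail l hl0 k, htail X hX0 k, hδdef,
        ENNReal.ofReal_sub _ (one_div_nonneg.mpr hLXpos.le)]
    have hAle : P A ≤ ENNReal.ofReal ((N : ℝ) * δ) := by
      calc P A ≤ ∑ k ∈ Finset.Icc 1 N, P ((Y k) ⁻¹' Set.Ioc l X) :=
            measure_biUnion_finset_le _ _
        _ = ENNReal.ofReal ((N : ℝ) * δ) := by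
            rw [Finset.sum_congr rfl fun k _ => hterm k, Finset.sum_const, Nat.card_Icc,
              Nat.add_sub_cancel, nsmul_eq_mul, ← ENNReal.ofReal_natCast N,
              ← ENNReal.ofReal_mul (Nat.cast_nonneg N)]
    have hfac : ∀ k, P ((Y k) ⁻¹' Set.Iic l) = ENNReal.ofReal (1 - 1 / L l) := by
      intro k
      have hpre : (Y k) ⁻¹' Set.Iic l = ((Y k) ⁻¹' Set.Ioi l)ᶜ := by
        rw [← Set.preimage_compl, Set.compl_Ioi]
      rw [hpre, prob_compl_eq_one_sub ((hYmeas k) measurableSet_Ioi), htail l hl0 k,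
        ENNReal.ofReal_sub _ (one_div_nonneg.mpr hrpos.le), ENNReal.ofReal_one]
    have hBeq : P B = ENNReal.ofReal ((1 - 1 / L l) ^ N) := by
      have hprod := hYindep.measure_inter_preimage_eq_mul (Finset.Icc 1 N)
        (sets := fun _ => Set.Iic l) (fun i _ => measurableSet_Iic)
      rw [hBdef, hprod, Finset.prod_congr rfl fun k _ => hfac k, Finset.prod_const,
        Nat.card_Icc, Nat.add_sub_cancel, ← ENNReal.ofReal_pow (by linarith)]
    have hcompl : P Eᶜ ≤ ENNReal.ofReal ((N : ℝ) * δ + (1 - 1 / L l) ^ N) := by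
      calc P Eᶜ ≤ P (A ∪ B) := hsub
        _ ≤ P A + P B := measure_union_le _ _
        _ ≤ ENNReal.ofReal ((N : ℝ) * δ) + ENNReal.ofReal ((1 - 1 / L l) ^ N) := by
            rw [hBeq]
            exact add_le_add hAle le_rfl
        _ = ENNReal.ofReal ((N : ℝ) * δ + (1 - 1 / L l) ^ N) :=
            (ENNReal.ofReal_add (mul_nonneg (Nat.cast_nonneg N) hδ0)
              (pow_nonneg (by linarith) N)).symm
    -- the real bound
    have hLl0 : L 0 ≤ L l := hLmono Set.self_mem_Ici (Set.mem_Ici.mpr hl0) hl0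
    have t1 : (N : ℝ) * δ ≤ 1 / Real.sqrt (h t) + 1 / (h t * L 0) := by
      have step1 : (N : ℝ) * δ ≤ (L l * Real.sqrt (h t) + 1) * (1 / (h t * L l)) :=
        mul_le_mul hN2 hδle hδ0 (by positivity)
      have step2 : L l * Real.sqrt (h t) * (1 / (h t * L l)) = 1 / Real.sqrt (h t) := by
        rw [mul_one_div]
        rw [show L l * Real.sqrt (h t) / (h t * L l) = Real.sqrt (h t) / h t by
          rw [mul_comm (L l)]
          exact mul_div_mul_right _ _ (ne_of_gt hrpos)]
        exact Real.sqrt_div_self'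
      have step3 : 1 / (h t * L l) ≤ 1 / (h t * L 0) :=
        one_div_le_one_div_of_le (by positivity) (by nlinarith)
      calc (N : ℝ) * δ ≤ (L l * Real.sqrt (h t) + 1) * (1 / (h t * L l)) := step1
        _ = L l * Real.sqrt (h t) * (1 / (h t * L l)) + 1 / (h t * L l) := by ring
        _ ≤ 1 / Real.sqrt (h t) + 1 / (h t * L 0) := by rw [step2]; linarith
    have t2 : (1 - 1 / L l) ^ N ≤ Real.exp (-Real.sqrt (h t)) := by
      have e1 : 1 - 1 / L l ≤ Real.exp (-(1 / L l)) := by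
        have := Real.add_one_le_exp (-(1 / L l))
        linarith
      have e2 : (1 - 1 / L l) ^ N ≤ Real.exp (-(1 / L l)) ^ N :=
        pow_le_pow_left₀ (by linarith) e1 N
      have e3 : Real.exp (-(1 / L l)) ^ N = Real.exp ((N : ℝ) * (-(1 / L l))) :=
        (Real.exp_nat_mul _ N).symm
      have e4 : (N : ℝ) * (-(1 / L l)) ≤ -Real.sqrt (h t) := by
        have h6 : Real.sqrt (h t) = (L l * Real.sqrt (h t)) * (1 / L l) := by
          field_simp
        have h5 : Real.sqrt (h t) ≤ (N : ℝ) * (1 / L l) := by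
          rw [h6]
          exact mul_le_mul_of_nonneg_right hN1 (by positivity)
        linarith
      calc (1 - 1 / L l) ^ N ≤ Real.exp (-(1 / L l)) ^ N := e2
        _ = Real.exp ((N : ℝ) * (-(1 / L l))) := e3
        _ ≤ Real.exp (-Real.sqrt (h t)) := Real.exp_le_exp.mpr e4
    have hreal : (N : ℝ) * δ + (1 - 1 / L l) ^ N ≤ b t := by
      rw [hbdef]
      dsimp only
      linarith
    have hfin : (P Eᶜ).toReal ≤ b t := by
      have h1 : P Eᶜ ≤ ENNReal.ofReal (b t) :=
        le_trans hcompl (ENNReal.ofReal_le_ofReal hreal)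
      refine ENNReal.toReal_le_of_le_ofReal ?_ h1
      exact le_trans (add_nonneg (mul_nonneg (Nat.cast_nonneg N) hδ0)
        (pow_nonneg (by linarith) N)) hreal
    have h2' : (P Eᶜ).toReal = 1 - (P E).toReal := by
      rw [prob_compl_eq_one_sub hEms,
        ENNReal.toReal_sub_of_le prob_le_one ENNReal.one_ne_top, ENNReal.toReal_one]
    linarith
  have hub : ∀ᶠ t in atTop,
      (P {ω | t * (h t) ^ 2 / r t < Y (n (ℓ t) ω) ω}).toReal ≤ 1 :=
    Filter.Eventually.of_forall fun t => by
      simpa using ENNReal.toReal_mono ENNReal.one_ne_top prob_le_one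
  have hlow : Tendsto (fun t => 1 - b t) atTop (nhds 1) := by
    simpa using tendsto_const_nhds.sub hb0
  exact tendsto_of_tendsto_of_tendsto_of_le_of_le' hlow tendsto_const_nhds key hub
end

section
/- As t → ∞, P( s̄^{h_t}_{ℓ_t} < ℓ_t / h_t³ ) → 1; i.e. the sum of the terms Y_n with indices n satisfying 1 ≤ |n − n_{ℓ_t}| < L(ℓ_t)/h_t is with overwhelming probability smaller than ℓ_t/h_t³. -/
open scoped Classical
open MeasureTheory Filter ProbabilityTheory
open scoped ENNReal


private lemma geom_aux (N : ℕ) : ∑ j ∈ Finset.range N, ((2:ℝ)/3) ^ j ≤ 3 := by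
  have hp : (0:ℝ) ≤ (2/3) ^ N := by positivity
  rw [geom_sum_eq (by norm_num : (2:ℝ)/3 ≠ 1),
    div_le_iff_of_neg (by norm_num : (2:ℝ)/3 - 1 < 0)]
  nlinarith

private lemma ofReal_sum_le {α : Type*} (s : Finset α) (f : α → ℝ) :
    ENNReal.ofReal (∑ i ∈ s, f i) ≤ ∑ i ∈ s, ENNReal.ofReal (f i) := by
  classical
  induction s using Finset.induction_on with
  | empty => simp
  | insert _ _ hx ih =>
    rw [Finset.sum_insert hx, Finset.sum_insert hx]
    exact le_trans (ENNReal.ofReal_add_le) (by gcongr)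

private lemma dyadic_pointwise {X c y : ℝ} (hX : 1 ≤ X) (hc : 2 * X ≤ c) :
    ENNReal.ofReal (min y c) ≤ ENNReal.ofReal (2 * X) +
      ∑ j ∈ Finset.range (Nat.log 2 ⌊c / (2 * X)⌋₊ + 1),
        (if c / 2 ^ (j + 1) < y then ENNReal.ofReal (c / 2 ^ j) else 0) := by
  set J := Nat.log 2 ⌊c / (2 * X)⌋₊ with hJ
  have hX0 : 0 < X := lt_of_lt_of_le one_pos hX
  have hc0 : 0 < c := lt_of_lt_of_le (by linarith) hc
  by_cases hcase : min y c ≤ 2 * X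
  · exact le_trans (ENNReal.ofReal_le_ofReal hcase) le_self_add
  · push_neg at hcase
    set V := min y c with hV
    have hVc : V ≤ c := min_le_right _ _
    have hVy : V ≤ y := min_le_left _ _
    have hV0 : 0 < V := lt_trans (by linarith) hcase
    set j := Nat.log 2 ⌊c / V⌋₊ with hj
    have hfl1 : (1:ℕ) ≤ ⌊c / V⌋₊ :=
      Nat.le_floor (by rw [Nat.cast_one]; exact (one_le_div hV0).2 hVc)
    have hlow : (2:ℝ) ^ j ≤ c / V := by
      calc ((2:ℝ))^j = ((2^j : ℕ) : ℝ) := by push_cast; ring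
      _ ≤ (⌊c / V⌋₊ : ℝ) := Nat.cast_le.2 (Nat.pow_log_le_self 2 (by omega))
      _ ≤ c / V := Nat.floor_le (by positivity)
    have hhigh : c / V < 2 ^ (j + 1) := by
      calc c / V < (⌊c / V⌋₊ : ℝ) + 1 := Nat.lt_floor_add_one _
      _ ≤ ((2 ^ (j+1) : ℕ) : ℝ) := by
          exact_mod_cast Nat.succ_le_of_lt (Nat.lt_pow_succ_log_self (by norm_num) _)
      _ = 2 ^ (j + 1) := by push_cast; ring
    have hVle : V ≤ c / 2 ^ j := by
      rw [le_div_iff₀ (by positivity)]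
      rw [le_div_iff₀ hV0] at hlow
      linarith [hlow]
    have hVgt : c / 2 ^ (j+1) < V := by
      rw [div_lt_iff₀ (by positivity)]
      rw [div_lt_iff₀ hV0] at hhigh
      linarith [hhigh]
    have hjJ : j < J + 1 := by
      have h1 : c / V < c / (2*X) := by
        apply div_lt_div_of_pos_left hc0 (by linarith) hcase
      have h2 : c / (2*X) < 2 ^ (J+1) := by
        calc c / (2*X) < (⌊c/(2*X)⌋₊ : ℝ) + 1 := Nat.lt_floor_add_one _
        _ ≤ ((2 ^ (J+1) : ℕ) : ℝ) := by
            exact_mod_cast Nat.succ_le_of_lt (Nat.lt_pow_succ_log_self (by norm_num) _)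
        _ = 2 ^ (J + 1) := by push_cast; ring
      have h3 : (2:ℝ)^j < (2:ℝ)^(J+1) := lt_of_le_of_lt hlow (lt_trans h1 h2)
      exact (pow_lt_pow_iff_right₀ (by norm_num : (1:ℝ) < 2)).1 h3
    calc ENNReal.ofReal V ≤ ENNReal.ofReal (c / 2 ^ j) := ENNReal.ofReal_le_ofReal hVle
    _ ≤ ∑ j' ∈ Finset.range (J + 1),
        (if c / 2 ^ (j' + 1) < y then ENNReal.ofReal (c / 2 ^ j') else 0) := by
        have hterm : (if c / 2 ^ (j + 1) < y then ENNReal.ofReal (c / 2 ^ j) else 0)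
            = ENNReal.ofReal (c / 2 ^ j) := if_pos (lt_of_lt_of_le hVgt hVy)
        rw [← hterm]
        exact Finset.single_le_sum
          (f := fun j' => if c / 2 ^ (j' + 1) < y then ENNReal.ofReal (c / 2 ^ j') else 0)
          (fun i _ => zero_le) (Finset.mem_range.2 hjJ)
    _ ≤ _ := le_add_self

private lemma trunc_exp_bound {Ω : Type*} [MeasurableSpace Ω] (P : Measure Ω)
    [IsProbabilityMeasure P] {L : ℝ → ℝ} {f : Ω → ℝ} (hf : Measurable f)
    (htail : ∀ x : ℝ, 0 ≤ x → P {ω | x < f ω} = ENNReal.ofReal (1 / L x))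
    (hLpos : ∀ x, 0 ≤ x → 0 < L x)
    {X : ℝ} (hX : 1 ≤ X) (hhalf : ∀ u, X ≤ u → 3 / 4 * L u ≤ L (u / 2))
    {c : ℝ} (hc : 2 * X ≤ c) :
    ∫⁻ ω, ENNReal.ofReal (min (f ω) c) ∂P ≤ ENNReal.ofReal (2 * X + 4 * c / L c) := by
  set J := Nat.log 2 ⌊c / (2 * X)⌋₊ with hJ
  have hX0 : 0 < X := lt_of_lt_of_le one_pos hX
  have hc0 : 0 < c := lt_of_lt_of_le (by linarith) hc
  have hLc0 : 0 < L c := hLpos c hc0.le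
  -- chain lemma
  have chain : ∀ m : ℕ, X ≤ c / 2 ^ m → (3/4:ℝ) ^ m * L c ≤ L (c / 2 ^ m) := by
    intro m
    induction m with
    | zero => intro _; simp
    | succ m ih =>
      intro hm
      have hstep : c / 2 ^ (m+1) ≤ c / 2 ^ m := by
        apply div_le_div_of_nonneg_left hc0.le (by positivity)
        exact pow_le_pow_right₀ (by norm_num) (Nat.le_succ m)
      have hm' : X ≤ c / 2 ^ m := le_trans hm hstep
      have h2 : 3 / 4 * L (c / 2 ^ m) ≤ L (c / 2 ^ m / 2) := hhalf _ hm'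
      have he : c / 2 ^ (m+1) = c / 2 ^ m / 2 := by ring
      rw [he]
      calc (3/4:ℝ) ^ (m+1) * L c = 3/4 * ((3/4) ^ m * L c) := by ring
      _ ≤ 3/4 * L (c / 2 ^ m) := by nlinarith [ih hm']
      _ ≤ L (c / 2 ^ m / 2) := h2
  -- X ≤ c / 2^(j+1) for j ≤ J
  have hXJ : ∀ j, j < J + 1 → X ≤ c / 2 ^ (j + 1) := by
    intro j hj
    have hfl1 : (1:ℕ) ≤ ⌊c / (2*X)⌋₊ :=
      Nat.le_floor (by rw [Nat.cast_one]; exact (one_le_div (by positivity)).2 hc)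
    have hlow : (2:ℝ) ^ J ≤ c / (2 * X) := by
      calc ((2:ℝ))^J = ((2^J : ℕ) : ℝ) := by push_cast; ring
      _ ≤ (⌊c / (2*X)⌋₊ : ℝ) := Nat.cast_le.2 (Nat.pow_log_le_self 2 (by omega))
      _ ≤ c / (2*X) := Nat.floor_le (by positivity)
    have h1 : X * 2 ^ (J + 1) ≤ c := by
      rw [le_div_iff₀ (by positivity)] at hlow
      calc X * 2 ^ (J+1) = 2 ^ J * (2 * X) := by ring
      _ ≤ c := hlow
    have h2 : (2:ℝ) ^ (j+1) ≤ 2 ^ (J+1) := pow_le_pow_right₀ (by norm_num) (by omega)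
    rw [le_div_iff₀ (by positivity)]
    nlinarith [h1, h2, hX0]
  -- pointwise bound
  have hmeas : ∀ j : ℕ, MeasurableSet {ω | c / 2 ^ (j+1) < f ω} :=
    fun j => measurableSet_lt measurable_const hf
  have key : ∀ ω, ENNReal.ofReal (min (f ω) c) ≤ ENNReal.ofReal (2 * X) +
      ∑ j ∈ Finset.range (J + 1),
        ({ω' | c / 2 ^ (j+1) < f ω'}).indicator
          (fun _ => ENNReal.ofReal (c / 2 ^ j)) ω := by
    intro ω
    refine le_trans (dyadic_pointwise hX hc (y := f ω)) ?_
    gcongr with j hj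
    rw [Set.indicator_apply]
    split_ifs with h1 h2
    · exact le_rfl
    · exact absurd h1 h2
    · exact (h1 ‹_›).elim
    · exact le_rfl
  calc ∫⁻ ω, ENNReal.ofReal (min (f ω) c) ∂P
      ≤ ∫⁻ ω, (ENNReal.ofReal (2 * X) +
        ∑ j ∈ Finset.range (J + 1),
          ({ω' | c / 2 ^ (j+1) < f ω'}).indicator
            (fun _ => ENNReal.ofReal (c / 2 ^ j)) ω) ∂P := lintegral_mono key
  _ = ENNReal.ofReal (2 * X) + ∑ j ∈ Finset.range (J + 1),
        ENNReal.ofReal (c / 2 ^ j) * P {ω | c / 2 ^ (j+1) < f ω} := by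
      rw [lintegral_add_left measurable_const, lintegral_const, measure_univ, mul_one,
        lintegral_finset_sum _
          (fun j _ => measurable_const.indicator (hmeas j))]
      congr 1
      exact Finset.sum_congr rfl fun j _ =>
        lintegral_indicator_const (hmeas j) _
  _ ≤ ENNReal.ofReal (2 * X) + ∑ j ∈ Finset.range (J + 1),
        ENNReal.ofReal (c / L c * (4/3) * (2/3) ^ j) := by
      gcongr with j hj
      have hj' := Finset.mem_range.1 hj
      have hXj := hXJ j hj'
      have haj : (0:ℝ) < c / 2 ^ (j+1) := by positivity
      rw [htail _ haj.le, ← ENNReal.ofReal_mul (by positivity)]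
      apply ENNReal.ofReal_le_ofReal
      have hchain := chain (j+1) hXj
      have hLaj : 0 < L (c / 2 ^ (j+1)) := hLpos _ haj.le
      have hd : 1 / L (c / 2 ^ (j+1)) ≤ (4/3:ℝ)^(j+1) / L c := by
        rw [div_le_div_iff₀ hLaj hLc0]
        calc 1 * L c = L c := one_mul _
        _ ≤ (4/3:ℝ)^(j+1) * ((3/4:ℝ)^(j+1) * L c) := by
            have : (4/3:ℝ)^(j+1) * (3/4:ℝ)^(j+1) = 1 := by
              rw [← mul_pow]; norm_num
            nlinarith [this, hLc0]
        _ ≤ (4/3:ℝ)^(j+1) * L (c / 2 ^ (j+1)) := by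
            have h43 : (0:ℝ) ≤ (4/3:ℝ)^(j+1) := by positivity
            nlinarith [hchain]
      calc c / 2 ^ j * (1 / L (c / 2 ^ (j+1))) ≤ c / 2 ^ j * ((4/3:ℝ)^(j+1) / L c) := by
            apply mul_le_mul_of_nonneg_left hd (by positivity)
      _ = c / L c * (4/3) * (2/3) ^ j := by
            have h1 : ((2:ℝ)/3)^j = ((4:ℝ)/3)^j / 2^j := by
              rw [← div_pow]; norm_num
            have h2 : (L c) ≠ 0 := hLc0.ne'
            have h3 : ((2:ℝ))^j ≠ 0 := by positivity
            rw [pow_succ, h1]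
            field_simp
  _ ≤ ENNReal.ofReal (2 * X) + ENNReal.ofReal (4 * c / L c) := by
      gcongr
      rw [← ENNReal.ofReal_sum_of_nonneg (fun j _ => by positivity)]
      apply ENNReal.ofReal_le_ofReal
      rw [← Finset.mul_sum]
      have hg := geom_aux (J + 1)
      have hb := mul_le_mul_of_nonneg_left hg
        (by positivity : (0:ℝ) ≤ c / L c * (4/3))
      have he : 4 * c / L c = c / L c * (4/3) * 3 := by ring
      rw [he]
      exact le_trans hb (le_of_eq rfl)
  _ = ENNReal.ofReal (2 * X + 4 * c / L c) := by
      rw [← ENNReal.ofReal_add (by positivity) (by positivity)]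

private lemma sv_poly {L : ℝ → ℝ} (hLpos : ∀ x, 0 ≤ x → 0 < L x)
    (hLmono : MonotoneOn L (Set.Ici 0))
    (hLsv : ∀ v > 0, Tendsto (fun u => L (u * v) / L u) atTop (nhds 1)) :
    ∃ C, 0 < C ∧ ∀ᶠ x in atTop, (L x) ^ 6 ≤ C * x := by
  have h1 : ∀ᶠ u in atTop, L (u * Real.exp 1) / L u < Real.exp 6⁻¹ :=
    (hLsv _ (Real.exp_pos 1)).eventually_lt_const
      (by rw [Real.one_lt_exp_iff]; norm_num)
  obtain ⟨U₀, hU₀⟩ := eventually_atTop.1 (h1.and (eventually_ge_atTop 1))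
  set U := max U₀ 1 with hU
  have hU1 : (1:ℝ) ≤ U := le_max_right _ _
  have hU0 : (0:ℝ) < U := lt_of_lt_of_le one_pos hU1
  have hstep : ∀ u, U ≤ u → L (u * Real.exp 1) ≤ Real.exp 6⁻¹ * L u := by
    intro u hu
    have h := hU₀ u (le_trans (le_max_left _ _) hu)
    have hLu : 0 < L u := hLpos u (by linarith [le_trans hU1 hu])
    rw [div_lt_iff₀ hLu] at h
    linarith [h.1]
  have hind : ∀ k : ℕ, L (U * Real.exp k) ≤ Real.exp 6⁻¹ ^ k * L U := by
    intro k
    induction k with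
    | zero => simp
    | succ k ih =>
      have he : U * Real.exp (k+1) = (U * Real.exp k) * Real.exp 1 := by
        rw [mul_assoc, ← Real.exp_add]
      have hUk : U ≤ U * Real.exp k := by
        nlinarith [Real.one_le_exp (by positivity : (0:ℝ) ≤ (k:ℝ))]
      have h2 := hstep _ hUk
      push_cast
      rw [he]
      calc L (U * Real.exp (k:ℝ) * Real.exp 1) ≤ Real.exp 6⁻¹ * L (U * Real.exp (k:ℝ)) := h2
      _ ≤ Real.exp 6⁻¹ * (Real.exp 6⁻¹ ^ k * L U) := by
          nlinarith [ih, Real.exp_pos (6⁻¹:ℝ)]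
      _ = Real.exp 6⁻¹ ^ (k+1) * L U := by ring
  have hLU0' : 0 < L U := hLpos U hU0.le
  refine ⟨Real.exp 1 * (L U)^6 / U, by positivity, ?_⟩
  filter_upwards [eventually_ge_atTop U] with x hx
  have hx0 : 0 < x := lt_of_lt_of_le hU0 hx
  set k := ⌊Real.log (x / U)⌋₊ with hk
  have hxU1 : 1 ≤ x / U := (one_le_div hU0).2 hx
  have hlog0 : 0 ≤ Real.log (x / U) := Real.log_nonneg hxU1
  have hxeq : x / U = Real.exp (Real.log (x / U)) := (Real.exp_log (by linarith)).symm
  have hlow : Real.exp (k:ℝ) ≤ x / U := by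
    rw [hxeq]; exact Real.exp_le_exp.2 (Nat.floor_le hlog0)
  have hhigh : x ≤ U * Real.exp ((k:ℝ) + 1) := by
    have : x / U ≤ Real.exp ((k:ℝ)+1) := by
      rw [hxeq]; exact Real.exp_le_exp.2 (Nat.lt_floor_add_one _).le
    calc x = U * (x / U) := by field_simp
    _ ≤ U * Real.exp ((k:ℝ)+1) := by nlinarith [this]
  have hmono : L x ≤ L (U * Real.exp ((k:ℝ)+1)) := by
    apply hLmono (Set.mem_Ici.2 hx0.le) (Set.mem_Ici.2 (by positivity)) hhigh
  have hLx : L x ≤ Real.exp 6⁻¹ ^ (k+1) * L U := by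
    have := hind (k+1)
    push_cast at this
    exact le_trans hmono this
  have hLU0 : 0 < L U := hLpos U hU0.le
  have hLx0 : 0 < L x := hLpos x hx0.le
  have hp : (L x)^6 ≤ (Real.exp 6⁻¹ ^ (k+1) * L U)^6 := by
    apply pow_le_pow_left₀ hLx0.le hLx
  have hee : (Real.exp 6⁻¹ ^ (k+1) * L U)^6 = Real.exp ((k:ℝ)+1) * (L U)^6 := by
    rw [mul_pow, ← pow_mul, ← Real.exp_nat_mul]
    have h66 : Real.exp ((k+1) * 6 * 6⁻¹) = Real.exp ((k:ℝ)+1) := by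
      congr 1; push_cast; ring
    rw [← h66]
    congr 1
    push_cast; ring
  have hfin : Real.exp ((k:ℝ)+1) ≤ Real.exp 1 * (x / U) := by
    rw [Real.exp_add]
    nlinarith [hlow, Real.exp_pos (1:ℝ)]
  calc (L x)^6 ≤ Real.exp ((k:ℝ)+1) * (L U)^6 := by rw [← hee]; exact hp
  _ ≤ Real.exp 1 * (x / U) * (L U)^6 := by nlinarith [hfin, pow_pos hLU0 6]
  _ = Real.exp 1 * (L U)^6 / U * x := by field_simp

set_option maxHeartbeats 2000000 in
private lemma key_bound {Ω : Type*} [MeasurableSpace Ω] (P : Measure Ω)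
    [IsProbabilityMeasure P]
    {L : ℝ → ℝ} {Y : ℕ → Ω → ℝ}
    (hLpos : ∀ x, 0 ≤ x → 0 < L x)
    (hYmeas : ∀ i, Measurable (Y i))
    (hYindep : iIndepFun Y P)
    (hYtail : ∀ i, ∀ x : ℝ, 0 ≤ x → P {ω | x < Y i ω} = ENNReal.ofReal (1 / L x))
    {X : ℝ} (hX : 1 ≤ X) (hhalf : ∀ u, X ≤ u → 3 / 4 * L u ≤ L (u / 2))
    {C : ℝ} (hC : 0 < C)
    {nl : Ω → ℕ} {l ht : ℝ}
    (hnl : ∀ᵐ ω ∂P, IsLeast {k : ℕ | 1 ≤ k ∧ l < Y k ω} (nl ω))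
    (hht : 4 ≤ ht) (hl1 : 1 ≤ l) (hLl2 : 2 ≤ L l) (hh2 : ht ^ 2 ≤ L l)
    (hLc : L l * (1 - 1 / ht) < L (l / ht ^ 3))
    (hcX : 2 * X ≤ l / ht ^ 3)
    (hpoly : L l ^ 6 ≤ C * l) :
    (P {ω | l / ht ^ 3 ≤ ∑ i ∈ (Finset.range (nl ω + ⌈L l / ht⌉₊ + 1)).filter
        (fun i => 1 ≤ i ∧ i ≠ nl ω ∧ |(i : ℝ) - (nl ω : ℝ)| < L l / ht), Y i ω}).toReal ≤
      Real.exp (-Real.sqrt ht) + 80 / Real.sqrt ht +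
        16 * X * Real.sqrt C / Real.sqrt l := by
  have hht0 : (0:ℝ) < ht := by linarith
  have hl0 : (0:ℝ) < l := by linarith
  set Lv := L l with hLv
  have hLv0 : (0:ℝ) < Lv := hLpos l hl0.le
  set c := l / ht ^ 3 with hc
  have hc0 : (0:ℝ) < c := by positivity
  have hLc0 : (0:ℝ) < L c := hLpos c hc0.le
  set w := Real.sqrt ht with hw
  have hw0 : (0:ℝ) < w := Real.sqrt_pos.2 hht0
  have hw2 : (2:ℝ) ≤ w := by
    rw [hw, show (2:ℝ) = Real.sqrt 4 by
      rw [show (4:ℝ) = 2^2 by norm_num, Real.sqrt_sq (by norm_num)]]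
    exact Real.sqrt_le_sqrt hht
  have hwht : w ≤ ht := by
    have h1 : Real.sqrt ht ≤ Real.sqrt (ht^2) := Real.sqrt_le_sqrt (by nlinarith)
    rwa [Real.sqrt_sq hht0.le] at h1
  have hww : w * w = ht := Real.mul_self_sqrt hht0.le
  set M := ⌈Lv / ht⌉₊ with hM
  set K := ⌈Lv * w⌉₊ with hK
  set W : ℕ → Finset ℕ := fun k => (Finset.range (k + M + 1)).filter
      (fun i => 1 ≤ i ∧ i ≠ k ∧ |(i : ℝ) - (k : ℝ)| < Lv / ht) with hW
  -- the good a.s. set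
  set G : Set Ω := {ω | IsLeast {k : ℕ | 1 ≤ k ∧ l < Y k ω} (nl ω)} with hG
  have hGnull : P Gᶜ = 0 := by
    have := ae_iff.1 hnl
    simpa [hG, Set.compl_setOf] using this
  -- the per-k bad events
  set B : ℕ → Set Ω := fun k =>
    {ω | (∃ i ∈ W k, c < Y i ω) ∨ c ≤ ∑ i ∈ W k, min (Y i ω) c} with hB
  set A1 : Set Ω := ⋂ k ∈ Finset.Icc 1 K, Y k ⁻¹' Set.Iic l with hA1
  -- inclusion
  have hsub : {ω | c ≤ ∑ i ∈ W (nl ω), Y i ω} ⊆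
      Gᶜ ∪ (A1 ∪ ⋃ k ∈ Finset.Icc 1 K, ({ω | l < Y k ω} ∩ B k)) := by
    intro ω hω
    by_cases hωG : ω ∈ G
    · right
      rcases le_or_gt (nl ω) K with hnK | hnK
      · right
        refine Set.mem_biUnion (Finset.mem_Icc.2 ⟨hωG.1.1, hnK⟩) ?_
        refine ⟨hωG.1.2, ?_⟩
        by_cases hex : ∃ i ∈ W (nl ω), c < Y i ω
        · exact Or.inl hex
        · push_neg at hex
          right
          have : ∑ i ∈ W (nl ω), min (Y i ω) c = ∑ i ∈ W (nl ω), Y i ω :=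
            Finset.sum_congr rfl fun i hi => min_eq_left (hex i hi)
          rw [this]
          exact hω
      · left
        rw [hA1]
        refine Set.mem_iInter₂.2 fun k hk => ?_
        rw [Set.mem_preimage, Set.mem_Iic]
        by_contra hcon
        push_neg at hcon
        have hkmem := Finset.mem_Icc.1 hk
        exact absurd (hωG.2 ⟨hkmem.1, hcon⟩) (by omega)
    · exact Or.inl hωG
  -- measure bound from inclusion
  have hPbound : P {ω | c ≤ ∑ i ∈ W (nl ω), Y i ω} ≤
      P A1 + ∑ k ∈ Finset.Icc 1 K, P ({ω | l < Y k ω} ∩ B k) := by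
    calc P {ω | c ≤ ∑ i ∈ W (nl ω), Y i ω}
        ≤ P (Gᶜ ∪ (A1 ∪ ⋃ k ∈ Finset.Icc 1 K, ({ω | l < Y k ω} ∩ B k))) :=
          measure_mono hsub
    _ ≤ P Gᶜ + P (A1 ∪ ⋃ k ∈ Finset.Icc 1 K, ({ω | l < Y k ω} ∩ B k)) :=
          measure_union_le _ _
    _ ≤ 0 + (P A1 + P (⋃ k ∈ Finset.Icc 1 K, ({ω | l < Y k ω} ∩ B k))) := by
          rw [hGnull]
          exact add_le_add le_rfl (measure_union_le _ _)
    _ ≤ P A1 + ∑ k ∈ Finset.Icc 1 K, P ({ω | l < Y k ω} ∩ B k) := by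
          rw [zero_add]
          exact add_le_add le_rfl (measure_biUnion_finset_le _ _)
  -- simple numeric facts
  have hM1 : 1 ≤ M := Nat.ceil_pos.2 (by positivity)
  have hMle : (M:ℝ) ≤ 2 * (Lv / ht) := by
    have h1 : (M:ℝ) < Lv/ht + 1 := Nat.ceil_lt_add_one (by positivity)
    have h2 : (1:ℝ) ≤ Lv/ht := by
      rw [le_div_iff₀ hht0]; nlinarith
    linarith
  have hKle : (K:ℝ) ≤ 2 * (Lv * w) := by
    have h1 : (K:ℝ) < Lv*w + 1 := Nat.ceil_lt_add_one (by positivity)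
    have h2 : (1:ℝ) ≤ Lv*w := by nlinarith
    linarith
  have hKge : Lv * w ≤ (K:ℝ) := Nat.le_ceil _
  have hknotW : ∀ k, k ∉ W k := by
    intro k
    simp [hW, Finset.mem_filter]
  have hcard : ∀ k, ((W k).card) ≤ 2 * M := by
    intro k
    have hsubW : W k ⊆ Finset.Ico (k + 1 - M) (k + M) := by
      intro i hi
      rw [hW] at hi
      simp only [Finset.mem_filter, Finset.mem_range] at hi
      obtain ⟨hr, h1, hne, habs⟩ := hi
      have hMr : Lv / ht ≤ (M:ℝ) := Nat.le_ceil _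
      rw [abs_lt] at habs
      have hik : (i:ℝ) < (k:ℝ) + (M:ℝ) := by linarith
      have hki : (k:ℝ) < (i:ℝ) + (M:ℝ) := by linarith
      have h1' : i < k + M := by exact_mod_cast (by push_cast; linarith : (i:ℝ) < ((k + M : ℕ) : ℝ))
      have h2' : k < i + M := by exact_mod_cast (by push_cast; linarith : (k:ℝ) < ((i + M : ℕ) : ℝ))
      rw [Finset.mem_Ico]
      omega
    calc (W k).card ≤ (Finset.Ico (k + 1 - M) (k + M)).card := Finset.card_le_card hsubW
    _ = (k + M) - (k + 1 - M) := Nat.card_Ico _ _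
    _ ≤ 2 * M := by omega
  -- product bound for A1
  have hprod : P A1 = (1 - ENNReal.ofReal (1/Lv)) ^ K := by
    rw [hA1, hYindep.measure_inter_preimage_eq_mul (Finset.Icc 1 K)
      (sets := fun _ => Set.Iic l) (fun i _ => measurableSet_Iic)]
    have heach : ∀ k, P (Y k ⁻¹' Set.Iic l) = 1 - ENNReal.ofReal (1/Lv) := by
      intro k
      have hcompl : Y k ⁻¹' Set.Iic l = {ω | l < Y k ω}ᶜ := by
        ext ω; simp [not_lt]
      rw [hcompl, prob_compl_eq_one_sub (measurableSet_lt measurable_const (hYmeas k)),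
        hYtail k l (by linarith)]
    rw [Finset.prod_congr rfl (fun k _ => heach k), Finset.prod_const, Nat.card_Icc]
    norm_num
  have h1Lv : 1/Lv ≤ 1 := by
    rw [div_le_one hLv0]; linarith
  have hprodle : P A1 ≤ ENNReal.ofReal (Real.exp (-w)) := by
    rw [hprod]
    have he1 : (1:ℝ≥0∞) - ENNReal.ofReal (1/Lv) = ENNReal.ofReal (1 - 1/Lv) := by
      have e : ENNReal.ofReal (1 - 1/Lv) = ENNReal.ofReal 1 - ENNReal.ofReal (1/Lv) :=
        ENNReal.ofReal_sub _ (by positivity)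
      rw [ENNReal.ofReal_one] at e
      exact e.symm
    rw [he1, ← ENNReal.ofReal_pow (by linarith)]
    apply ENNReal.ofReal_le_ofReal
    calc (1 - 1/Lv)^K ≤ (Real.exp (-(1/Lv)))^K := by
          apply pow_le_pow_left₀ (by linarith)
          linarith [Real.add_one_le_exp (-(1/Lv))]
    _ = Real.exp ((K:ℝ) * (-(1/Lv))) := by rw [Real.exp_nat_mul]
    _ ≤ Real.exp (-w) := by
        apply Real.exp_le_exp.2
        have hwK : w ≤ (K:ℝ)/Lv := by
          rw [le_div_iff₀ hLv0]; nlinarith [hKge]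
        have : (K:ℝ) * (-(1/Lv)) = -((K:ℝ)/Lv) := by ring
        rw [this]
        linarith
  -- per-k bound
  set D0 : ℝ := ((2*M : ℕ):ℝ) * (1/L c) + ((2*M : ℕ):ℝ) * ((2*X + 4*c/L c)/c) with hD0
  have hD0nn : 0 ≤ D0 := by positivity
  have hperk : ∀ k, P ({ω | l < Y k ω} ∩ B k) ≤ ENNReal.ofReal ((1/Lv) * D0) := by
    intro k
    have hdis : Disjoint ({k} : Finset ℕ) (W k) :=
      Finset.disjoint_singleton_left.2 (hknotW k)
    have hind := hYindep.indepFun_finset {k} (W k) hdis hYmeas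
    set S1 : Set (({k} : Finset ℕ) → ℝ) :=
      {y | l < y ⟨k, Finset.mem_singleton_self k⟩} with hS1d
    set S2 : Set ({x // x ∈ W k} → ℝ) :=
      {y | (∃ i, c < y i) ∨ c ≤ ∑ i, min (y i) c} with hS2d
    have hS1 : MeasurableSet S1 := measurable_pi_apply _ measurableSet_Ioi
    have hS2 : MeasurableSet S2 := by
      rw [hS2d, Set.setOf_or]
      apply MeasurableSet.union
      · rw [Set.setOf_exists]
        exact MeasurableSet.iUnion fun i => measurable_pi_apply i measurableSet_Ioi
      · exact (Finset.measurable_sum Finset.univ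
          (fun i _ => (measurable_pi_apply i).min measurable_const)) measurableSet_Ici
    have hpre1 : {ω | l < Y k ω} = (fun ω (i : ({k} : Finset ℕ)) => Y i ω) ⁻¹' S1 := rfl
    have hpre2 : B k = (fun ω (i : {x // x ∈ W k}) => Y (↑i) ω) ⁻¹' S2 := by
      ext ω
      simp only [hB, Set.mem_setOf_eq, Set.mem_preimage, hS2d]
      have e2 : (∑ i : {x // x ∈ W k}, min (Y (↑i) ω) c) = ∑ i ∈ W k, min (Y i ω) c :=
        Finset.sum_coe_sort (W k) (fun i => min (Y i ω) c)
      rw [e2]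
      have e1 : (∃ i ∈ W k, c < Y i ω) ↔ (∃ i : {x // x ∈ W k}, c < Y (↑i) ω) := by
        constructor
        · rintro ⟨i, hi, hlt⟩; exact ⟨⟨i, hi⟩, hlt⟩
        · rintro ⟨⟨i, hi⟩, hlt⟩; exact ⟨i, hi, hlt⟩
      exact or_congr e1 Iff.rfl
    have hmul : P ({ω | l < Y k ω} ∩ B k) = P {ω | l < Y k ω} * P (B k) := by
      rw [hpre1, hpre2]
      exact hind.measure_inter_preimage_eq_mul S1 S2 hS1 hS2
    have hPY : P {ω | l < Y k ω} = ENNReal.ofReal (1/Lv) := hYtail k l (by linarith)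
    -- bound P (B k)
    have hPB : P (B k) ≤ ENNReal.ofReal D0 := by
      have hBsub : B k ⊆ {ω | ∃ i ∈ W k, c < Y i ω} ∪
          {ω | c ≤ ∑ i ∈ W k, min (Y i ω) c} := by
        intro ω hω
        exact hω
      have hb1 : P {ω | ∃ i ∈ W k, c < Y i ω} ≤
          ((2*M : ℕ) : ℝ≥0∞) * ENNReal.ofReal (1/L c) := by
        have hu : {ω | ∃ i ∈ W k, c < Y i ω} = ⋃ i ∈ W k, {ω | c < Y i ω} := by
          ext ω; simp
        rw [hu]
        calc P (⋃ i ∈ W k, {ω | c < Y i ω}) ≤ ∑ i ∈ W k, P {ω | c < Y i ω} :=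
              measure_biUnion_finset_le _ _
        _ = ∑ _i ∈ W k, ENNReal.ofReal (1/L c) :=
              Finset.sum_congr rfl fun i _ => hYtail i c hc0.le
        _ = ((W k).card : ℝ≥0∞) * ENNReal.ofReal (1/L c) := by
              rw [Finset.sum_const, nsmul_eq_mul]
        _ ≤ ((2*M : ℕ) : ℝ≥0∞) * ENNReal.ofReal (1/L c) := by
              apply mul_le_mul_left
              exact_mod_cast hcard k
      have hb2 : P {ω | c ≤ ∑ i ∈ W k, min (Y i ω) c} ≤
          (((2*M : ℕ) : ℝ≥0∞) * ENNReal.ofReal (2*X + 4*c/L c)) / ENNReal.ofReal c := by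
        set g : Ω → ℝ≥0∞ := fun ω => ∑ i ∈ W k, ENNReal.ofReal (min (Y i ω) c) with hg
        have hgmeas : Measurable g :=
          Finset.measurable_sum _ (fun i _ => ((hYmeas i).min measurable_const).ennreal_ofReal)
        have hsubg : {ω | c ≤ ∑ i ∈ W k, min (Y i ω) c} ⊆
            {ω | ENNReal.ofReal c ≤ g ω} := by
          intro ω hω
          calc ENNReal.ofReal c ≤ ENNReal.ofReal (∑ i ∈ W k, min (Y i ω) c) :=
                ENNReal.ofReal_le_ofReal hω
          _ ≤ g ω := ofReal_sum_le _ _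
        calc P {ω | c ≤ ∑ i ∈ W k, min (Y i ω) c} ≤ P {ω | ENNReal.ofReal c ≤ g ω} :=
              measure_mono hsubg
        _ ≤ (∫⁻ ω, g ω ∂P) / ENNReal.ofReal c :=
              meas_ge_le_lintegral_div hgmeas.aemeasurable
                (by simp [ENNReal.ofReal_pos.2 hc0, (ENNReal.ofReal_pos.2 hc0).ne'])
                ENNReal.ofReal_ne_top
        _ ≤ (((2*M : ℕ) : ℝ≥0∞) * ENNReal.ofReal (2*X + 4*c/L c)) / ENNReal.ofReal c := by
              apply ENNReal.div_le_div_right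
              rw [hg, lintegral_finset_sum _
                (fun i _ => ((hYmeas i).min measurable_const).ennreal_ofReal)]
              calc ∑ i ∈ W k, ∫⁻ ω, ENNReal.ofReal (min (Y i ω) c) ∂P
                  ≤ ∑ _i ∈ W k, ENNReal.ofReal (2*X + 4*c/L c) := by
                    apply Finset.sum_le_sum
                    intro i _
                    exact trunc_exp_bound P (hYmeas i) (hYtail i) hLpos hX hhalf hcX
              _ = ((W k).card : ℝ≥0∞) * ENNReal.ofReal (2*X + 4*c/L c) := by
                    rw [Finset.sum_const, nsmul_eq_mul]
              _ ≤ ((2*M : ℕ) : ℝ≥0∞) * ENNReal.ofReal (2*X + 4*c/L c) := by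
                    apply mul_le_mul_left
                    exact_mod_cast hcard k
      calc P (B k) ≤ P ({ω | ∃ i ∈ W k, c < Y i ω} ∪
            {ω | c ≤ ∑ i ∈ W k, min (Y i ω) c}) := measure_mono hBsub
      _ ≤ P {ω | ∃ i ∈ W k, c < Y i ω} + P {ω | c ≤ ∑ i ∈ W k, min (Y i ω) c} :=
            measure_union_le _ _
      _ ≤ ((2*M : ℕ) : ℝ≥0∞) * ENNReal.ofReal (1/L c) +
            (((2*M : ℕ) : ℝ≥0∞) * ENNReal.ofReal (2*X + 4*c/L c)) / ENNReal.ofReal c :=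
            add_le_add hb1 hb2
      _ = ENNReal.ofReal D0 := by
            rw [hD0, ← ENNReal.ofReal_natCast (2*M),
              ← ENNReal.ofReal_mul (by positivity),
              ← ENNReal.ofReal_mul (by positivity),
              ← ENNReal.ofReal_div_of_pos hc0,
              ← ENNReal.ofReal_add (by positivity) (by positivity)]
            congr 1
            ring
    calc P ({ω | l < Y k ω} ∩ B k) = P {ω | l < Y k ω} * P (B k) := hmul
    _ ≤ ENNReal.ofReal (1/Lv) * ENNReal.ofReal D0 := by
          rw [hPY]
          exact mul_le_mul_right hPB _
    _ = ENNReal.ofReal ((1/Lv) * D0) := (ENNReal.ofReal_mul (by positivity)).symm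
  -- total bound
  have htotal : P {ω | c ≤ ∑ i ∈ W (nl ω), Y i ω} ≤
      ENNReal.ofReal (Real.exp (-w) + (K:ℝ) * ((1/Lv) * D0)) := by
    calc P {ω | c ≤ ∑ i ∈ W (nl ω), Y i ω}
        ≤ P A1 + ∑ k ∈ Finset.Icc 1 K, P ({ω | l < Y k ω} ∩ B k) := hPbound
    _ ≤ ENNReal.ofReal (Real.exp (-w)) +
          ∑ _k ∈ Finset.Icc 1 K, ENNReal.ofReal ((1/Lv) * D0) :=
        add_le_add hprodle (Finset.sum_le_sum fun k _ => hperk k)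
    _ = ENNReal.ofReal (Real.exp (-w)) + (K : ℝ≥0∞) * ENNReal.ofReal ((1/Lv) * D0) := by
        rw [Finset.sum_const, Nat.card_Icc, nsmul_eq_mul]
        norm_num
    _ = ENNReal.ofReal (Real.exp (-w) + (K:ℝ) * ((1/Lv) * D0)) := by
        rw [← ENNReal.ofReal_natCast K, ← ENNReal.ofReal_mul (by positivity),
          ← ENNReal.ofReal_add (by positivity) (by positivity)]
  have htoReal : (P {ω | c ≤ ∑ i ∈ W (nl ω), Y i ω}).toReal ≤
      Real.exp (-w) + (K:ℝ) * ((1/Lv) * D0) :=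
    ENNReal.toReal_le_of_le_ofReal (by positivity) htotal
  -- real arithmetic
  have hLchalf : Lv/2 ≤ L c := by
    have h4 : 1/ht ≤ 1/4 := by
      rw [div_le_div_iff₀ hht0 (by norm_num)]; linarith
    nlinarith [hLc, mul_le_mul_of_nonneg_left (by linarith : (3:ℝ)/4 ≤ 1 - 1/ht) hLv0.le]
  have hKD : (K:ℝ) * ((1/Lv) * D0) ≤ 80/w + 16*X*(Real.sqrt C/Real.sqrt l) := by
    have hm2 : ((2*M:ℕ):ℝ) ≤ 4*(Lv/ht) := by push_cast; linarith [hMle]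
    have h1Lc : 1/L c ≤ 2/Lv := by
      rw [div_le_div_iff₀ hLc0 hLv0]; linarith [hLchalf]
    have hinv : (1:ℝ)/c = ht^3/l := by rw [hc, one_div_div]
    have hsplit : (2*X + 4*c/L c)/c = 2*X*(ht^3/l) + 4/L c := by
      rw [← hinv]
      field_simp [hc0.ne', hLc0.ne']
    have hD0le : D0 ≤ (4*(Lv/ht)) * (10/Lv + 2*X*(ht^3/l)) := by
      calc D0 = ((2*M:ℕ):ℝ) * (5*(1/L c) + 2*X*(ht^3/l)) := by
            rw [hD0, hsplit]; ring
      _ ≤ (4*(Lv/ht)) * (5*(2/Lv) + 2*X*(ht^3/l)) := by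
            apply mul_le_mul hm2 (by linarith [h1Lc]) (by positivity) (by positivity)
      _ = (4*(Lv/ht)) * (10/Lv + 2*X*(ht^3/l)) := by ring
    have hKw : (K:ℝ)*(1/Lv) ≤ 2*w := by
      rw [mul_one_div, div_le_iff₀ hLv0]; nlinarith [hKle]
    calc (K:ℝ) * ((1/Lv) * D0) = ((K:ℝ)*(1/Lv)) * D0 := by ring
    _ ≤ (2*w) * ((4*(Lv/ht)) * (10/Lv + 2*X*(ht^3/l))) := by
        apply mul_le_mul hKw hD0le hD0nn (by positivity)
    _ = 80*(w/ht) + 16*X*(w*Lv*ht^2/l) := by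
        field_simp
        ring
    _ ≤ 80/w + 16*X*(Real.sqrt C/Real.sqrt l) := by
        have e1 : w/ht = 1/w := by
          rw [← hww]
          field_simp
        have h2 : w*Lv*ht^2/l ≤ Real.sqrt C/Real.sqrt l := by
          have hht3 : ht^3 ≤ Lv^2 := by nlinarith
          have hwl : w*Lv*ht^2 ≤ Lv^3 := by
            have q1 : w*(Lv*ht^2) ≤ ht*(Lv*ht^2) :=
              mul_le_mul_of_nonneg_right hwht (by positivity)
            have q2 : Lv*ht^3 ≤ Lv*Lv^2 := mul_le_mul_of_nonneg_left hht3 hLv0.le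
            nlinarith [q1, q2]
          have hl3 : Lv^3 ≤ Real.sqrt (C*l) := by
            rw [show Lv^3 = Real.sqrt ((Lv^3)^2) from (Real.sqrt_sq (by positivity)).symm]
            apply Real.sqrt_le_sqrt
            nlinarith [hpoly]
          have hsqrtCl : Real.sqrt (C*l) = Real.sqrt C * Real.sqrt l :=
            Real.sqrt_mul hC.le l
          have hsl0 : 0 < Real.sqrt l := Real.sqrt_pos.2 hl0
          rw [div_le_div_iff₀ hl0 hsl0]
          calc (w*Lv*ht^2) * Real.sqrt l ≤ Real.sqrt (C*l) * Real.sqrt l := by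
                nlinarith [hwl, hl3, hsl0]
          _ = Real.sqrt C * (Real.sqrt l * Real.sqrt l) := by rw [hsqrtCl]; ring
          _ = Real.sqrt C * l := by rw [Real.mul_self_sqrt hl0.le]
        rw [e1]
        have h3 := mul_le_mul_of_nonneg_left h2 (by positivity : (0:ℝ) ≤ 16*X)
        have e2 : (80:ℝ)*(1/w) = 80/w := by ring
        linarith [h3, e2.le]
  have final : (P {ω | c ≤ ∑ i ∈ W (nl ω), Y i ω}).toReal ≤
      Real.exp (-w) + 80/w + 16*X*Real.sqrt C/Real.sqrt l := by
    have e3 : 16*X*(Real.sqrt C/Real.sqrt l) = 16*X*Real.sqrt C/Real.sqrt l := by ring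
    linarith [htoReal, hKD, e3.le]
  exact final

/-- Proposition: bound on the partial sum around the first exceedance.
With `L` càdlàg, non-decreasing, unbounded and slowly varying, `ℓ t := min {s ≥ 0 : s·L s ≥ t}`,
`r t := L (ℓ t)`, `(Y_n)_{n ≥ 1}` i.i.d. strictly positive with `P(Y_1 > x) = 1/L x`,
`n_l := min {n ≥ 1 : Y_n > l}`, `s̄^h_l := ∑_{n ≥ 1, 1 ≤ |n - n_l| < L l / h} Y_n`,
and a scaling function `h` with `h_t → ∞`, `h_t² = o(r_t)` and eventually
`L(ℓ_t/h_t³) > L(ℓ_t)(1 - 1/h_t)` and `L(ℓ_t h_t³) < L(ℓ_t)(1 + 1/h_t)`, we have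
`P( s̄^{h_t}_{ℓ_t} < ℓ_t / h_t³ ) → 1` as `t → ∞`. -/
theorem partial_sum_around_first_exceedance_small
    {Ω : Type*} [MeasurableSpace Ω] (P : Measure Ω) [IsProbabilityMeasure P]
    (L : ℝ → ℝ)
    (hLpos : ∀ x, 0 ≤ x → 0 < L x)
    (hLmono : MonotoneOn L (Set.Ici 0))
    (hLcadlag : ∀ x ≥ 0, ContinuousWithinAt L (Set.Ici x) x)
    (hLunb : Tendsto L atTop atTop)
    (hLsv : ∀ v > 0, Tendsto (fun u => L (u * v) / L u) atTop (nhds 1))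
    (ℓ : ℝ → ℝ)
    (hℓ : ∀ t, IsLeast {s : ℝ | 0 ≤ s ∧ t ≤ s * L s} (ℓ t))
    (r : ℝ → ℝ) (hr : ∀ t, r t = L (ℓ t))
    (Y : ℕ → Ω → ℝ)
    (hYmeas : ∀ i, Measurable (Y i))
    (hYindep : iIndepFun Y P)
    (hYid : ∀ i, Measure.map (Y i) P = Measure.map (Y 1) P)
    (hYpos : ∀ i, ∀ᵐ ω ∂P, 0 < Y i ω)
    (hYtail : ∀ x : ℝ, 0 ≤ x → P {ω | x < Y 1 ω} = ENNReal.ofReal (1 / L x))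
    (n : ℝ → Ω → ℕ)
    (hnmeas : ∀ l, Measurable (n l))
    (hn : ∀ l, ∀ᵐ ω ∂P, IsLeast {k : ℕ | 1 ≤ k ∧ l < Y k ω} (n l ω))
    (h : ℝ → ℝ)
    (hhmono : Monotone h) (hhpos : ∀ t, 0 < h t)
    (hhtop : Tendsto h atTop atTop)
    (hho : (fun t => (h t) ^ 2) =o[atTop] r)
    (hhL : ∀ᶠ t in atTop,
      L (ℓ t) * (1 - 1 / h t) < L (ℓ t / (h t) ^ 3) ∧
      L (ℓ t * (h t) ^ 3) < L (ℓ t) * (1 + 1 / h t)) :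
    Tendsto
      (fun t =>
        (P {ω |
          ∑ i ∈ (Finset.range (n (ℓ t) ω + Nat.ceil (L (ℓ t) / h t) + 1)).filter
              (fun i => 1 ≤ i ∧ i ≠ n (ℓ t) ω ∧ |(i : ℝ) - (n (ℓ t) ω : ℝ)| < L (ℓ t) / h t),
            Y i ω < ℓ t / (h t) ^ 3}).toReal)
      atTop (nhds 1) := by
  have hℓ0 : ∀ t, 0 ≤ ℓ t := fun t => (hℓ t).1.1
  have hltop : Tendsto ℓ atTop atTop := by
    rw [tendsto_atTop_atTop]
    intro M
    refine ⟨(max M 1) * L (max M 1) + 1, fun t ht => ?_⟩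
    by_contra hcon
    push_neg at hcon
    have hM1 : (0:ℝ) < max M 1 := lt_of_lt_of_le one_pos (le_max_right _ _)
    have h1 : ℓ t ≤ max M 1 := le_trans hcon.le (le_max_left _ _)
    have h2 : L (ℓ t) ≤ L (max M 1) :=
      hLmono (Set.mem_Ici.2 (hℓ0 t)) (Set.mem_Ici.2 hM1.le) h1
    have h3 : t ≤ ℓ t * L (ℓ t) := (hℓ t).1.2
    have h4 : 0 < L (ℓ t) := hLpos _ (hℓ0 t)
    have h5 : ℓ t * L (ℓ t) ≤ (max M 1) * L (max M 1) :=
      mul_le_mul h1 h2 h4.le hM1.le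
    linarith
  have hrtop : Tendsto (fun t => L (ℓ t)) atTop atTop := hLunb.comp hltop
  have htaili : ∀ i, ∀ x : ℝ, 0 ≤ x → P {ω | x < Y i ω} = ENNReal.ofReal (1 / L x) := by
    intro i x hx
    have h1 : {ω | x < Y i ω} = Y i ⁻¹' Set.Ioi x := rfl
    rw [h1, ← Measure.map_apply (hYmeas i) measurableSet_Ioi, hYid i,
      Measure.map_apply (hYmeas 1) measurableSet_Ioi]
    exact hYtail x hx
  -- half property
  have hhalfev : ∀ᶠ u in atTop, 3/4 < L (u * (1/2)) / L u :=
    (hLsv (1/2) (by norm_num)).eventually_const_lt (by norm_num)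
  obtain ⟨X₀, hX₀⟩ := eventually_atTop.1 hhalfev
  set X := max X₀ 1 with hXdef
  have hX1 : (1:ℝ) ≤ X := le_max_right _ _
  have hhalf : ∀ u, X ≤ u → 3/4 * L u ≤ L (u/2) := by
    intro u hu
    have hh := hX₀ u (le_trans (le_max_left _ _) hu)
    have hu1 : (1:ℝ) ≤ u := le_trans hX1 hu
    have hLu : 0 < L u := hLpos u (by linarith)
    have he : u * (1/2) = u/2 := by ring
    rw [he, lt_div_iff₀ hLu] at hh
    linarith
  obtain ⟨C, hC0, hpolyev⟩ := sv_poly hLpos hLmono hLsv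
  have hsC : 0 < Real.sqrt C := Real.sqrt_pos.2 hC0
  have hsqrt : Tendsto Real.sqrt atTop atTop := by
    rw [tendsto_atTop_atTop]
    intro b
    refine ⟨(max b 0)^2, fun a ha => ?_⟩
    have h1 : Real.sqrt ((max b 0)^2) ≤ Real.sqrt a := Real.sqrt_le_sqrt ha
    rw [Real.sqrt_sq (le_max_right b 0)] at h1
    exact le_trans (le_max_left b 0) h1
  have hho' : ∀ᶠ t in atTop, h t ^ 2 ≤ L (ℓ t) := by
    have hb := hho.def one_pos
    filter_upwards [hb, hrtop.eventually_ge_atTop 0] with t h1 h2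
    rw [hr t] at h1
    have e1 : ‖h t ^ 2‖ = h t ^ 2 := by
      rw [Real.norm_eq_abs]; exact abs_of_nonneg (by positivity)
    have e2 : ‖L (ℓ t)‖ = L (ℓ t) := by
      rw [Real.norm_eq_abs]; exact abs_of_nonneg h2
    rw [e1, e2, one_mul] at h1
    exact h1
  -- eventual key bound
  have hbound : ∀ᶠ t in atTop,
      (P {ω | ℓ t / h t ^ 3 ≤
        ∑ i ∈ (Finset.range (n (ℓ t) ω + ⌈L (ℓ t) / h t⌉₊ + 1)).filter
          (fun i => 1 ≤ i ∧ i ≠ n (ℓ t) ω ∧ |(i : ℝ) - (n (ℓ t) ω : ℝ)| < L (ℓ t) / h t),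
          Y i ω}).toReal ≤
      Real.exp (-Real.sqrt (h t)) + 80 / Real.sqrt (h t) +
        16 * X * Real.sqrt C / Real.sqrt (ℓ t) := by
    filter_upwards [hhL, hhtop.eventually_ge_atTop 4, hltop.eventually_ge_atTop 1,
      hrtop.eventually_ge_atTop 2, hho', hltop.eventually hpolyev,
      hltop.eventually_ge_atTop ((2*X*Real.sqrt C)^2 + 1)] with t h1 h2 h3 h4 h5 h6 h7
    have hht0 : (0:ℝ) < h t := hhpos t
    have hl0 : (0:ℝ) < ℓ t := lt_of_lt_of_le one_pos h3
    have hLv0 : (0:ℝ) < L (ℓ t) := by linarith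
    have hsl0 : (0:ℝ) < Real.sqrt (ℓ t) := Real.sqrt_pos.2 hl0
    -- 2X ≤ c
    have hcX : 2*X ≤ ℓ t / h t ^ 3 := by
      have hh1 : (1:ℝ) ≤ h t := by linarith
      have hhL2 : h t ≤ L (ℓ t) := by nlinarith
      have hht3 : h t ^ 3 ≤ L (ℓ t) ^ 3 := by
        apply pow_le_pow_left₀ hht0.le hhL2
      have hLl3pos : (0:ℝ) < L (ℓ t) ^ 3 := by positivity
      have hc1 : ℓ t / L (ℓ t) ^ 3 ≤ ℓ t / h t ^ 3 :=
        div_le_div_of_nonneg_left hl0.le (by positivity) hht3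
      have hLl3 : L (ℓ t) ^ 3 ≤ Real.sqrt (C * ℓ t) := by
        rw [show L (ℓ t)^3 = Real.sqrt ((L (ℓ t)^3)^2) from
          (Real.sqrt_sq (by positivity)).symm]
        apply Real.sqrt_le_sqrt
        nlinarith [h6]
      have hsCl : Real.sqrt (C * ℓ t) = Real.sqrt C * Real.sqrt (ℓ t) :=
        Real.sqrt_mul hC0.le _
      have hc2 : Real.sqrt (ℓ t) / Real.sqrt C ≤ ℓ t / L (ℓ t) ^ 3 := by
        rw [div_le_div_iff₀ hsC hLl3pos]
        calc Real.sqrt (ℓ t) * L (ℓ t) ^ 3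
            ≤ Real.sqrt (ℓ t) * (Real.sqrt C * Real.sqrt (ℓ t)) := by
              rw [← hsCl]
              exact mul_le_mul_of_nonneg_left hLl3 hsl0.le
        _ = Real.sqrt C * (Real.sqrt (ℓ t) * Real.sqrt (ℓ t)) := by ring
        _ = ℓ t * Real.sqrt C := by rw [Real.mul_self_sqrt hl0.le]; ring
      have hc3 : 2*X ≤ Real.sqrt (ℓ t) / Real.sqrt C := by
        rw [le_div_iff₀ hsC]
        have hs1 : Real.sqrt ((2*X*Real.sqrt C)^2) ≤ Real.sqrt (ℓ t) :=
          Real.sqrt_le_sqrt (by linarith)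
        rw [Real.sqrt_sq (by positivity)] at hs1
        linarith
      linarith
    exact key_bound P hLpos hYmeas hYindep htaili hX1 hhalf hC0 (hn (ℓ t))
      h2 h3 h4 h5 h1.1 hcX h6
  -- limit of the bound
  have hBtend : Tendsto (fun t => Real.exp (-Real.sqrt (h t)) + 80 / Real.sqrt (h t) +
      16 * X * Real.sqrt C / Real.sqrt (ℓ t)) atTop (nhds 0) := by
    have hsh : Tendsto (fun t => Real.sqrt (h t)) atTop atTop := hsqrt.comp hhtop
    have hsl : Tendsto (fun t => Real.sqrt (ℓ t)) atTop atTop := hsqrt.comp hltop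
    have t1 : Tendsto (fun t => Real.exp (-Real.sqrt (h t))) atTop (nhds 0) :=
      Real.tendsto_exp_atBot.comp (tendsto_neg_atTop_atBot.comp hsh)
    have t2 : Tendsto (fun t => 80 / Real.sqrt (h t)) atTop (nhds 0) := by
      have := (tendsto_inv_atTop_zero.comp hsh).const_mul (80:ℝ)
      simpa [div_eq_mul_inv, Function.comp] using this
    have t3 : Tendsto (fun t => 16 * X * Real.sqrt C / Real.sqrt (ℓ t)) atTop (nhds 0) := by
      have := (tendsto_inv_atTop_zero.comp hsl).const_mul (16 * X * Real.sqrt C)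
      simpa [div_eq_mul_inv, Function.comp] using this
    have := (t1.add t2).add t3
    simpa using this
  have hPbad : Tendsto (fun t =>
      (P {ω | ℓ t / h t ^ 3 ≤
        ∑ i ∈ (Finset.range (n (ℓ t) ω + ⌈L (ℓ t) / h t⌉₊ + 1)).filter
          (fun i => 1 ≤ i ∧ i ≠ n (ℓ t) ω ∧ |(i : ℝ) - (n (ℓ t) ω : ℝ)| < L (ℓ t) / h t),
          Y i ω}).toReal) atTop (nhds 0) :=
    squeeze_zero' (Eventually.of_forall fun t => ENNReal.toReal_nonneg) hbound hBtend
  -- conclusion by squeezing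
  refine tendsto_of_tendsto_of_tendsto_of_le_of_le'
    (g := fun t => 1 - (P {ω | ℓ t / h t ^ 3 ≤
        ∑ i ∈ (Finset.range (n (ℓ t) ω + ⌈L (ℓ t) / h t⌉₊ + 1)).filter
          (fun i => 1 ≤ i ∧ i ≠ n (ℓ t) ω ∧ |(i : ℝ) - (n (ℓ t) ω : ℝ)| < L (ℓ t) / h t),
          Y i ω}).toReal)
    (h := fun _ => (1:ℝ)) ?_ tendsto_const_nhds ?_ ?_
  · have := (tendsto_const_nhds (α := ℝ) (f := atTop) (x := (1:ℝ))).sub hPbad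
    simpa using this
  · refine Eventually.of_forall fun t => ?_
    have huniv : (1:ℝ≥0∞) ≤
        P {ω | ∑ i ∈ (Finset.range (n (ℓ t) ω + ⌈L (ℓ t) / h t⌉₊ + 1)).filter
            (fun i => 1 ≤ i ∧ i ≠ n (ℓ t) ω ∧ |(i : ℝ) - (n (ℓ t) ω : ℝ)| < L (ℓ t) / h t),
            Y i ω < ℓ t / h t ^ 3} +
        P {ω | ℓ t / h t ^ 3 ≤
          ∑ i ∈ (Finset.range (n (ℓ t) ω + ⌈L (ℓ t) / h t⌉₊ + 1)).filter
            (fun i => 1 ≤ i ∧ i ≠ n (ℓ t) ω ∧ |(i : ℝ) - (n (ℓ t) ω : ℝ)| < L (ℓ t) / h t),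
            Y i ω} := by
      rw [← measure_univ (μ := P)]
      refine le_trans (measure_mono ?_) (measure_union_le _ _)
      intro ω _
      rcases lt_or_ge (∑ i ∈ (Finset.range (n (ℓ t) ω + ⌈L (ℓ t) / h t⌉₊ + 1)).filter
          (fun i => 1 ≤ i ∧ i ≠ n (ℓ t) ω ∧ |(i : ℝ) - (n (ℓ t) ω : ℝ)| < L (ℓ t) / h t),
          Y i ω) (ℓ t / h t ^ 3) with hlt | hge
      · exact Or.inl hlt
      · exact Or.inr hge
    have h1 : (1:ℝ) ≤
        (P {ω | ∑ i ∈ (Finset.range (n (ℓ t) ω + ⌈L (ℓ t) / h t⌉₊ + 1)).filter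
            (fun i => 1 ≤ i ∧ i ≠ n (ℓ t) ω ∧ |(i : ℝ) - (n (ℓ t) ω : ℝ)| < L (ℓ t) / h t),
            Y i ω < ℓ t / h t ^ 3}).toReal +
        (P {ω | ℓ t / h t ^ 3 ≤
          ∑ i ∈ (Finset.range (n (ℓ t) ω + ⌈L (ℓ t) / h t⌉₊ + 1)).filter
            (fun i => 1 ≤ i ∧ i ≠ n (ℓ t) ω ∧ |(i : ℝ) - (n (ℓ t) ω : ℝ)| < L (ℓ t) / h t),
            Y i ω}).toReal := by
      calc (1:ℝ) = (1:ℝ≥0∞).toReal := by simp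
      _ ≤ _ := by
        rw [← ENNReal.toReal_add (measure_ne_top P _) (measure_ne_top P _)]
        exact ENNReal.toReal_mono
          (ENNReal.add_ne_top.2 ⟨measure_ne_top P _, measure_ne_top P _⟩) huniv
    linarith
  · refine Eventually.of_forall fun t => ?_
    calc (P _).toReal ≤ (1:ℝ≥0∞).toReal := ENNReal.toReal_mono ENNReal.one_ne_top prob_le_one
    _ = 1 := by simp
end

section
/- As t → ∞, P( m_t > t·h_t² / r_t ) → 1; i.e. the event ℬ^h_t := { m_t > t h_t²/r_t } holds with probability tending to one. -/
open MeasureTheory Filter ProbabilityTheory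

lemma meas_sel {Ω : Type*} [MeasurableSpace Ω] (σ : ℤ → Ω → ℝ)
    (hσmeas : ∀ z, Measurable (σ z)) (Z : Ω → ℤ) (hZ : Measurable Z) :
    Measurable (fun ω => σ (Z ω) ω) := by
  have hF : Measurable (fun p : Ω × ℤ => σ p.2 p.1) :=
    measurable_from_prod_countable_left (fun z => hσmeas z)
  exact hF.comp (measurable_id.prodMk hZ)

lemma frac_bound (u v H : ℝ) (hu : 0 < u) (hv : 0 < v) (hH : 1 ≤ H)
    (huv : u ≤ v) (hlt : v < u * (1 + 1/H)) : (1/u - 1/v) * u ≤ 1/H := by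
  have hH0 : (0:ℝ) < H := by linarith
  have key : (v - u) * H ≤ v := by
    have := mul_lt_mul_of_pos_right hlt hH0
    have hexp : u * (1 + 1/H) * H = u * H + u := by field_simp
    nlinarith [this, hexp]
  have expand : (1/u - 1/v) * u = (v - u) / v := by field_simp
  rw [expand, div_le_div_iff₀ hv hH0]
  linarith [key]

lemma geom_bound {Ω : Type*} [MeasurableSpace Ω] (P : Measure Ω) [IsProbabilityMeasure P]
    (σ : ℤ → Ω → ℝ) (hσmeas : ∀ z, Measurable (σ z))
    (hσindep : iIndepFun σ P)
    (hσid : ∀ z, Measure.map (σ z) P = Measure.map (σ 0) P)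
    (e : ℕ → ℤ) (he : Function.Injective e) (a b : ℝ) :
    P (⋃ k, ((⋂ j ∈ Finset.range k, σ (e j) ⁻¹' Set.Iic a) ∩ σ (e k) ⁻¹' Set.Ioc a b))
      ≤ P (σ 0 ⁻¹' Set.Ioc a b) * (1 - P (σ 0 ⁻¹' Set.Iic a))⁻¹ := by
  have hid' : ∀ z (S : Set ℝ), MeasurableSet S → P (σ z ⁻¹' S) = P (σ 0 ⁻¹' S) := by
    intro z S hS
    rw [← Measure.map_apply (hσmeas z) hS, hσid z, Measure.map_apply (hσmeas 0) hS]
  set q : ENNReal := P (σ 0 ⁻¹' Set.Iic a) with hq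
  set p : ENNReal := P (σ 0 ⁻¹' Set.Ioc a b) with hp
  have key : ∀ k : ℕ,
      P ((⋂ j ∈ Finset.range k, σ (e j) ⁻¹' Set.Iic a) ∩ σ (e k) ⁻¹' Set.Ioc a b)
        = q ^ k * p := by
    intro k
    classical
    set T : ℤ → Set ℝ := fun i => if i = e k then Set.Ioc a b else Set.Iic a with hT
    have hset : ((⋂ j ∈ Finset.range k, σ (e j) ⁻¹' Set.Iic a) ∩ σ (e k) ⁻¹' Set.Ioc a b)
        = ⋂ i ∈ (Finset.range (k+1)).image e, σ i ⁻¹' T i := by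
      ext ω
      simp only [Set.mem_inter_iff, Set.mem_iInter, Finset.mem_image, Finset.mem_range,
        Set.mem_preimage, hT]
      constructor
      · rintro ⟨h1, h2⟩ i ⟨j, hj, rfl⟩
        by_cases hjk : j = k
        · subst hjk; simp [h2]
        · have : e j ≠ e k := fun hh => hjk (he hh)
          simp only [this, if_false]
          exact h1 j (lt_of_le_of_ne (Nat.lt_succ_iff.mp hj) hjk)
      · intro H
        constructor
        · intro j hj
          have := H (e j) ⟨j, Nat.lt_succ_of_lt hj, rfl⟩
          have hne : e j ≠ e k := by intro hh; have := he hh; omega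
          simpa [hne] using this
        · have := H (e k) ⟨k, Nat.lt_succ_self k, rfl⟩
          simpa using this
    rw [hset, hσindep.meas_biInter (S := (Finset.range (k+1)).image e)
      (s := fun i => σ i ⁻¹' T i) ?_]
    · rw [Finset.prod_image (fun x _ y _ hxy => he hxy)]
      rw [Finset.prod_range_succ]
      have h1 : ∀ j ∈ Finset.range k, P (σ (e j) ⁻¹' T (e j)) = q := by
        intro j hj
        have hne : e j ≠ e k := by
          intro hh; have := he hh; have := Finset.mem_range.mp hj; omega
        rw [hT]; simp only [hne, if_false]
        exact hid' _ _ measurableSet_Iic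
      rw [Finset.prod_congr rfl h1, Finset.prod_const]
      have h2 : P (σ (e k) ⁻¹' T (e k)) = p := by
        rw [hT]; simp only [if_pos rfl]
        exact hid' _ _ measurableSet_Ioc
      rw [h2, Finset.card_range]
    · intro i _
      refine ⟨T i, ?_, rfl⟩
      by_cases hi : i = e k <;> simp [hT, hi, measurableSet_Ioc, measurableSet_Iic]
  calc P (⋃ k, ((⋂ j ∈ Finset.range k, σ (e j) ⁻¹' Set.Iic a) ∩ σ (e k) ⁻¹' Set.Ioc a b))
      ≤ ∑' k, P ((⋂ j ∈ Finset.range k, σ (e j) ⁻¹' Set.Iic a) ∩ σ (e k) ⁻¹' Set.Ioc a b) :=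
        measure_iUnion_le _
    _ = ∑' k : ℕ, q ^ k * p := by simp_rw [key]
    _ = (∑' k : ℕ, q ^ k) * p := ENNReal.tsum_mul_right
    _ = (1 - q)⁻¹ * p := by rw [ENNReal.tsum_geometric]
    _ = p * (1 - q)⁻¹ := mul_comm _ _

-- single ("one-sided") exceedance probability bound
lemma side_bound {Ω : Type*} [MeasurableSpace Ω] (P : Measure Ω) [IsProbabilityMeasure P]
    (L : ℝ → ℝ) (σ : ℤ → Ω → ℝ) (hσmeas : ∀ z, Measurable (σ z))
    (hσindep : iIndepFun σ P)
    (hσid : ∀ z, Measure.map (σ z) P = Measure.map (σ 0) P)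
    (hσtail : ∀ x : ℝ, 0 ≤ x → P {ω | x < σ 0 ω} = ENNReal.ofReal (1 / L x))
    (e : ℕ → ℤ) (he : Function.Injective e) (a b H : ℝ)
    (ha0 : 0 ≤ a) (hb0 : 0 ≤ b) (hab : a ≤ b)
    (hLa : 0 < L a) (hLb : 0 < L b) (hLab : L a ≤ L b)
    (hH : 1 ≤ H) (hlt : L b < L a * (1 + 1/H)) :
    P (⋃ k, ((⋂ j ∈ Finset.range k, σ (e j) ⁻¹' Set.Iic a) ∩ σ (e k) ⁻¹' Set.Ioc a b))
      ≤ ENNReal.ofReal (1 / H) := by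
  have hPa : P (σ 0 ⁻¹' Set.Ioi a) = ENNReal.ofReal (1 / L a) := by
    have : σ 0 ⁻¹' Set.Ioi a = {ω | a < σ 0 ω} := by ext ω; simp
    rw [this, hσtail a ha0]
  have hPb : P (σ 0 ⁻¹' Set.Ioi b) = ENNReal.ofReal (1 / L b) := by
    have : σ 0 ⁻¹' Set.Ioi b = {ω | b < σ 0 ω} := by ext ω; simp
    rw [this, hσtail b hb0]
  -- 1 - q
  have hcompl : σ 0 ⁻¹' Set.Iic a = (σ 0 ⁻¹' Set.Ioi a)ᶜ := by
    ext ω; simp [not_lt]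
  have hle1 : ENNReal.ofReal (1 / L a) ≤ 1 := by rw [← hPa]; exact prob_le_one
  have h1q : 1 - P (σ 0 ⁻¹' Set.Iic a) = ENNReal.ofReal (1 / L a) := by
    rw [hcompl, prob_compl_eq_one_sub ((hσmeas 0) measurableSet_Ioi), hPa]
    exact ENNReal.sub_sub_cancel ENNReal.one_ne_top hle1
  -- p
  have hdiff : σ 0 ⁻¹' Set.Ioc a b = σ 0 ⁻¹' Set.Ioi a \ σ 0 ⁻¹' Set.Ioi b := by
    ext ω; simp [Set.mem_Ioc, Set.mem_Ioi, not_lt, and_comm]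
  have hp : P (σ 0 ⁻¹' Set.Ioc a b) = ENNReal.ofReal (1 / L a - 1 / L b) := by
    rw [hdiff, measure_diff (Set.preimage_mono (Set.Ioi_subset_Ioi hab))
      (((hσmeas 0) measurableSet_Ioi).nullMeasurableSet) (measure_ne_top P _),
      hPa, hPb, ← ENNReal.ofReal_sub _ (by positivity)]
  have hfrac : (1 / L a - 1 / L b) * L a ≤ 1 / H :=
    frac_bound (L a) (L b) H hLa hLb hH hLab hlt
  calc P (⋃ k, ((⋂ j ∈ Finset.range k, σ (e j) ⁻¹' Set.Iic a) ∩ σ (e k) ⁻¹' Set.Ioc a b))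
      ≤ P (σ 0 ⁻¹' Set.Ioc a b) * (1 - P (σ 0 ⁻¹' Set.Iic a))⁻¹ :=
        geom_bound P σ hσmeas hσindep hσid e he a b
    _ = ENNReal.ofReal (1 / L a - 1 / L b) * ENNReal.ofReal (L a) := by
        rw [hp, h1q, ← ENNReal.ofReal_inv_of_pos (by positivity)]
        rw [one_div, inv_inv]
    _ = ENNReal.ofReal ((1 / L a - 1 / L b) * L a) := by
        rw [← ENNReal.ofReal_mul (by
          have := one_div_le_one_div_of_le hLa hLab
          linarith)]
    _ ≤ ENNReal.ofReal (1 / H) := ENNReal.ofReal_le_ofReal hfrac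

/-- Proposition: the event `ℬ^h_t` is overwhelmingly likely.
In the Bouchaud trap model landscape (`σ_z` i.i.d., `P(σ_0 > x) = 1/L x` with `L` càdlàg,
non-decreasing, unbounded and slowly varying), with `ℓ_t`, `r_t = L(ℓ_t)`,
`Z¹_t := min {z ≥ 1 : σ_z > ℓ_t}`, `Z²_t := max {z ≤ -1 : σ_z > ℓ_t}`,
`m_t := min(σ_{Z¹_t}, σ_{Z²_t})`, and a scaling function `h` as in the paper,
we have `P( m_t > t h_t² / r_t ) → 1` as `t → ∞`. -/
theorem btm_event_B_whp
    {Ω : Type*} [MeasurableSpace Ω] (P : Measure Ω) [IsProbabilityMeasure P]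
    (L : ℝ → ℝ)
    (hLpos : ∀ x, 0 ≤ x → 0 < L x)
    (hLmono : MonotoneOn L (Set.Ici 0))
    (hLcadlag : ∀ x ≥ 0, ContinuousWithinAt L (Set.Ici x) x)
    (hLunb : Tendsto L atTop atTop)
    (hLsv : ∀ v > 0, Tendsto (fun u => L (u * v) / L u) atTop (nhds 1))
    (ℓ : ℝ → ℝ)
    (hℓ : ∀ t, IsLeast {s : ℝ | 0 ≤ s ∧ t ≤ s * L s} (ℓ t))
    (r : ℝ → ℝ) (hr : ∀ t, r t = L (ℓ t))
    (σ : ℤ → Ω → ℝ)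
    (hσmeas : ∀ z, Measurable (σ z))
    (hσindep : iIndepFun σ P)
    (hσid : ∀ z, Measure.map (σ z) P = Measure.map (σ 0) P)
    (hσpos : ∀ z, ∀ᵐ ω ∂P, 0 < σ z ω)
    (hσtail : ∀ x : ℝ, 0 ≤ x → P {ω | x < σ 0 ω} = ENNReal.ofReal (1 / L x))
    (Z1 Z2 : ℝ → Ω → ℤ)
    (hZ1meas : ∀ t, Measurable (Z1 t)) (hZ2meas : ∀ t, Measurable (Z2 t))
    (hZ1 : ∀ t, ∀ᵐ ω ∂P, IsLeast {z : ℤ | 1 ≤ z ∧ ℓ t < σ z ω} (Z1 t ω))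
    (hZ2 : ∀ t, ∀ᵐ ω ∂P, IsGreatest {z : ℤ | z ≤ -1 ∧ ℓ t < σ z ω} (Z2 t ω))
    (h : ℝ → ℝ)
    (hhmono : Monotone h) (hhpos : ∀ t, 0 < h t)
    (hhtop : Tendsto h atTop atTop)
    (hho : (fun t => (h t) ^ 2) =o[atTop] r)
    (hhL : ∀ᶠ t in atTop,
      L (ℓ t) * (1 - 1 / h t) < L (ℓ t / (h t) ^ 3) ∧
      L (ℓ t * (h t) ^ 3) < L (ℓ t) * (1 + 1 / h t)) :
    Tendsto
      (fun t =>
        (P {ω | t * (h t) ^ 2 / r t < min (σ (Z1 t ω) ω) (σ (Z2 t ω) ω)}).toReal)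
      atTop (nhds 1) := by
  -- lower bound eventually
  have hEv : ∀ᶠ t in atTop, 1 - 2 / h t ≤
      (P {ω | t * (h t) ^ 2 / r t < min (σ (Z1 t ω) ω) (σ (Z2 t ω) ω)}).toReal := by
    filter_upwards [hhL, hhtop.eventually_ge_atTop 1] with t hL2 hh1
    set a : ℝ := ℓ t with ha
    have ha0 : 0 ≤ a := (hℓ t).1.1
    have hta : t ≤ a * L a := (hℓ t).1.2
    set b : ℝ := a * (h t) ^ 3 with hb
    have hh3 : 1 ≤ (h t) ^ 3 := by nlinarith [hh1, sq_nonneg (h t)]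
    have hb0 : 0 ≤ b := by positivity
    have hab : a ≤ b := le_mul_of_one_le_right ha0 hh3
    have hLa : 0 < L a := hLpos a ha0
    have hLb : 0 < L b := hLpos b hb0
    have hLab : L a ≤ L b := hLmono (Set.mem_Ici.mpr ha0) (Set.mem_Ici.mpr hb0) hab
    set c : ℝ := t * (h t) ^ 2 / r t with hc
    have hcb : c ≤ b := by
      rw [hc, hr t, ← ha, div_le_iff₀ hLa]
      have h2 : (0:ℝ) ≤ (h t) ^ 2 := sq_nonneg _
      have step1 : t * (h t) ^ 2 ≤ a * L a * (h t) ^ 2 :=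
        mul_le_mul_of_nonneg_right hta h2
      have hpw : (h t) ^ 2 ≤ (h t) ^ 3 := by nlinarith [hh1, sq_nonneg (h t)]
      have step2 : a * L a * (h t) ^ 2 ≤ b * L a := by
        rw [hb]
        calc a * L a * (h t) ^ 2 = a * (h t) ^ 2 * L a := by ring
          _ ≤ a * (h t) ^ 3 * L a :=
            mul_le_mul_of_nonneg_right (mul_le_mul_of_nonneg_left hpw ha0) hLa.le
      linarith
    set S : Set Ω := {ω | c < min (σ (Z1 t ω) ω) (σ (Z2 t ω) ω)} with hS
    have hm1 : Measurable (fun ω => σ (Z1 t ω) ω) := meas_sel σ hσmeas (Z1 t) (hZ1meas t)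
    have hm2 : Measurable (fun ω => σ (Z2 t ω) ω) := meas_sel σ hσmeas (Z2 t) (hZ2meas t)
    have hSmeas : MeasurableSet S := (hm1.min hm2) measurableSet_Ioi
    set e1 : ℕ → ℤ := fun j => 1 + (j : ℤ) with he1def
    set e2 : ℕ → ℤ := fun j => -(1 + (j : ℤ)) with he2def
    have he1 : Function.Injective e1 := by intro x y hxy; simp only [he1def] at hxy; omega
    have he2 : Function.Injective e2 := by intro x y hxy; simp only [he2def] at hxy; omega
    set A1 : Set Ω := ⋃ k, ((⋂ j ∈ Finset.range k, σ (e1 j) ⁻¹' Set.Iic a)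
      ∩ σ (e1 k) ⁻¹' Set.Ioc a b) with hA1def
    set A2 : Set Ω := ⋃ k, ((⋂ j ∈ Finset.range k, σ (e2 j) ⁻¹' Set.Iic a)
      ∩ σ (e2 k) ⁻¹' Set.Ioc a b) with hA2def
    have hsub : ∀ᵐ ω ∂P, ω ∈ Sᶜ → ω ∈ A1 ∪ A2 := by
      filter_upwards [hZ1 t, hZ2 t] with ω hω1 hω2 hmem
      have hmin : min (σ (Z1 t ω) ω) (σ (Z2 t ω) ω) ≤ c := not_lt.mp hmem
      rcases min_le_iff.mp hmin with hcase | hcase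
      · -- σ_{Z1} ≤ c
        left
        obtain ⟨⟨hz1, hz2⟩, hlb⟩ := hω1
        set k : ℕ := (Z1 t ω - 1).toNat with hk
        have hke : e1 k = Z1 t ω := by simp only [he1def, hk]; omega
        refine Set.mem_iUnion.mpr ⟨k, ⟨?_, ?_⟩⟩
        · refine Set.mem_iInter₂.mpr fun j hj => ?_
          have hjk : j < k := Finset.mem_range.mp hj
          by_contra hgt
          simp only [Set.mem_preimage, Set.mem_Iic, not_le] at hgt
          have hmem' : e1 j ∈ {z : ℤ | 1 ≤ z ∧ a < σ z ω} := ⟨by simp [he1def], hgt⟩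
          have := hlb hmem'
          simp only [he1def] at this
          omega
        · rw [hke]
          exact ⟨hz2, le_trans hcase hcb⟩
      · -- σ_{Z2} ≤ c
        right
        obtain ⟨⟨hz1, hz2⟩, hub⟩ := hω2
        set k : ℕ := (-(Z2 t ω) - 1).toNat with hk
        have hke : e2 k = Z2 t ω := by simp only [he2def, hk]; omega
        refine Set.mem_iUnion.mpr ⟨k, ⟨?_, ?_⟩⟩
        · refine Set.mem_iInter₂.mpr fun j hj => ?_
          have hjk : j < k := Finset.mem_range.mp hj
          by_contra hgt
          simp only [Set.mem_preimage, Set.mem_Iic, not_le] at hgt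
          have hmem' : e2 j ∈ {z : ℤ | z ≤ -1 ∧ a < σ z ω} := ⟨by simp only [he2def]; omega, hgt⟩
          have := hub hmem'
          simp only [he2def] at this
          omega
        · rw [hke]
          exact ⟨hz2, le_trans hcase hcb⟩
    have hH1 : (1:ℝ) ≤ h t := hh1
    have hA1 : P A1 ≤ ENNReal.ofReal (1 / h t) :=
      side_bound P L σ hσmeas hσindep hσid hσtail e1 he1 a b (h t)
        ha0 hb0 hab hLa hLb hLab hH1 hL2.2
    have hA2 : P A2 ≤ ENNReal.ofReal (1 / h t) :=
      side_bound P L σ hσmeas hσindep hσid hσtail e2 he2 a b (h t)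
        ha0 hb0 hab hLa hLb hLab hH1 hL2.2
    have hPSc : P Sᶜ ≤ ENNReal.ofReal (2 / h t) := by
      have hle : P Sᶜ ≤ P (A1 ∪ A2) := by
        apply measure_mono_ae
        exact hsub
      calc P Sᶜ ≤ P (A1 ∪ A2) := hle
        _ ≤ P A1 + P A2 := measure_union_le _ _
        _ ≤ ENNReal.ofReal (1 / h t) + ENNReal.ofReal (1 / h t) := add_le_add hA1 hA2
        _ = ENNReal.ofReal (2 / h t) := by
            rw [← ENNReal.ofReal_add (by positivity) (by positivity)]; ring_nf
    have hps : (P Sᶜ).toReal = 1 - (P S).toReal := by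
      rw [prob_compl_eq_one_sub hSmeas,
        ENNReal.toReal_sub_of_le prob_le_one ENNReal.one_ne_top, ENNReal.toReal_one]
    have hPScR : (P Sᶜ).toReal ≤ 2 / h t := by
      calc (P Sᶜ).toReal ≤ (ENNReal.ofReal (2 / h t)).toReal :=
            ENNReal.toReal_mono ENNReal.ofReal_ne_top hPSc
        _ = 2 / h t := ENNReal.toReal_ofReal (by positivity)
    linarith [hps ▸ hPScR]
  have hUB : ∀ t, (P {ω | t * (h t) ^ 2 / r t <
      min (σ (Z1 t ω) ω) (σ (Z2 t ω) ω)}).toReal ≤ 1 := by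
    intro t
    calc (P _).toReal ≤ (1 : ENNReal).toReal :=
          ENNReal.toReal_mono ENNReal.one_ne_top prob_le_one
      _ = 1 := ENNReal.toReal_one
  have hlim : Tendsto (fun t => 1 - 2 / h t) atTop (nhds 1) := by
    have h0 : Tendsto (fun t => 2 / h t) atTop (nhds 0) :=
      Tendsto.div_atTop tendsto_const_nhds hhtop
    simpa using tendsto_const_nhds.sub h0
  exact tendsto_of_tendsto_of_tendsto_of_le_of_le' hlim tendsto_const_nhds hEv
    (Eventually.of_forall hUB)
end

section
/- As t → ∞, P( S̄_t < ℓ_t / h_t ) → 1; i.e. the event 𝒞^h_t := { S̄_t < ℓ_t/h_t } holds with probability tending to one. -/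
open scoped Classical
open MeasureTheory Filter ProbabilityTheory

section Aux

variable {Ω : Type*} [MeasurableSpace Ω]

lemma aux_ofReal_sum_le (s : Finset ℤ) (f : ℤ → ℝ) :
    ENNReal.ofReal (∑ i ∈ s, f i) ≤ ∑ i ∈ s, ENNReal.ofReal (f i) := by
  classical
  induction s using Finset.induction with
  | empty => simp
  | insert _ _ hx ih =>
    rw [Finset.sum_insert hx, Finset.sum_insert hx]
    exact le_trans ENNReal.ofReal_add_le (add_le_add_right ih _)

lemma aux_extract (p lam X R : ENNReal) (hp : 1/2 ≤ p) (h0 : lam ≠ 0) (htop : lam ≠ ⊤)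
    (hineq : p * lam * X ≤ R) : X ≤ 2 * lam⁻¹ * R := by
  have h1 : (1/2) * lam * X ≤ R :=
    le_trans (mul_le_mul_left (mul_le_mul_left hp lam) X) hineq
  have h2 : 2 * lam⁻¹ * ((1/2) * lam * X) = X := by
    rw [show (2:ENNReal) * lam⁻¹ * ((1/2) * lam * X) = ((2 * (1/2)) * (lam⁻¹ * lam)) * X by ring,
      ENNReal.inv_mul_cancel h0 htop, one_div,
      ENNReal.mul_inv_cancel two_ne_zero ENNReal.ofNat_ne_top, one_mul, one_mul]
  calc X = 2 * lam⁻¹ * ((1/2) * lam * X) := h2.symm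
    _ ≤ 2 * lam⁻¹ * R := mul_le_mul_right h1 _


lemma indep_factor (P : Measure Ω) [IsProbabilityMeasure P]
    (σ : ℤ → Ω → ℝ) (hσmeas : ∀ z, Measurable (σ z))
    (hσindep : iIndepFun σ P)
    (hσid : ∀ z, Measure.map (σ z) P = Measure.map (σ 0) P)
    (m : ℝ) (S : Finset ℤ) (k : ℤ) (hkS : k ∈ S) (j : ℤ) (hjS : j ∉ S)
    (g : ℝ → ENNReal) (hg : Measurable g) :
    ∫⁻ ω, ({ω : Ω | m < σ k ω ∧ ∀ i ∈ S, i ≠ k → σ i ω ≤ m}.indicator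
        (fun _ => (1:ENNReal)) ω) * g (σ j ω) ∂P
      = P {ω | m < σ k ω ∧ ∀ i ∈ S, i ≠ k → σ i ω ≤ m} * ∫⁻ ω, g (σ 0 ω) ∂P := by
  classical
  set TA : Set ((i : S) → ℝ) :=
    {x | m < x ⟨k, hkS⟩ ∧ ∀ i : S, (i : ℤ) ≠ k → x i ≤ m} with hTAdef
  have hTA : MeasurableSet TA := by
    have : TA = {x : (i : S) → ℝ | m < x ⟨k, hkS⟩} ∩
        ⋂ i : S, {x : (i : S) → ℝ | (i : ℤ) ≠ k → x i ≤ m} := by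
      ext x; simp [hTAdef, Set.mem_iInter]
    rw [this]
    refine MeasurableSet.inter ?_ (MeasurableSet.iInter fun i => ?_)
    · exact measurableSet_lt measurable_const (measurable_pi_apply _)
    · by_cases hik : (i : ℤ) ≠ k
      · have hik' : {x : (i : S) → ℝ | (i : ℤ) ≠ k → x i ≤ m} = {x | x i ≤ m} := by
          ext x; simp [hik]
        rw [hik']
        exact measurableSet_le (measurable_pi_apply _) measurable_const
      · have hik' : {x : (i : S) → ℝ | (i : ℤ) ≠ k → x i ≤ m} = Set.univ := by
          ext x
          simp only [Set.mem_setOf_eq, Set.mem_univ, iff_true]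
          intro hc; exact absurd hc hik
        rw [hik']; exact MeasurableSet.univ
  set X : Ω → (i : S) → ℝ := fun ω i => σ i ω with hXdef
  have hXmeas : Measurable X := measurable_pi_lambda _ fun i => hσmeas i
  have hA_eq : {ω : Ω | m < σ k ω ∧ ∀ i ∈ S, i ≠ k → σ i ω ≤ m} = X ⁻¹' TA := by
    ext ω
    simp only [Set.mem_setOf_eq, Set.mem_preimage, hTAdef, hXdef, Subtype.forall]
  have hindep : IndepFun X (fun ω (i : ({j} : Finset ℤ)) => σ i ω) P :=
    hσindep.indepFun_finset S {j}
      (by simpa [Finset.disjoint_singleton_right] using hjS) hσmeas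
  set φ : ((i : S) → ℝ) → ENNReal := TA.indicator (fun _ => (1:ENNReal)) with hφdef
  set ψ : ((i : ({j} : Finset ℤ)) → ℝ) → ENNReal :=
    fun x => g (x ⟨j, Finset.mem_singleton_self j⟩) with hψdef
  have hφ : Measurable φ := measurable_const.indicator hTA
  have hψ : Measurable ψ := hg.comp (measurable_pi_apply _)
  have hIndep2 : IndepFun (φ ∘ X) (ψ ∘ (fun ω (i : ({j} : Finset ℤ)) => σ i ω)) P :=
    hindep.comp hφ hψ
  have hmul := lintegral_mul_eq_lintegral_mul_lintegral_of_indepFun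
    (hφ.comp hXmeas) (hψ.comp (measurable_pi_lambda _ fun i => hσmeas i)) hIndep2
  have h1 : ∀ ω, (φ ∘ X) ω = (X ⁻¹' TA).indicator (fun _ => (1:ENNReal)) ω := by
    intro ω
    by_cases hx : X ω ∈ TA <;> simp [hφdef, Set.indicator, hx]
  have h2 : ∫⁻ ω, (φ ∘ X) ω ∂P = P (X ⁻¹' TA) := by
    rw [lintegral_congr h1, lintegral_indicator (hXmeas hTA)]
    simp
  have h3 : ∫⁻ ω, (ψ ∘ (fun ω (i : ({j} : Finset ℤ)) => σ i ω)) ω ∂P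
      = ∫⁻ ω, g (σ 0 ω) ∂P := by
    have : ∀ ω, (ψ ∘ (fun ω (i : ({j} : Finset ℤ)) => σ i ω)) ω = g (σ j ω) := fun ω => rfl
    rw [lintegral_congr this,
      ← lintegral_map hg (hσmeas j), hσid j, lintegral_map hg (hσmeas 0)]
  calc ∫⁻ ω, ({ω : Ω | m < σ k ω ∧ ∀ i ∈ S, i ≠ k → σ i ω ≤ m}.indicator
        (fun _ => (1:ENNReal)) ω) * g (σ j ω) ∂P
      = ∫⁻ ω, ((φ ∘ X) * (ψ ∘ (fun ω (i : ({j} : Finset ℤ)) => σ i ω))) ω ∂P := by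
        apply lintegral_congr; intro ω
        rw [hA_eq]
        simp only [Pi.mul_apply]
        rw [h1 ω]
        rfl
    _ = P (X ⁻¹' TA) * ∫⁻ ω, g (σ 0 ω) ∂P := by rw [hmul, h2, h3]
    _ = _ := by rw [hA_eq]

lemma master_key (P : Measure Ω) [IsProbabilityMeasure P]
    (σ : ℤ → Ω → ℝ) (hσmeas : ∀ z, Measurable (σ z))
    (hσindep : iIndepFun σ P)
    (hσid : ∀ z, Measure.map (σ z) P = Measure.map (σ 0) P)
    (m : ℝ)
    (K : Set ℤ) (I : ℤ → Finset ℤ) (hI : ∀ k ∈ K, k ∉ I k)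
    (hdisj : ∀ k ∈ K, ∀ k' ∈ K, k ≠ k' → k ∈ I k' ∨ k' ∈ I k)
    (Z : Ω → ℤ)
    (hZK : ∀ᵐ ω ∂P, Z ω ∈ K)
    (hZE : ∀ k ∈ K, ∀ᵐ ω ∂P, Z ω = k → (m < σ k ω ∧ ∀ i ∈ I k, σ i ω ≤ m))
    (W : ℤ → Finset ℤ) (hWk : ∀ k ∈ K, k ∉ W k) (n : ℕ) (hWcard : ∀ k ∈ K, (W k).card ≤ n)
    (g : ℝ → ENNReal) (hg : Measurable g) (lam : ENNReal) :
    P {ω | σ 0 ω ≤ m} * lam * P {ω | lam ≤ ∑ z ∈ W (Z ω), g (σ z ω)}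
      ≤ n * ∫⁻ ω, g (σ 0 ω) ∂P := by
  classical
  set p := P {ω | σ 0 ω ≤ m} with hpdef
  set Eg := ∫⁻ ω, g (σ 0 ω) ∂P with hEgdef
  set E : ℤ → Set Ω := fun k => {ω | m < σ k ω ∧ ∀ i ∈ I k, σ i ω ≤ m} with hEdef
  have hEmeas : ∀ k, MeasurableSet (E k) := by
    intro k
    have : E k = {ω | m < σ k ω} ∩ ⋂ i ∈ I k, {ω | σ i ω ≤ m} := by
      ext ω; simp [hEdef, Set.mem_iInter]
    rw [this]
    exact (measurableSet_lt measurable_const (hσmeas k)).inter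
      (MeasurableSet.biInter ((I k).countable_toSet)
        fun i _ => measurableSet_le (hσmeas i) measurable_const)
  -- the crucial per-coordinate bound
  have hkey : ∀ k ∈ K, ∀ j ∈ W k,
      p * ∫⁻ ω in E k, g (σ j ω) ∂P ≤ P (E k) * Eg := by
    intro k hk j hj
    have hjk : j ≠ k := fun hjk => hWk k hk (hjk ▸ hj)
    have hconv : ∫⁻ ω in E k, g (σ j ω) ∂P
        = ∫⁻ ω, (E k).indicator (fun _ => (1:ENNReal)) ω * g (σ j ω) ∂P := by
      rw [← lintegral_indicator (hEmeas k)]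
      apply lintegral_congr; intro ω
      by_cases hω : ω ∈ E k <;> simp [Set.indicator, hω]
    by_cases hjI : j ∈ I k
    · set S : Finset ℤ := insert k ((I k).erase j) with hSdef
      have hkS : k ∈ S := Finset.mem_insert_self _ _
      have hjS : j ∉ S := by
        simp only [hSdef, Finset.mem_insert, Finset.mem_erase]
        push_neg
        exact ⟨hjk, fun hc => absurd rfl hc⟩
      set A : Set Ω := {ω | m < σ k ω ∧ ∀ i ∈ S, i ≠ k → σ i ω ≤ m} with hAdef
      have hEA : E k = A ∩ {ω | σ j ω ≤ m} := by
        ext ω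
        simp only [hEdef, hAdef, Set.mem_setOf_eq, Set.mem_inter_iff]
        constructor
        · rintro ⟨h1, h2⟩
          refine ⟨⟨h1, fun i hiS hik => ?_⟩, h2 j hjI⟩
          rcases Finset.mem_insert.mp hiS with hik' | hie
          · exact absurd hik' hik
          · exact h2 i (Finset.mem_of_mem_erase hie)
        · rintro ⟨⟨h1, h2⟩, h3⟩
          refine ⟨h1, fun i hiI => ?_⟩
          by_cases hij : i = j
          · exact hij ▸ h3
          · exact h2 i (Finset.mem_insert.mpr (Or.inr (Finset.mem_erase.mpr ⟨hij, hiI⟩)))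
              (fun hikk => hI k hk (hikk ▸ hiI))
      set g' : ℝ → ENNReal := fun x => if x ≤ m then g x else 0 with hg'def
      have hg' : Measurable g' :=
        Measurable.ite (measurableSet_le measurable_id measurable_const) hg measurable_const
      set g'' : ℝ → ENNReal := (Set.Iic m).indicator (fun _ => (1:ENNReal)) with hg''def
      have hg'' : Measurable g'' := measurable_const.indicator measurableSet_Iic
      have e1 := indep_factor P σ hσmeas hσindep hσid m S k hkS j hjS g' hg'
      have e2 := indep_factor P σ hσmeas hσindep hσid m S k hkS j hjS g'' hg''
      have eq1 : ∀ ω, (E k).indicator (fun _ => (1:ENNReal)) ω * g (σ j ω)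
          = A.indicator (fun _ => (1:ENNReal)) ω * g' (σ j ω) := by
        intro ω
        by_cases hωE : ω ∈ E k
        · have hωA : ω ∈ A := (hEA ▸ hωE).1
          have hωj : σ j ω ≤ m := (hEA ▸ hωE).2
          simp [Set.indicator, hωE, hωA, hg'def, hωj]
        · by_cases hωA : ω ∈ A
          · have hωj : ¬ σ j ω ≤ m := fun hc => hωE (hEA ▸ Set.mem_inter hωA hc)
            simp [Set.indicator, hωE, hωA, hg'def, hωj]
          · simp [Set.indicator, hωE, hωA]
      have eq2 : ∀ ω, (E k).indicator (fun _ => (1:ENNReal)) ω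
          = A.indicator (fun _ => (1:ENNReal)) ω * g'' (σ j ω) := by
        intro ω
        by_cases hωE : ω ∈ E k
        · have hωA : ω ∈ A := (hEA ▸ hωE).1
          have hωj : σ j ω ≤ m := (hEA ▸ hωE).2
          simp [Set.indicator, hωE, hωA, hg''def, hωj]
        · by_cases hωA : ω ∈ A
          · have hωj : ¬ σ j ω ≤ m := fun hc => hωE (hEA ▸ Set.mem_inter hωA hc)
            simp [Set.indicator, hωE, hωA, hg''def, hωj]
          · simp [Set.indicator, hωE, hωA]
      have hPE : P (E k) = P A * P {ω | σ 0 ω ≤ m} := by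
        have : P (E k) = ∫⁻ ω, (E k).indicator (fun _ => (1:ENNReal)) ω ∂P := by
          rw [lintegral_indicator (hEmeas k)]; simp
        rw [this, lintegral_congr eq2, e2]
        congr 1
        have : ∀ ω, g'' (σ 0 ω)
            = ((σ 0) ⁻¹' (Set.Iic m)).indicator (fun _ => (1:ENNReal)) ω := by
          intro ω
          by_cases hω : σ 0 ω ≤ m <;>
            simp [hg''def, Set.indicator, hω, Set.mem_Iic, Set.mem_preimage]
        rw [lintegral_congr this, lintegral_indicator ((hσmeas 0) measurableSet_Iic)]
        simp only [lintegral_const, one_mul, Measure.restrict_apply MeasurableSet.univ,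
          Set.univ_inter]
        rfl
      have hg'le : ∫⁻ ω, g' (σ 0 ω) ∂P ≤ Eg := by
        apply lintegral_mono; intro ω
        simp only [hg'def]
        split <;> simp
      calc p * ∫⁻ ω in E k, g (σ j ω) ∂P
          = p * (P A * ∫⁻ ω, g' (σ 0 ω) ∂P) := by rw [hconv, lintegral_congr eq1, e1]
        _ ≤ p * (P A * Eg) := by
            exact mul_le_mul_right (mul_le_mul_right hg'le _) _
        _ = (P A * p) * Eg := by ring
        _ = P (E k) * Eg := by rw [hPE, hpdef]
    · set S : Finset ℤ := insert k (I k) with hSdef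
      have hkS : k ∈ S := Finset.mem_insert_self _ _
      have hjS : j ∉ S := by
        simp only [hSdef, Finset.mem_insert]
        push_neg
        exact ⟨hjk, hjI⟩
      have hEA : E k = {ω | m < σ k ω ∧ ∀ i ∈ S, i ≠ k → σ i ω ≤ m} := by
        ext ω
        simp only [hEdef, Set.mem_setOf_eq]
        constructor
        · rintro ⟨h1, h2⟩
          refine ⟨h1, fun i hiS hik => ?_⟩
          rcases Finset.mem_insert.mp hiS with hik' | hie
          · exact absurd hik' hik
          · exact h2 i hie
        · rintro ⟨h1, h2⟩
          exact ⟨h1, fun i hiI => h2 i (Finset.mem_insert.mpr (Or.inr hiI))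
              (fun hikk => hI k hk (hikk ▸ hiI))⟩
      have e1 := indep_factor P σ hσmeas hσindep hσid m S k hkS j hjS g hg
      calc p * ∫⁻ ω in E k, g (σ j ω) ∂P
          = p * (P (E k) * Eg) := by rw [hconv, hEA, e1]
        _ ≤ 1 * (P (E k) * Eg) := mul_le_mul_left prob_le_one _
        _ = P (E k) * Eg := one_mul _
  -- Markov + summation over the (a.s.) partition given by Z
  set G : ℤ → Ω → ENNReal := fun k ω => ∑ z ∈ W k, g (σ z ω) with hGdef
  have hGmeas : ∀ k, Measurable (G k) := fun k =>
    Finset.measurable_sum _ (fun z _ => hg.comp (hσmeas z))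
  set Sk : ℤ → Set Ω := fun k => {ω | lam ≤ G k ω} with hSkdef
  have hSkmeas : ∀ k, MeasurableSet (Sk k) :=
    fun k => measurableSet_le measurable_const (hGmeas k)
  have step1 : P {ω | lam ≤ G (Z ω) ω}
      ≤ ∑' k : K, P ({ω | Z ω = (k:ℤ)} ∩ Sk (k:ℤ)) := by
    have hsub : {ω | lam ≤ G (Z ω) ω}
        ⊆ (⋃ k : K, ({ω | Z ω = (k:ℤ)} ∩ Sk (k:ℤ))) ∪ {ω | Z ω ∉ K} := by
      intro ω hω
      by_cases hK : Z ω ∈ K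
      · exact Or.inl (Set.mem_iUnion.mpr ⟨⟨Z ω, hK⟩, ⟨rfl, hω⟩⟩)
      · exact Or.inr hK
    calc P {ω | lam ≤ G (Z ω) ω}
        ≤ P (⋃ k : K, ({ω | Z ω = (k:ℤ)} ∩ Sk (k:ℤ))) + P {ω | Z ω ∉ K} :=
          le_trans (measure_mono hsub) (measure_union_le _ _)
      _ = P (⋃ k : K, ({ω | Z ω = (k:ℤ)} ∩ Sk (k:ℤ))) := by
          have : P {ω | Z ω ∉ K} = 0 := by
            rw [← MeasureTheory.ae_iff]; exact hZK
          rw [this, add_zero]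
      _ ≤ ∑' k : K, P ({ω | Z ω = (k:ℤ)} ∩ Sk (k:ℤ)) := measure_iUnion_le _
  have step2 : ∀ k ∈ K, P ({ω | Z ω = k} ∩ Sk k) ≤ P (E k ∩ Sk k) := by
    intro k hk
    apply measure_mono_ae
    filter_upwards [hZE k hk] with ω hω
    rintro ⟨h1, h2⟩
    exact ⟨hω h1, h2⟩
  have step3 : ∀ k, lam * P (E k ∩ Sk k) ≤ ∫⁻ ω in E k, G k ω ∂P := by
    intro k
    have h1 : P (E k ∩ Sk k) = (P.restrict (E k)) (Sk k) := by
      rw [Measure.restrict_apply (hSkmeas k), Set.inter_comm]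
    rw [h1]
    exact mul_meas_ge_le_lintegral₀ ((hGmeas k).aemeasurable) lam
  have step4 : ∀ k ∈ K, p * ∫⁻ ω in E k, G k ω ∂P ≤ P (E k) * (n * Eg) := by
    intro k hk
    have hsum : ∫⁻ ω in E k, G k ω ∂P = ∑ j ∈ W k, ∫⁻ ω in E k, g (σ j ω) ∂P :=
      lintegral_finset_sum _ (fun j _ => hg.comp (hσmeas j))
    calc p * ∫⁻ ω in E k, G k ω ∂P
        = ∑ j ∈ W k, p * ∫⁻ ω in E k, g (σ j ω) ∂P := by rw [hsum, Finset.mul_sum]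
      _ ≤ ∑ j ∈ W k, P (E k) * Eg := Finset.sum_le_sum (fun j hj => hkey k hk j hj)
      _ = (W k).card * (P (E k) * Eg) := by rw [Finset.sum_const, nsmul_eq_mul]
      _ ≤ n * (P (E k) * Eg) := by
          exact mul_le_mul_left (Nat.cast_le.mpr (hWcard k hk)) _
      _ = P (E k) * (n * Eg) := by ring
  have hEdisj : Pairwise fun (a b : K) => Disjoint (E a) (E b) := by
    rintro ⟨a, ha⟩ ⟨b, hb⟩ hab
    have hab' : a ≠ b := fun hc => hab (Subtype.ext hc)
    rw [Set.disjoint_left]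
    intro ω hωa hωb
    rcases hdisj a ha b hb hab' with hmem | hmem
    · exact absurd (hωb.2 a hmem) (not_le.mpr hωa.1)
    · exact absurd (hωa.2 b hmem) (not_le.mpr hωb.1)
  have hsumE : ∑' k : K, P (E k) ≤ 1 := by
    rw [← measure_iUnion hEdisj (fun k => hEmeas k)]
    exact prob_le_one
  calc p * lam * P {ω | lam ≤ ∑ z ∈ W (Z ω), g (σ z ω)}
      = p * lam * P {ω | lam ≤ G (Z ω) ω} := rfl
    _ ≤ p * lam * ∑' k : K, P ({ω | Z ω = (k:ℤ)} ∩ Sk (k:ℤ)) := mul_le_mul_right step1 _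
    _ = ∑' k : K, p * (lam * P ({ω | Z ω = (k:ℤ)} ∩ Sk (k:ℤ))) := by
        rw [← ENNReal.tsum_mul_left]
        exact tsum_congr (fun k => by ring)
    _ ≤ ∑' k : K, P (E (k:ℤ)) * (n * Eg) := by
        apply ENNReal.tsum_le_tsum
        intro k
        calc p * (lam * P ({ω | Z ω = (k:ℤ)} ∩ Sk (k:ℤ)))
            ≤ p * (lam * P (E (k:ℤ) ∩ Sk (k:ℤ))) := by
              exact mul_le_mul_right (mul_le_mul_right (step2 k k.2) _) _
          _ ≤ p * ∫⁻ ω in E (k:ℤ), G (k:ℤ) ω ∂P := mul_le_mul_right (step3 k) _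
          _ ≤ P (E (k:ℤ)) * (n * Eg) := step4 k k.2
    _ = (∑' k : K, P (E (k:ℤ))) * (n * Eg) := ENNReal.tsum_mul_right
    _ ≤ 1 * (n * Eg) := mul_le_mul_left hsumE _
    _ = n * Eg := one_mul _

lemma karamata_light (P : Measure Ω) [IsProbabilityMeasure P]
    (L : ℝ → ℝ) (hLpos : ∀ x, 0 ≤ x → 0 < L x) (hLmono : MonotoneOn L (Set.Ici 0))
    (hLsv : ∀ v > 0, Tendsto (fun u => L (u * v) / L u) atTop (nhds 1))
    (σ0 : Ω → ℝ) (hmeas : Measurable σ0)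
    (htail : ∀ x : ℝ, 0 ≤ x → P {ω | x < σ0 ω} = ENNReal.ofReal (1 / L x)) :
    ∃ B : ℝ, 2 ≤ B ∧ ∀ᶠ u in atTop,
      ∫⁻ ω, ENNReal.ofReal (min (σ0 ω) u) ∂P ≤ ENNReal.ofReal (B * u / L u) := by
  classical
  have h2 := hLsv (1/2) (by norm_num)
  have hev : ∀ᶠ u in atTop, 4/5 < L (u * (1/2)) / L u :=
    h2.eventually (eventually_gt_nhds (by norm_num))
  rw [eventually_atTop] at hev
  obtain ⟨U₀', hU₀'⟩ := hev
  set U₀ : ℝ := max U₀' 1 with hU₀def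
  have hU₀1 : 1 ≤ U₀ := le_max_right _ _
  have hU₀pos : 0 < U₀ := lt_of_lt_of_le one_pos hU₀1
  have hsv' : ∀ u, U₀ ≤ u → L u ≤ 5/4 * L (u/2) := by
    intro u hu
    have hupos : 0 < u := lt_of_lt_of_le hU₀pos hu
    have h45 : 4/5 < L (u * (1/2)) / L u := hU₀' u (le_trans (le_max_left _ _) hu)
    have hLu : 0 < L u := hLpos u hupos.le
    have hlt : 4/5 * L u < L (u * (1/2)) := by
      rw [lt_div_iff₀ hLu] at h45; linarith
    have huh : u * (1/2) = u / 2 := by ring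
    rw [huh] at hlt
    linarith
  set B : ℝ := max 2 (L (2 * U₀)) with hBdef
  refine ⟨B, le_max_left _ _, ?_⟩
  set e : ℝ → ENNReal := fun u => ∫⁻ ω, ENNReal.ofReal (min (σ0 ω) u) ∂P with hedef
  have hbase : ∀ u, 0 ≤ u → e u ≤ ENNReal.ofReal u := by
    intro u hu
    calc e u ≤ ∫⁻ _, ENNReal.ofReal u ∂P :=
        lintegral_mono fun ω => ENNReal.ofReal_le_ofReal (min_le_right _ _)
      _ = ENNReal.ofReal u := by simp
  have hstep : ∀ u, U₀ ≤ u → e u ≤ e (u/2) + ENNReal.ofReal ((u/2) / L (u/2)) := by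
    intro u hu
    have hu2 : (0:ℝ) ≤ u/2 := by
      have : 0 < u := lt_of_lt_of_le hU₀pos hu
      linarith
    have hpt : ∀ ω, ENNReal.ofReal (min (σ0 ω) u)
        ≤ ENNReal.ofReal (min (σ0 ω) (u/2))
          + (σ0 ⁻¹' (Set.Ioi (u/2))).indicator (fun _ => ENNReal.ofReal (u/2)) ω := by
      intro ω
      by_cases hs : σ0 ω ≤ u/2
      · have hnm : ω ∉ σ0 ⁻¹' (Set.Ioi (u/2)) := by
          simp only [Set.mem_preimage, Set.mem_Ioi, not_lt]; exact hs
        rw [Set.indicator_of_notMem hnm, add_zero]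
        have hmm : min (σ0 ω) u = min (σ0 ω) (u/2) := by
          rw [min_eq_left (le_trans hs (by linarith)), min_eq_left hs]
        rw [hmm]
      · push_neg at hs
        have hmem : ω ∈ σ0 ⁻¹' (Set.Ioi (u/2)) := hs
        rw [Set.indicator_of_mem hmem]
        have h1 : min (σ0 ω) (u/2) = u/2 := min_eq_right hs.le
        rw [h1, ← ENNReal.ofReal_add hu2 hu2]
        apply ENNReal.ofReal_le_ofReal
        have huu : u/2 + u/2 = u := by ring
        rw [huu]; exact min_le_right _ _
    calc e u ≤ ∫⁻ ω, (ENNReal.ofReal (min (σ0 ω) (u/2))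
          + (σ0 ⁻¹' (Set.Ioi (u/2))).indicator (fun _ => ENNReal.ofReal (u/2)) ω) ∂P :=
        lintegral_mono hpt
      _ = e (u/2) + ∫⁻ ω, (σ0 ⁻¹' (Set.Ioi (u/2))).indicator
            (fun _ => ENNReal.ofReal (u/2)) ω ∂P :=
          lintegral_add_left (ENNReal.measurable_ofReal.comp (hmeas.min measurable_const)) _
      _ = e (u/2) + ENNReal.ofReal (u/2) * P {ω | u/2 < σ0 ω} := by
          rw [lintegral_indicator (hmeas measurableSet_Ioi), setLIntegral_const]
          rfl
      _ = e (u/2) + ENNReal.ofReal ((u/2) / L (u/2)) := by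
          rw [htail (u/2) hu2, ← ENNReal.ofReal_mul hu2, mul_one_div]
  have main : ∀ n : ℕ, ∀ u, U₀ ≤ u → u ≤ 2^n * (2*U₀) →
      e u ≤ ENNReal.ofReal (B * u / L u) := by
    intro n
    induction n with
    | zero =>
      intro u hu1 hu2
      rw [pow_zero, one_mul] at hu2
      have hupos : 0 < u := lt_of_lt_of_le hU₀pos hu1
      have hLu : 0 < L u := hLpos u hupos.le
      refine le_trans (hbase u hupos.le) (ENNReal.ofReal_le_ofReal ?_)
      rw [le_div_iff₀ hLu]
      have hLuB : L u ≤ B := le_trans (hLmono (Set.mem_Ici.mpr hupos.le)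
        (Set.mem_Ici.mpr (by positivity)) hu2) (le_max_right _ _)
      nlinarith
    | succ n ih =>
      intro u hu1 hu2
      by_cases hc : u ≤ 2^n * (2*U₀)
      · exact ih u hu1 hc
      · push_neg at hc
        have h2n : (1:ℝ) ≤ 2 ^ n := one_le_pow₀ (by norm_num)
        have h2U : 2*U₀ ≤ u := by
          have := mul_le_mul_of_nonneg_right h2n (by positivity : (0:ℝ) ≤ 2*U₀)
          rw [one_mul] at this
          linarith
        have hu2' : u/2 ≤ 2^n * (2*U₀) := by
          rw [div_le_iff₀ (by norm_num : (0:ℝ) < 2)]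
          calc u ≤ 2^(n+1)*(2*U₀) := hu2
            _ = (2^n*(2*U₀))*2 := by ring
        have hu1' : U₀ ≤ u/2 := by linarith
        have hrec := hstep u hu1
        have hih := ih (u/2) hu1' hu2'
        have hL2 : 0 < L (u/2) := hLpos _ (by linarith)
        have hu0 : 0 < u := by linarith
        have hLu : 0 < L u := hLpos _ hu0.le
        have hB2 : 2 ≤ B := le_max_left _ _
        have hcomb : e u ≤ ENNReal.ofReal (B * (u/2) / L (u/2))
            + ENNReal.ofReal ((u/2)/L (u/2)) :=
          le_trans hrec (add_le_add_left hih _)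
        rw [← ENNReal.ofReal_add (by positivity) (by positivity)] at hcomb
        refine le_trans hcomb (ENNReal.ofReal_le_ofReal ?_)
        have hsv := hsv' u hu1
        rw [← add_div, div_le_div_iff₀ hL2 hLu]
        have e2 : (0:ℝ) ≤ (B+1)*(u/2) := by positivity
        have key := mul_le_mul_of_nonneg_left hsv e2
        nlinarith [mul_pos hu0 hL2]
  rw [eventually_atTop]
  refine ⟨U₀, fun u hu => ?_⟩
  obtain ⟨n, hn⟩ : ∃ n : ℕ, u ≤ 2^n * (2*U₀) := by
    obtain ⟨n, hn⟩ := pow_unbounded_of_one_lt (u / (2*U₀)) (by norm_num : (1:ℝ) < 2)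
    refine ⟨n, ?_⟩
    rw [div_lt_iff₀ (by positivity)] at hn
    nlinarith
  exact main n u hu hn

end Aux

set_option maxHeartbeats 1600000 in
/-- Proposition: the event `𝒞^h_t` is overwhelmingly likely.
In the Bouchaud trap model landscape (`σ_z` i.i.d., `P(σ_0 > x) = 1/L x` with `L` càdlàg,
non-decreasing, unbounded and slowly varying), with `ℓ_t`, `r_t = L(ℓ_t)`,
`Z¹_t := min {z ≥ 1 : σ_z > ℓ_t}`, `Z²_t := max {z ≤ -1 : σ_z > ℓ_t}`,
`S̄_t := ∑_{i=1,2} ∑_{z : 1 ≤ |z - Zⁱ_t| < r_t/h_t} σ_z`, and a scaling function `h`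
as in the paper, we have `P( S̄_t < ℓ_t / h_t ) → 1` as `t → ∞`. -/
theorem btm_event_C_whp
    {Ω : Type*} [MeasurableSpace Ω] (P : Measure Ω) [IsProbabilityMeasure P]
    (L : ℝ → ℝ)
    (hLpos : ∀ x, 0 ≤ x → 0 < L x)
    (hLmono : MonotoneOn L (Set.Ici 0))
    (hLcadlag : ∀ x ≥ 0, ContinuousWithinAt L (Set.Ici x) x)
    (hLunb : Tendsto L atTop atTop)
    (hLsv : ∀ v > 0, Tendsto (fun u => L (u * v) / L u) atTop (nhds 1))
    (ℓ : ℝ → ℝ)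
    (hℓ : ∀ t, IsLeast {s : ℝ | 0 ≤ s ∧ t ≤ s * L s} (ℓ t))
    (r : ℝ → ℝ) (hr : ∀ t, r t = L (ℓ t))
    (σ : ℤ → Ω → ℝ)
    (hσmeas : ∀ z, Measurable (σ z))
    (hσindep : iIndepFun σ P)
    (hσid : ∀ z, Measure.map (σ z) P = Measure.map (σ 0) P)
    (hσpos : ∀ z, ∀ᵐ ω ∂P, 0 < σ z ω)
    (hσtail : ∀ x : ℝ, 0 ≤ x → P {ω | x < σ 0 ω} = ENNReal.ofReal (1 / L x))
    (Z1 Z2 : ℝ → Ω → ℤ)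
    (hZ1meas : ∀ t, Measurable (Z1 t)) (hZ2meas : ∀ t, Measurable (Z2 t))
    (hZ1 : ∀ t, ∀ᵐ ω ∂P, IsLeast {z : ℤ | 1 ≤ z ∧ ℓ t < σ z ω} (Z1 t ω))
    (hZ2 : ∀ t, ∀ᵐ ω ∂P, IsGreatest {z : ℤ | z ≤ -1 ∧ ℓ t < σ z ω} (Z2 t ω))
    (h : ℝ → ℝ)
    (hhmono : Monotone h) (hhpos : ∀ t, 0 < h t)
    (hhtop : Tendsto h atTop atTop)
    (hho : (fun t => (h t) ^ 2) =o[atTop] r)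
    (hhL : ∀ᶠ t in atTop,
      L (ℓ t) * (1 - 1 / h t) < L (ℓ t / (h t) ^ 3) ∧
      L (ℓ t * (h t) ^ 3) < L (ℓ t) * (1 + 1 / h t)) :
    Tendsto
      (fun t =>
        (P {ω |
          (∑ z ∈ (Finset.Icc (Z1 t ω - ⌈r t / h t⌉) (Z1 t ω + ⌈r t / h t⌉)).filter
              (fun z => z ≠ Z1 t ω ∧ |(z : ℝ) - (Z1 t ω : ℝ)| < r t / h t), σ z ω) +
          (∑ z ∈ (Finset.Icc (Z2 t ω - ⌈r t / h t⌉) (Z2 t ω + ⌈r t / h t⌉)).filter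
              (fun z => z ≠ Z2 t ω ∧ |(z : ℝ) - (Z2 t ω : ℝ)| < r t / h t), σ z ω)
            < ℓ t / h t}).toReal)
      atTop (nhds 1) := by
  classical
  have hℓ0 : ∀ t, 0 ≤ ℓ t := fun t => (hℓ t).1.1
  have hℓself : ∀ t, t ≤ ℓ t * L (ℓ t) := fun t => (hℓ t).1.2
  have hrpos : ∀ t, 0 < L (ℓ t) := fun t => hLpos _ (hℓ0 t)
  have hℓtop : Tendsto ℓ atTop atTop := by
    rw [tendsto_atTop]
    intro M
    filter_upwards [eventually_gt_atTop (max M 0 * L (max M 0))] with t ht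
    by_contra hcon
    push_neg at hcon
    have h1 : ℓ t ≤ max M 0 := le_trans hcon.le (le_max_left _ _)
    have h2 : L (ℓ t) ≤ L (max M 0) :=
      hLmono (Set.mem_Ici.mpr (hℓ0 t)) (Set.mem_Ici.mpr (le_max_right M 0)) h1
    have h3 : ℓ t * L (ℓ t) ≤ max M 0 * L (max M 0) :=
      mul_le_mul h1 h2 (hrpos t).le (le_max_right M 0)
    linarith [hℓself t]
  have hrtop : Tendsto (fun t => L (ℓ t)) atTop atTop := hLunb.comp hℓtop
  obtain ⟨B, hB2, hkar⟩ := karamata_light P L hLpos hLmono hLsv (σ 0) (hσmeas 0) hσtail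
  have hctop : Tendsto (fun t => ℓ t / h t ^ 3) atTop atTop := by
    rw [tendsto_atTop]
    intro M
    filter_upwards [hhtop.eventually_ge_atTop 2,
      hrtop.eventually_ge_atTop (2 * (L (max M 0) + 1)), hhL] with t hh2 hLM hhLt
    have hhpos' : (0:ℝ) < h t := hhpos t
    have h12 : (1:ℝ)/2 ≤ 1 - 1/h t := by
      have : 1/h t ≤ 1/2 := one_div_le_one_div_of_le (by norm_num) hh2
      linarith
    have hstep : L (ℓ t) * (1/2) ≤ L (ℓ t) * (1 - 1/h t) :=
      mul_le_mul_of_nonneg_left h12 (hrpos t).le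
    have hLc : L (max M 0) < L (ℓ t / h t ^ 3) := by
      have := hhLt.1
      nlinarith
    by_contra hcon
    push_neg at hcon
    have hc0 : (0:ℝ) ≤ ℓ t / h t ^ 3 := div_nonneg (hℓ0 t) (pow_pos (hhpos t) 3).le
    have : L (ℓ t / h t ^ 3) ≤ L (max M 0) :=
      hLmono (Set.mem_Ici.mpr hc0) (Set.mem_Ici.mpr (le_max_right M 0))
        (le_trans hcon.le (le_max_left _ _))
    linarith
  have hρ : ∀ᶠ t in atTop, h t ^ 2 ≤ r t := by
    have hev := hho.def one_pos
    filter_upwards [hev] with t ht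
    have h1 : ‖h t ^ 2‖ = h t ^ 2 := Real.norm_of_nonneg (sq_nonneg _)
    have h2 : ‖r t‖ = r t := Real.norm_of_nonneg (by rw [hr t]; exact (hrpos t).le)
    rw [h1, h2, one_mul] at ht
    exact ht
  -- master inequality, side 1
  have master1 : ∀ (t : ℝ) (g : ℝ → ENNReal), Measurable g → ∀ lam : ENNReal,
      P {ω | σ 0 ω ≤ ℓ t} * lam *
        P {ω | lam ≤ ∑ z ∈ (Finset.Icc (Z1 t ω - ⌈r t / h t⌉) (Z1 t ω + ⌈r t / h t⌉)).filter
            (fun z => z ≠ Z1 t ω ∧ |(z : ℝ) - (Z1 t ω : ℝ)| < r t / h t), g (σ z ω)}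
      ≤ ((2 * ⌈r t / h t⌉ + 1).toNat : ENNReal) * ∫⁻ ω, g (σ 0 ω) ∂P := by
    intro t g hg lam
    exact master_key P σ hσmeas hσindep hσid (ℓ t) (Set.Ici 1)
      (fun k => Finset.Icc 1 (k-1))
      (fun k _ => by simp only [Finset.mem_Icc]; omega)
      (fun k hk k' hk' hne => by
        rw [Set.mem_Ici] at hk hk'
        rcases lt_or_gt_of_ne hne with hlt | hlt
        · exact Or.inl (Finset.mem_Icc.mpr ⟨hk, by omega⟩)
        · exact Or.inr (Finset.mem_Icc.mpr ⟨hk', by omega⟩))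
      (Z1 t)
      (by filter_upwards [hZ1 t] with ω hω; exact Set.mem_Ici.mpr hω.1.1)
      (fun k hk => by
        filter_upwards [hZ1 t] with ω hω hzk
        constructor
        · rw [← hzk]; exact hω.1.2
        · intro i hi
          rw [Finset.mem_Icc] at hi
          by_contra hcon
          push_neg at hcon
          have hle := hω.2 ⟨hi.1, hcon⟩
          rw [hzk] at hle
          omega)
      (fun k => (Finset.Icc (k - ⌈r t / h t⌉) (k + ⌈r t / h t⌉)).filter
          (fun z => z ≠ k ∧ |(z : ℝ) - (k : ℝ)| < r t / h t))
      (fun k _ hmem => (Finset.mem_filter.mp hmem).2.1 rfl)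
      ((2 * ⌈r t / h t⌉ + 1).toNat)
      (fun k _ => by
        refine le_trans (Finset.card_filter_le _ _) ?_
        rw [Int.card_Icc]
        apply le_of_eq
        congr 1
        ring)
      g hg lam
  -- master inequality, side 2
  have master2 : ∀ (t : ℝ) (g : ℝ → ENNReal), Measurable g → ∀ lam : ENNReal,
      P {ω | σ 0 ω ≤ ℓ t} * lam *
        P {ω | lam ≤ ∑ z ∈ (Finset.Icc (Z2 t ω - ⌈r t / h t⌉) (Z2 t ω + ⌈r t / h t⌉)).filter
            (fun z => z ≠ Z2 t ω ∧ |(z : ℝ) - (Z2 t ω : ℝ)| < r t / h t), g (σ z ω)}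
      ≤ ((2 * ⌈r t / h t⌉ + 1).toNat : ENNReal) * ∫⁻ ω, g (σ 0 ω) ∂P := by
    intro t g hg lam
    exact master_key P σ hσmeas hσindep hσid (ℓ t) (Set.Iic (-1))
      (fun k => Finset.Icc (k+1) (-1))
      (fun k _ => by simp only [Finset.mem_Icc]; omega)
      (fun k hk k' hk' hne => by
        rw [Set.mem_Iic] at hk hk'
        rcases lt_or_gt_of_ne hne with hlt | hlt
        · exact Or.inr (Finset.mem_Icc.mpr ⟨by omega, hk'⟩)
        · exact Or.inl (Finset.mem_Icc.mpr ⟨by omega, hk⟩))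
      (Z2 t)
      (by filter_upwards [hZ2 t] with ω hω; exact Set.mem_Iic.mpr hω.1.1)
      (fun k hk => by
        filter_upwards [hZ2 t] with ω hω hzk
        constructor
        · rw [← hzk]; exact hω.1.2
        · intro i hi
          rw [Finset.mem_Icc] at hi
          by_contra hcon
          push_neg at hcon
          have hle := hω.2 ⟨hi.2, hcon⟩
          rw [hzk] at hle
          omega)
      (fun k => (Finset.Icc (k - ⌈r t / h t⌉) (k + ⌈r t / h t⌉)).filter
          (fun z => z ≠ k ∧ |(z : ℝ) - (k : ℝ)| < r t / h t))
      (fun k _ hmem => (Finset.mem_filter.mp hmem).2.1 rfl)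
      ((2 * ⌈r t / h t⌉ + 1).toNat)
      (fun k _ => by
        refine le_trans (Finset.card_filter_le _ _) ?_
        rw [Int.card_Icc]
        apply le_of_eq
        congr 1
        ring)
      g hg lam
  -- integral of an indicator of a tail through σ 0
  have hIndInt : ∀ a : ℝ, 0 ≤ a →
      ∫⁻ ω, (Set.Ioi a).indicator (fun _ => (1:ENNReal)) (σ 0 ω) ∂P
        = ENNReal.ofReal (1 / L a) := by
    intro a ha
    have h1 : ∀ ω, (Set.Ioi a).indicator (fun _ => (1:ENNReal)) (σ 0 ω)
        = ((σ 0) ⁻¹' (Set.Ioi a)).indicator (fun _ => (1:ENNReal)) ω := by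
      intro ω
      by_cases hω : σ 0 ω ∈ Set.Ioi a
      · rw [Set.indicator_of_mem hω,
          Set.indicator_of_mem (show ω ∈ (σ 0) ⁻¹' (Set.Ioi a) from hω)]
      · rw [Set.indicator_of_notMem hω,
          Set.indicator_of_notMem (show ω ∉ (σ 0) ⁻¹' (Set.Ioi a) from hω)]
    rw [lintegral_congr h1, lintegral_indicator ((hσmeas 0) measurableSet_Ioi),
      setLIntegral_one, ← hσtail a ha]
    rfl
  set C : ℝ := 24 + 48 * B with hCdef
  have hCpos : (0:ℝ) < C := by nlinarith
  -- the core eventual bound on the bad event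
  have key : ∀ᶠ t in atTop,
      P {ω |
          ℓ t / h t ≤
          (∑ z ∈ (Finset.Icc (Z1 t ω - ⌈r t / h t⌉) (Z1 t ω + ⌈r t / h t⌉)).filter
              (fun z => z ≠ Z1 t ω ∧ |(z : ℝ) - (Z1 t ω : ℝ)| < r t / h t), σ z ω) +
          (∑ z ∈ (Finset.Icc (Z2 t ω - ⌈r t / h t⌉) (Z2 t ω + ⌈r t / h t⌉)).filter
              (fun z => z ≠ Z2 t ω ∧ |(z : ℝ) - (Z2 t ω : ℝ)| < r t / h t), σ z ω)}
        ≤ ENNReal.ofReal (C / h t) := by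
    filter_upwards [hhtop.eventually_ge_atTop 3, hhL, hrtop.eventually_ge_atTop 4,
      hℓtop.eventually_ge_atTop 1, hctop.eventually hkar, hρ] with t hh3 hhLt hr4 hℓ1 hkara hhr
    have hh0 : (0:ℝ) < h t := hhpos t
    have hhne : h t ≠ 0 := ne_of_gt hh0
    have hL0 : (0:ℝ) < L (ℓ t) := hrpos t
    have hLne : L (ℓ t) ≠ 0 := ne_of_gt hL0
    have hrL : r t = L (ℓ t) := hr t
    have hℓpos : (0:ℝ) < ℓ t := by linarith
    have hℓne : ℓ t ≠ 0 := ne_of_gt hℓpos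
    have hB0 : (0:ℝ) < B := by linarith
    have hr0 : (0:ℝ) ≤ r t := by rw [hrL]; exact hL0.le
    have hh30 : (0:ℝ) < h t ^ 3 := pow_pos hh0 3
    have hh40 : (0:ℝ) < h t ^ 4 := pow_pos hh0 4
    have h12h : (0:ℝ) ≤ 12 / h t := div_nonneg (by norm_num) hh0.le
    have h24Bh : (0:ℝ) ≤ 24 * B / h t := div_nonneg (by nlinarith) hh0.le
    have hc0 : (0:ℝ) ≤ ℓ t / h t ^ 3 := div_nonneg (hℓ0 t) hh30.le
    have h1h : 1/h t ≤ 1/3 := one_div_le_one_div_of_le (by norm_num) hh3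
    have hLc : L (ℓ t) / 2 ≤ L (ℓ t / h t ^ 3) := by nlinarith [hhLt.1]
    have hLc0 : (0:ℝ) < L (ℓ t / h t ^ 3) := hLpos _ hc0
    -- probability of staying below the level is at least 1/2
    have hp : (1/2 : ENNReal) ≤ P {ω | σ 0 ω ≤ ℓ t} := by
      have hmeasI : MeasurableSet {ω | ℓ t < σ 0 ω} :=
        measurableSet_lt measurable_const (hσmeas 0)
      have hcompl : {ω | σ 0 ω ≤ ℓ t} = {ω | ℓ t < σ 0 ω}ᶜ := by
        ext ω; simp [not_lt]
      have hq : P {ω | ℓ t < σ 0 ω} ≤ 1/2 := by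
        rw [hσtail (ℓ t) (hℓ0 t)]
        calc ENNReal.ofReal (1 / L (ℓ t)) ≤ ENNReal.ofReal (1/2) := by
              apply ENNReal.ofReal_le_ofReal
              calc 1 / L (ℓ t) ≤ 1 / 4 := one_div_le_one_div_of_le (by norm_num) hr4
                _ ≤ 1/2 := by norm_num
          _ = 1/2 := by rw [ENNReal.ofReal_div_of_pos (by norm_num)]; norm_num
      have hsum : P {ω | ℓ t < σ 0 ω}ᶜ + P {ω | ℓ t < σ 0 ω} = 1 := by
        rw [add_comm]; exact (measure_add_measure_compl hmeasI).trans measure_univ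
      rw [hcompl]
      have h1 : (1:ENNReal) ≤ P {ω | ℓ t < σ 0 ω}ᶜ + 1/2 :=
        by have := add_le_add_right hq (P {ω | ℓ t < σ 0 ω}ᶜ); rwa [hsum] at this
      have h2 : (1:ENNReal)/2 + 1/2 ≤ P {ω | ℓ t < σ 0 ω}ᶜ + 1/2 := by
        rw [ENNReal.add_halves]; exact h1
      exact ENNReal.le_of_add_le_add_right (by norm_num) h2
    -- cardinality bound
    have hρ3 : 3 ≤ r t / h t := by
      have hhh : h t ≤ r t / h t := by
        rw [le_div_iff₀ hh0]; nlinarith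
      linarith
    have hNcast : (((2 * ⌈r t / h t⌉ + 1).toNat : ℕ) : ENNReal)
        ≤ ENNReal.ofReal (3 * (r t / h t)) := by
      have hceil0 : (0:ℤ) ≤ ⌈r t / h t⌉ := Int.ceil_nonneg (by linarith)
      have hN0 : (0:ℤ) ≤ 2 * ⌈r t / h t⌉ + 1 := by omega
      have hcast : (((2 * ⌈r t / h t⌉ + 1).toNat : ℕ) : ℝ)
          = 2 * ((⌈r t / h t⌉ : ℤ) : ℝ) + 1 := by
        rw [show (((2 * ⌈r t / h t⌉ + 1).toNat : ℕ) : ℝ)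
            = (((2 * ⌈r t / h t⌉ + 1).toNat : ℤ) : ℝ) by push_cast; ring,
          Int.toNat_of_nonneg hN0]
        push_cast; ring
      rw [← ENNReal.ofReal_natCast]
      apply ENNReal.ofReal_le_ofReal
      rw [hcast]
      have hceil : ((⌈r t / h t⌉ : ℤ) : ℝ) < r t / h t + 1 := Int.ceil_lt_add_one _
      linarith
    -- bound for the `gA` (big-trap) events
    set gA : ℝ → ENNReal := (Set.Ioi (ℓ t / h t ^ 3)).indicator (fun _ => (1:ENNReal))
      with hgAdef
    have hgA : Measurable gA := measurable_const.indicator measurableSet_Ioi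
    have hgAint : ∫⁻ ω, gA (σ 0 ω) ∂P = ENNReal.ofReal (1 / L (ℓ t / h t ^ 3)) :=
      hIndInt _ hc0
    have hRA : ((2 * ⌈r t / h t⌉ + 1).toNat : ENNReal) * ∫⁻ ω, gA (σ 0 ω) ∂P
        ≤ ENNReal.ofReal (6 / h t) := by
      rw [hgAint]
      calc ((2 * ⌈r t / h t⌉ + 1).toNat : ENNReal) * ENNReal.ofReal (1 / L (ℓ t / h t ^ 3))
          ≤ ENNReal.ofReal (3 * (r t / h t)) * ENNReal.ofReal (2 / L (ℓ t)) := by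
            apply mul_le_mul' hNcast
            apply ENNReal.ofReal_le_ofReal
            rw [div_le_div_iff₀ hLc0 hL0]
            nlinarith
        _ = ENNReal.ofReal (6 / h t) := by
            rw [← ENNReal.ofReal_mul (mul_nonneg (by norm_num) (div_nonneg hr0 hh0.le))]
            congr 1
            rw [hrL]
            field_simp
            ring
    -- bound for the `gB` (truncated-sum) events
    set gB : ℝ → ENNReal := fun x => ENNReal.ofReal (min x (ℓ t / h t ^ 3)) with hgBdef
    have hgB : Measurable gB :=
      ENNReal.measurable_ofReal.comp (measurable_id.min measurable_const)
    have hRB : ((2 * ⌈r t / h t⌉ + 1).toNat : ENNReal) * ∫⁻ ω, gB (σ 0 ω) ∂P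
        ≤ ENNReal.ofReal (6 * B * ℓ t / h t ^ 4) := by
      calc ((2 * ⌈r t / h t⌉ + 1).toNat : ENNReal) * ∫⁻ ω, gB (σ 0 ω) ∂P
          ≤ ENNReal.ofReal (3 * (r t / h t)) *
            ENNReal.ofReal (B * (ℓ t / h t ^ 3) / L (ℓ t / h t ^ 3)) :=
            mul_le_mul' hNcast hkara
        _ ≤ ENNReal.ofReal (3 * (r t / h t)) *
            ENNReal.ofReal (2 * B * (ℓ t / h t ^ 3) / L (ℓ t)) := by
            apply mul_le_mul_right
            apply ENNReal.ofReal_le_ofReal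
            rw [div_le_div_iff₀ hLc0 hL0]
            have hBc : (0:ℝ) ≤ B * (ℓ t / h t ^ 3) := mul_nonneg hB0.le hc0
            nlinarith
        _ = ENNReal.ofReal (6 * B * ℓ t / h t ^ 4) := by
            rw [← ENNReal.ofReal_mul (mul_nonneg (by norm_num) (div_nonneg hr0 hh0.le))]
            congr 1
            rw [hrL]
            field_simp
            ring
    -- extract the four probability bounds
    have hlam0 : ENNReal.ofReal (ℓ t / (2 * h t)) ≠ 0 :=
      (ENNReal.ofReal_pos.mpr (div_pos hℓpos (by linarith))).ne'
    have hlamtop : ENNReal.ofReal (ℓ t / (2 * h t)) ≠ ⊤ := ENNReal.ofReal_ne_top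
    have hP1a : P {ω | (1:ENNReal) ≤
        ∑ z ∈ (Finset.Icc (Z1 t ω - ⌈r t / h t⌉) (Z1 t ω + ⌈r t / h t⌉)).filter
          (fun z => z ≠ Z1 t ω ∧ |(z : ℝ) - (Z1 t ω : ℝ)| < r t / h t), gA (σ z ω)}
        ≤ ENNReal.ofReal (12 / h t) := by
      have hX := aux_extract _ _ _ _ hp one_ne_zero ENNReal.one_ne_top
        (le_trans (master1 t gA hgA 1) hRA)
      rw [inv_one, mul_one] at hX
      refine le_trans hX ?_
      rw [show (2:ENNReal) = ENNReal.ofReal 2 by simp [ENNReal.ofReal_ofNat],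
        ← ENNReal.ofReal_mul (by norm_num)]
      exact ENNReal.ofReal_le_ofReal (le_of_eq (by ring))
    have hP2a : P {ω | (1:ENNReal) ≤
        ∑ z ∈ (Finset.Icc (Z2 t ω - ⌈r t / h t⌉) (Z2 t ω + ⌈r t / h t⌉)).filter
          (fun z => z ≠ Z2 t ω ∧ |(z : ℝ) - (Z2 t ω : ℝ)| < r t / h t), gA (σ z ω)}
        ≤ ENNReal.ofReal (12 / h t) := by
      have hX := aux_extract _ _ _ _ hp one_ne_zero ENNReal.one_ne_top
        (le_trans (master2 t gA hgA 1) hRA)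
      rw [inv_one, mul_one] at hX
      refine le_trans hX ?_
      rw [show (2:ENNReal) = ENNReal.ofReal 2 by simp [ENNReal.ofReal_ofNat],
        ← ENNReal.ofReal_mul (by norm_num)]
      exact ENNReal.ofReal_le_ofReal (le_of_eq (by ring))
    have hBbound : 2 * (ENNReal.ofReal (ℓ t / (2 * h t)))⁻¹ *
        ENNReal.ofReal (6 * B * ℓ t / h t ^ 4) ≤ ENNReal.ofReal (24 * B / h t) := by
      have hinv : (ENNReal.ofReal (ℓ t / (2 * h t)))⁻¹ *
          ENNReal.ofReal (6 * B * ℓ t / h t ^ 4)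
          = ENNReal.ofReal ((6 * B * ℓ t / h t ^ 4) / (ℓ t / (2 * h t))) := by
        rw [ENNReal.ofReal_div_of_pos (div_pos hℓpos (by linarith)), ENNReal.div_eq_inv_mul]
      calc 2 * (ENNReal.ofReal (ℓ t / (2 * h t)))⁻¹ *
            ENNReal.ofReal (6 * B * ℓ t / h t ^ 4)
          = 2 * ENNReal.ofReal ((6 * B * ℓ t / h t ^ 4) / (ℓ t / (2 * h t))) := by
            rw [mul_assoc, hinv]
        _ = ENNReal.ofReal (2 * ((6 * B * ℓ t / h t ^ 4) / (ℓ t / (2 * h t)))) := by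
            rw [show (2:ENNReal) = ENNReal.ofReal 2 by simp [ENNReal.ofReal_ofNat],
              ← ENNReal.ofReal_mul (by norm_num)]
        _ ≤ ENNReal.ofReal (24 * B / h t) := by
            apply ENNReal.ofReal_le_ofReal
            have heq : (6 * B * ℓ t / h t ^ 4) / (ℓ t / (2 * h t)) = 12 * B / h t ^ 3 := by
              field_simp
              ring
            rw [heq]
            have hh13 : h t ≤ h t ^ 3 := by nlinarith
            calc 2 * (12 * B / h t ^ 3) = 24 * B / h t ^ 3 := by ring
              _ ≤ 24 * B / h t := by
                  apply div_le_div_of_nonneg_left (by nlinarith) hh0 hh13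
    have hP1b : P {ω | ENNReal.ofReal (ℓ t / (2 * h t)) ≤
        ∑ z ∈ (Finset.Icc (Z1 t ω - ⌈r t / h t⌉) (Z1 t ω + ⌈r t / h t⌉)).filter
          (fun z => z ≠ Z1 t ω ∧ |(z : ℝ) - (Z1 t ω : ℝ)| < r t / h t), gB (σ z ω)}
        ≤ ENNReal.ofReal (24 * B / h t) := by
      have hX := aux_extract _ _ _ _ hp hlam0 hlamtop
        (le_trans (master1 t gB hgB (ENNReal.ofReal (ℓ t / (2 * h t)))) hRB)
      exact le_trans hX hBbound
    have hP2b : P {ω | ENNReal.ofReal (ℓ t / (2 * h t)) ≤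
        ∑ z ∈ (Finset.Icc (Z2 t ω - ⌈r t / h t⌉) (Z2 t ω + ⌈r t / h t⌉)).filter
          (fun z => z ≠ Z2 t ω ∧ |(z : ℝ) - (Z2 t ω : ℝ)| < r t / h t), gB (σ z ω)}
        ≤ ENNReal.ofReal (24 * B / h t) := by
      have hX := aux_extract _ _ _ _ hp hlam0 hlamtop
        (le_trans (master2 t gB hgB (ENNReal.ofReal (ℓ t / (2 * h t)))) hRB)
      exact le_trans hX hBbound
    -- inclusion of the bad event in the four auxiliary events
    have hincl : {ω |
          ℓ t / h t ≤
          (∑ z ∈ (Finset.Icc (Z1 t ω - ⌈r t / h t⌉) (Z1 t ω + ⌈r t / h t⌉)).filter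
              (fun z => z ≠ Z1 t ω ∧ |(z : ℝ) - (Z1 t ω : ℝ)| < r t / h t), σ z ω) +
          (∑ z ∈ (Finset.Icc (Z2 t ω - ⌈r t / h t⌉) (Z2 t ω + ⌈r t / h t⌉)).filter
              (fun z => z ≠ Z2 t ω ∧ |(z : ℝ) - (Z2 t ω : ℝ)| < r t / h t), σ z ω)}
        ⊆ ({ω | (1:ENNReal) ≤
            ∑ z ∈ (Finset.Icc (Z1 t ω - ⌈r t / h t⌉) (Z1 t ω + ⌈r t / h t⌉)).filter
              (fun z => z ≠ Z1 t ω ∧ |(z : ℝ) - (Z1 t ω : ℝ)| < r t / h t), gA (σ z ω)}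
          ∪ {ω | ENNReal.ofReal (ℓ t / (2 * h t)) ≤
            ∑ z ∈ (Finset.Icc (Z1 t ω - ⌈r t / h t⌉) (Z1 t ω + ⌈r t / h t⌉)).filter
              (fun z => z ≠ Z1 t ω ∧ |(z : ℝ) - (Z1 t ω : ℝ)| < r t / h t), gB (σ z ω)})
          ∪ ({ω | (1:ENNReal) ≤
            ∑ z ∈ (Finset.Icc (Z2 t ω - ⌈r t / h t⌉) (Z2 t ω + ⌈r t / h t⌉)).filter
              (fun z => z ≠ Z2 t ω ∧ |(z : ℝ) - (Z2 t ω : ℝ)| < r t / h t), gA (σ z ω)}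
          ∪ {ω | ENNReal.ofReal (ℓ t / (2 * h t)) ≤
            ∑ z ∈ (Finset.Icc (Z2 t ω - ⌈r t / h t⌉) (Z2 t ω + ⌈r t / h t⌉)).filter
              (fun z => z ≠ Z2 t ω ∧ |(z : ℝ) - (Z2 t ω : ℝ)| < r t / h t), gB (σ z ω)}) := by
      intro ω hω
      simp only [Set.mem_setOf_eq] at hω
      simp only [Set.mem_union, Set.mem_setOf_eq]
      set W1 : Finset ℤ := (Finset.Icc (Z1 t ω - ⌈r t / h t⌉) (Z1 t ω + ⌈r t / h t⌉)).filter
        (fun z => z ≠ Z1 t ω ∧ |(z : ℝ) - (Z1 t ω : ℝ)| < r t / h t) with hW1def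
      set W2 : Finset ℤ := (Finset.Icc (Z2 t ω - ⌈r t / h t⌉) (Z2 t ω + ⌈r t / h t⌉)).filter
        (fun z => z ≠ Z2 t ω ∧ |(z : ℝ) - (Z2 t ω : ℝ)| < r t / h t) with hW2def
      have hsplit : ℓ t / (2 * h t) + ℓ t / (2 * h t) = ℓ t / h t := by
        field_simp
        ring
      have hgen : ∀ W : Finset ℤ, ℓ t / (2 * h t) ≤ ∑ z ∈ W, σ z ω →
          ((1:ENNReal) ≤ ∑ z ∈ W, gA (σ z ω)) ∨
          (ENNReal.ofReal (ℓ t / (2 * h t)) ≤ ∑ z ∈ W, gB (σ z ω)) := by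
        intro W hs
        by_cases hbig : ∃ z ∈ W, ℓ t / h t ^ 3 < σ z ω
        · left
          obtain ⟨z, hz, hcz⟩ := hbig
          have h1 : gA (σ z ω) = 1 := by
            rw [hgAdef]
            exact Set.indicator_of_mem (Set.mem_Ioi.mpr hcz) _
          calc (1:ENNReal) = gA (σ z ω) := h1.symm
            _ ≤ ∑ z ∈ W, gA (σ z ω) :=
              Finset.single_le_sum (f := fun z => gA (σ z ω)) (fun i _ => zero_le) hz
        · right
          push_neg at hbig
          calc ENNReal.ofReal (ℓ t / (2 * h t))
              ≤ ENNReal.ofReal (∑ z ∈ W, σ z ω) := ENNReal.ofReal_le_ofReal hs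
            _ ≤ ∑ z ∈ W, ENNReal.ofReal (σ z ω) := aux_ofReal_sum_le _ _
            _ = ∑ z ∈ W, gB (σ z ω) := by
                apply Finset.sum_congr rfl
                intro z hz
                rw [hgBdef]
                simp only [min_eq_left (hbig z hz)]
      have hside : ℓ t / (2 * h t) ≤ ∑ z ∈ W1, σ z ω
          ∨ ℓ t / (2 * h t) ≤ ∑ z ∈ W2, σ z ω := by
        by_contra hcon
        push_neg at hcon
        linarith [hcon.1, hcon.2]
      rcases hside with hs | hs
      · exact Or.inl (hgen W1 hs)
      · exact Or.inr (hgen W2 hs)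
    -- put everything together
    refine le_trans (measure_mono hincl) (le_trans (measure_union_le _ _) ?_)
    refine le_trans (add_le_add
      (le_trans (measure_union_le _ _) (add_le_add hP1a hP1b))
      (le_trans (measure_union_le _ _) (add_le_add hP2a hP2b))) ?_
    rw [← ENNReal.ofReal_add h12h h24Bh,
      ← ENNReal.ofReal_add (add_nonneg h12h h24Bh) (add_nonneg h12h h24Bh)]
    apply ENNReal.ofReal_le_ofReal
    apply le_of_eq
    rw [hCdef]
    field_simp
    ring
  -- conclusion: squeeze the probability of the good event
  have hup : ∀ t : ℝ, (P {ω |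
        (∑ z ∈ (Finset.Icc (Z1 t ω - ⌈r t / h t⌉) (Z1 t ω + ⌈r t / h t⌉)).filter
            (fun z => z ≠ Z1 t ω ∧ |(z : ℝ) - (Z1 t ω : ℝ)| < r t / h t), σ z ω) +
        (∑ z ∈ (Finset.Icc (Z2 t ω - ⌈r t / h t⌉) (Z2 t ω + ⌈r t / h t⌉)).filter
            (fun z => z ≠ Z2 t ω ∧ |(z : ℝ) - (Z2 t ω : ℝ)| < r t / h t), σ z ω)
          < ℓ t / h t}).toReal ≤ 1 := by
    intro t
    rw [← ENNReal.toReal_one]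
    exact ENNReal.toReal_mono ENNReal.one_ne_top prob_le_one
  have hlow : ∀ᶠ t in atTop, 1 - C / h t ≤ (P {ω |
        (∑ z ∈ (Finset.Icc (Z1 t ω - ⌈r t / h t⌉) (Z1 t ω + ⌈r t / h t⌉)).filter
            (fun z => z ≠ Z1 t ω ∧ |(z : ℝ) - (Z1 t ω : ℝ)| < r t / h t), σ z ω) +
        (∑ z ∈ (Finset.Icc (Z2 t ω - ⌈r t / h t⌉) (Z2 t ω + ⌈r t / h t⌉)).filter
            (fun z => z ≠ Z2 t ω ∧ |(z : ℝ) - (Z2 t ω : ℝ)| < r t / h t), σ z ω)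
          < ℓ t / h t}).toReal := by
    filter_upwards [key] with t hkey
    set good : Set Ω := {ω |
        (∑ z ∈ (Finset.Icc (Z1 t ω - ⌈r t / h t⌉) (Z1 t ω + ⌈r t / h t⌉)).filter
            (fun z => z ≠ Z1 t ω ∧ |(z : ℝ) - (Z1 t ω : ℝ)| < r t / h t), σ z ω) +
        (∑ z ∈ (Finset.Icc (Z2 t ω - ⌈r t / h t⌉) (Z2 t ω + ⌈r t / h t⌉)).filter
            (fun z => z ≠ Z2 t ω ∧ |(z : ℝ) - (Z2 t ω : ℝ)| < r t / h t), σ z ω)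
          < ℓ t / h t} with hgood
    have hcompl : goodᶜ = {ω |
        ℓ t / h t ≤
        (∑ z ∈ (Finset.Icc (Z1 t ω - ⌈r t / h t⌉) (Z1 t ω + ⌈r t / h t⌉)).filter
            (fun z => z ≠ Z1 t ω ∧ |(z : ℝ) - (Z1 t ω : ℝ)| < r t / h t), σ z ω) +
        (∑ z ∈ (Finset.Icc (Z2 t ω - ⌈r t / h t⌉) (Z2 t ω + ⌈r t / h t⌉)).filter
            (fun z => z ≠ Z2 t ω ∧ |(z : ℝ) - (Z2 t ω : ℝ)| < r t / h t), σ z ω)} := by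
      ext ω
      simp only [hgood, Set.mem_compl_iff, Set.mem_setOf_eq, not_lt]
    have h1 : (1:ENNReal) ≤ P good + P goodᶜ := by
      have := measure_union_le (μ := P) good goodᶜ
      rw [Set.union_compl_self, measure_univ] at this
      exact this
    have h2 : P goodᶜ ≤ ENNReal.ofReal (C / h t) := by rw [hcompl]; exact hkey
    have h4 : (1:ENNReal) ≤ P good + ENNReal.ofReal (C / h t) :=
      le_trans h1 (add_le_add_right h2 _)
    have h5 := ENNReal.toReal_mono
      (by exact ENNReal.add_ne_top.mpr ⟨measure_ne_top P _, ENNReal.ofReal_ne_top⟩) h4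
    rw [ENNReal.toReal_add (measure_ne_top P _) ENNReal.ofReal_ne_top,
      ENNReal.toReal_one, ENNReal.toReal_ofReal (div_nonneg hCpos.le (hhpos t).le)] at h5
    linarith
  have hCh : Tendsto (fun t => 1 - C / h t) atTop (nhds 1) := by
    have h0 : Tendsto (fun t => C / h t) atTop (nhds 0) :=
      Tendsto.div_atTop tendsto_const_nhds hhtop
    have h1 := (tendsto_const_nhds (α := ℝ) (x := 1) (f := atTop)).sub h0
    simpa using h1
  exact tendsto_of_tendsto_of_tendsto_of_le_of_le' hCh tendsto_const_nhds hlow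
    (Filter.Eventually.of_forall hup)
end

section
/- There exists a non-decreasing function h : [0,∞) → (0,∞) with h_t → ∞ as t → ∞ such that, for all sufficiently large t, both L(ℓ_t / h_t³) > L(ℓ_t)·(1 − 1/h_t) and L(ℓ_t · h_t³) < L(ℓ_t)·(1 + 1/h_t) hold; moreover h can be chosen so that additionally h_t² = o(r_t) as t → ∞. -/
open MeasureTheory Filter

/-- existence of the scaling function `h`.
`L : [0,∞) → (0,∞)` is càdlàg, non-decreasing, unbounded and slowly varying at infinity;
`ℓ t := min {s ≥ 0 : s·L s ≥ t}` and `r t := L (ℓ t)`.  There exists a non-decreasing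
`h : [0,∞) → (0,∞)` with `h_t → ∞` such that eventually both
`L(ℓ_t/h_t³) > L(ℓ_t)(1 - 1/h_t)` and `L(ℓ_t h_t³) < L(ℓ_t)(1 + 1/h_t)` hold, and which
moreover satisfies `h_t² = o(r_t)` as `t → ∞`. -/
theorem exists_scaling_function
    (L : ℝ → ℝ)
    (hLpos : ∀ x, 0 ≤ x → 0 < L x)
    (hLmono : MonotoneOn L (Set.Ici 0))
    (hLcadlag : ∀ x ≥ 0, ContinuousWithinAt L (Set.Ici x) x)
    (hLunb : Tendsto L atTop atTop)
    (hLsv : ∀ v > 0, Tendsto (fun u => L (u * v) / L u) atTop (nhds 1))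
    (ℓ : ℝ → ℝ)
    (hℓ : ∀ t, IsLeast {s : ℝ | 0 ≤ s ∧ t ≤ s * L s} (ℓ t))
    (r : ℝ → ℝ) (hr : ∀ t, r t = L (ℓ t)) :
    ∃ h : ℝ → ℝ, Monotone h ∧ (∀ t, 0 < h t) ∧ Tendsto h atTop atTop ∧
      (fun t => (h t) ^ 2) =o[atTop] r ∧
      (∀ᶠ t in atTop,
        L (ℓ t) * (1 - 1 / h t) < L (ℓ t / (h t) ^ 3) ∧
        L (ℓ t * (h t) ^ 3) < L (ℓ t) * (1 + 1 / h t)) := by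
  classical
  have hℓ0 : ∀ t, 0 ≤ ℓ t := fun t => (hℓ t).1.1
  have hℓub : ∀ t, t ≤ ℓ t * L (ℓ t) := fun t => (hℓ t).1.2
  -- ℓ tends to infinity
  have hℓtop : Tendsto ℓ atTop atTop := by
    rw [tendsto_atTop_atTop]
    intro b
    refine ⟨max b 0 * L (max b 0) + 1, fun t ht => le_trans (le_max_left b 0) ?_⟩
    by_contra hcon
    push_neg at hcon
    have hLle : L (ℓ t) ≤ L (max b 0) := hLmono (hℓ0 t) (le_max_right b 0) hcon.le
    have h2 : t ≤ max b 0 * L (max b 0) :=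
      (hℓub t).trans (mul_le_mul hcon.le hLle (hLpos _ (hℓ0 t)).le (le_max_right b 0))
    linarith
  have hrtop : Tendsto r atTop atTop :=
    (hLunb.comp hℓtop).congr fun t => (hr t).symm
  -- key eventual estimates for each n
  have key : ∀ n : ℕ, ∀ᶠ t in atTop,
      ((n : ℝ) + 1) ^ 3 ≤ r t ∧
      L (ℓ t * ((n : ℝ) + 1) ^ 3) < L (ℓ t) * (1 + 1 / ((n : ℝ) + 1)) ∧
      L (ℓ t) * (1 - 1 / ((n : ℝ) + 1)) < L (ℓ t / ((n : ℝ) + 1) ^ 3) := by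
    intro n
    set c : ℝ := (n : ℝ) + 1 with hcdef
    have hc0 : 0 < c := by positivity
    have hc1 : 0 < 1 / c := by positivity
    have hA := hrtop.eventually_ge_atTop (c ^ 3)
    have hB : ∀ᶠ u in atTop, L (u * c ^ 3) < L u * (1 + 1 / c) := by
      have h1 : (1 : ℝ) < 1 + 1 / c := by linarith
      have h2 := (hLsv (c ^ 3) (by positivity)).eventually_lt_const h1
      filter_upwards [h2, eventually_ge_atTop (0 : ℝ)] with u hu hu0
      have hLu : 0 < L u := hLpos u hu0
      have h3 := (div_lt_iff₀ hLu).mp hu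
      linarith [mul_comm (L u) (1 + 1 / c)]
    have hC : ∀ᶠ u in atTop, L u * (1 - 1 / c) < L (u / c ^ 3) := by
      have h1 : 1 - 1 / c < (1 : ℝ) := by linarith
      have h2 := (hLsv ((c ^ 3)⁻¹) (by positivity)).eventually_const_lt h1
      filter_upwards [h2, eventually_ge_atTop (0 : ℝ)] with u hu hu0
      have hLu : 0 < L u := hLpos u hu0
      have h3 := (lt_div_iff₀ hLu).mp hu
      rw [div_eq_mul_inv u (c ^ 3)]
      linarith [mul_comm (L u) (1 - 1 / c)]
    filter_upwards [hA, hℓtop.eventually hB, hℓtop.eventually hC] with t h1 h2 h3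
    exact ⟨h1, h2, h3⟩
  -- choose thresholds
  choose a ha using fun n => eventually_atTop.mp (key n)
  set T : ℕ → ℝ := fun n => (n : ℝ) + ∑ k ∈ Finset.range (n + 1), |a k| with hTdef
  have hTmono : Monotone T := by
    intro m n hmn
    exact add_le_add (Nat.cast_le.mpr hmn)
      (Finset.sum_le_sum_of_subset_of_nonneg
        (Finset.range_subset_range.mpr (by omega)) (fun k _ _ => abs_nonneg _))
  have hTn : ∀ n : ℕ, (n : ℝ) ≤ T n := fun n =>
    le_add_of_nonneg_right (Finset.sum_nonneg fun k _ => abs_nonneg _)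
  have hTa : ∀ n, a n ≤ T n := by
    intro n
    have h1 : |a n| ≤ ∑ k ∈ Finset.range (n + 1), |a k| :=
      Finset.single_le_sum (f := fun k => |a k|) (fun k _ => abs_nonneg _) (Finset.self_mem_range_succ n)
    exact (le_abs_self _).trans (h1.trans (le_add_of_nonneg_left (Nat.cast_nonneg n)))
  have hTprop : ∀ n t, T n ≤ t →
      ((n : ℝ) + 1) ^ 3 ≤ r t ∧
      L (ℓ t * ((n : ℝ) + 1) ^ 3) < L (ℓ t) * (1 + 1 / ((n : ℝ) + 1)) ∧
      L (ℓ t) * (1 - 1 / ((n : ℝ) + 1)) < L (ℓ t / ((n : ℝ) + 1) ^ 3) :=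
    fun n t ht => ha n t ((hTa n).trans ht)
  -- the function h
  set N : ℝ → ℕ := fun t => Nat.findGreatest (fun n => T n ≤ t) ⌈t⌉₊ with hNdef
  have hNmono : ∀ s t, s ≤ t → N s ≤ N t := by
    intro s t hst
    calc Nat.findGreatest (fun n => T n ≤ s) ⌈s⌉₊
        ≤ Nat.findGreatest (fun n => T n ≤ t) ⌈s⌉₊ :=
          Nat.findGreatest_mono_left (fun n hn => le_trans hn hst) _
      _ ≤ Nat.findGreatest (fun n => T n ≤ t) ⌈t⌉₊ :=
          Nat.findGreatest_mono_right _ (Nat.ceil_mono hst)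
  have hNge : ∀ n t, T n ≤ t → n ≤ N t := by
    intro n t ht
    have hnt : (n : ℝ) ≤ t := (hTn n).trans ht
    have hceil : n ≤ ⌈t⌉₊ := by
      have := Nat.ceil_mono hnt
      simpa using this
    exact Nat.le_findGreatest hceil ht
  have hNspec : ∀ t, T 0 ≤ t → T (N t) ≤ t := by
    intro t ht
    exact Nat.findGreatest_spec (P := fun n => T n ≤ t) (n := ⌈t⌉₊) (Nat.zero_le _) ht
  refine ⟨fun t => (N t : ℝ) + 1, ?_, fun t => by positivity, ?_, ?_, ?_⟩
  · exact fun s t hst => add_le_add_left (Nat.cast_le.mpr (hNmono s t hst)) 1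
  · rw [tendsto_atTop]
    intro b
    filter_upwards [eventually_ge_atTop (T ⌈b⌉₊)] with t ht
    have h1 : (⌈b⌉₊ : ℝ) ≤ (N t : ℝ) := Nat.cast_le.mpr (hNge ⌈b⌉₊ t ht)
    linarith [Nat.le_ceil b]
  · rw [Asymptotics.isLittleO_iff]
    intro c hc
    obtain ⟨n, hn⟩ : ∃ n : ℕ, 1 / c ≤ (n : ℝ) := exists_nat_ge _
    filter_upwards [eventually_ge_atTop (max (T n) (T 0))] with t ht
    have ht0 : T 0 ≤ t := le_trans (le_max_right _ _) ht
    have htn : T n ≤ t := le_trans (le_max_left _ _) ht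
    have hNn : (n : ℝ) ≤ (N t : ℝ) := Nat.cast_le.mpr (hNge n t htn)
    obtain ⟨hr3, -, -⟩ := hTprop (N t) t (hNspec t ht0)
    set m : ℝ := (N t : ℝ) + 1 with hmdef
    have hm1 : (1 : ℝ) ≤ m := le_add_of_nonneg_left (Nat.cast_nonneg _)
    have hrpos : 0 < r t := lt_of_lt_of_le (by positivity) hr3
    have hcm : 1 ≤ c * m := by
      have h2 : 1 / c ≤ m := hn.trans (by linarith)
      calc (1 : ℝ) = c * (1 / c) := by field_simp
        _ ≤ c * m := mul_le_mul_of_nonneg_left h2 hc.le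
    have hmain : m ^ 2 ≤ c * r t := by
      nlinarith [mul_le_mul_of_nonneg_left hr3 hc.le,
        mul_nonneg (sub_nonneg.mpr hcm) (sq_nonneg m), sq_nonneg m]
    simp only [Real.norm_eq_abs]
    rw [abs_of_nonneg (by positivity : (0:ℝ) ≤ m ^ 2), abs_of_nonneg hrpos.le]
    exact hmain
  · filter_upwards [eventually_ge_atTop (T 0)] with t ht
    obtain ⟨-, hB, hC⟩ := hTprop (N t) t (hNspec t ht)
    exact ⟨hC, hB⟩
end

section
/- As n → ∞, L(M_n)/n converges in law to a Fréchet distribution with index 1; that is, for every x > 0, P( L(M_n) ≤ n·x ) → e^{−1/x} as n → ∞. -/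
open MeasureTheory Filter ProbabilityTheory
open scoped ENNReal

private lemma aux_biSup_le {f : ℕ → ℝ} {s : Finset ℕ} {a : ℝ} (ha : 0 ≤ a)
    (h : ∀ i ∈ s, f i ≤ a) : (⨆ i ∈ s, f i) ≤ a := by
  refine ciSup_le fun i => ?_
  by_cases hi : i ∈ s
  · have h1 : (⨆ _ : i ∈ s, f i) = f i := ciSup_pos hi
    rw [h1]; exact h i hi
  · haveI : IsEmpty (i ∈ s) := ⟨hi⟩
    rw [Real.iSup_of_isEmpty]; exact ha

private lemma aux_le_biSup {f : ℕ → ℝ} {s : Finset ℕ} {i : ℕ} (hi : i ∈ s) :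
    f i ≤ ⨆ j ∈ s, f j := by
  have hb : BddAbove (Set.range fun j => ⨆ _ : j ∈ s, f j) := by
    apply Set.Finite.bddAbove
    apply Set.Finite.subset ((s.finite_toSet.image f).insert 0)
    rintro y ⟨j, rfl⟩
    show (⨆ _ : j ∈ s, f j) ∈ insert 0 (f '' ↑s)
    by_cases hj : j ∈ s
    · have h1 : (⨆ _ : j ∈ s, f j) = f j := ciSup_pos hj
      rw [h1]
      exact Set.mem_insert_of_mem _ ⟨j, hj, rfl⟩
    · haveI : IsEmpty (j ∈ s) := ⟨hj⟩
      rw [Real.iSup_of_isEmpty]; exact Set.mem_insert _ _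
  have h1 : (⨆ _ : i ∈ s, f i) = f i := ciSup_pos hi
  calc f i = ⨆ _ : i ∈ s, f i := h1.symm
    _ ≤ ⨆ j ∈ s, f j := le_ciSup hb i

private lemma aux_pow_tendsto {u : ℕ → ℝ} {c : ℝ} (hc : 0 < c)
    (hu : Tendsto (fun k : ℕ => (k : ℝ) * u k) atTop (nhds c)) :
    Tendsto (fun k : ℕ => (1 - u k) ^ k) atTop (nhds (Real.exp (-c))) := by
  have hu0 : Tendsto u atTop (nhds 0) := by
    have h1 : Tendsto (fun k : ℕ => ((k : ℝ) * u k) * (k : ℝ)⁻¹) atTop (nhds (c * 0)) :=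
      hu.mul tendsto_inv_atTop_nhds_zero_nat
    rw [mul_zero] at h1
    apply h1.congr'
    filter_upwards [eventually_gt_atTop 0] with k hk
    have hkne : (k : ℝ) ≠ 0 := Nat.cast_ne_zero.2 hk.ne'
    field_simp
  have hupos : ∀ᶠ k in atTop, 0 < u k := by
    filter_upwards [hu.eventually (eventually_gt_nhds hc), eventually_gt_atTop 0] with k h1 h2
    by_contra hcon
    push_neg at hcon
    have : (k : ℝ) * u k ≤ 0 :=
      mul_nonpos_iff.2 (Or.inl ⟨Nat.cast_nonneg k, hcon⟩)
    linarith
  have hult : ∀ᶠ k in atTop, u k < 1 := hu0.eventually (eventually_lt_nhds one_pos)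
  have hslope : Tendsto (fun y : ℝ => Real.log y / (y - 1)) (nhdsWithin 1 {(1:ℝ)}ᶜ) (nhds 1) := by
    have h := hasDerivAt_iff_tendsto_slope.1 (Real.hasDerivAt_log one_ne_zero)
    rw [inv_one] at h
    refine h.congr fun y => ?_
    simp [slope_def_field, Real.log_one]
  have hcomp : Tendsto (fun k : ℕ => Real.log (1 - u k) / ((1 - u k) - 1)) atTop (nhds 1) := by
    apply hslope.comp
    rw [tendsto_nhdsWithin_iff]
    constructor
    · have h2 : Tendsto (fun k => (1:ℝ) - u k) atTop (nhds (1 - 0)) :=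
        tendsto_const_nhds.sub hu0
      simpa using h2
    · filter_upwards [hupos] with k hk
      simp only [Set.mem_compl_iff, Set.mem_singleton_iff]
      intro h
      have : u k = 0 := by linarith
      exact absurd this (ne_of_gt hk)
  have hklog : Tendsto (fun k : ℕ => (k : ℝ) * Real.log (1 - u k)) atTop (nhds (-c)) := by
    have h2 : Tendsto (fun k : ℕ => ((k:ℝ) * u k) * (Real.log (1 - u k) / ((1 - u k) - 1)) * (-1))
        atTop (nhds (c * 1 * (-1))) := (hu.mul hcomp).mul_const _
    rw [mul_one, mul_neg_one] at h2
    apply h2.congr'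
    filter_upwards [hupos] with k hk
    have hne : u k ≠ 0 := ne_of_gt hk
    have hden : (1 : ℝ) - u k - 1 = -u k := by ring
    rw [hden]
    field_simp
  have hexp : Tendsto (fun k : ℕ => Real.exp ((k:ℝ) * Real.log (1 - u k))) atTop
      (nhds (Real.exp (-c))) := (Real.continuous_exp.tendsto _).comp hklog
  apply hexp.congr'
  filter_upwards [hult] with k hk
  rw [Real.exp_nat_mul, Real.exp_log (by linarith)]

/-- Fréchet limit law for the maximum, from Proposition 3.1 of the paper.
`(Y_n)_{n ≥ 1}` are i.i.d. strictly positive random variables with `P(Y_1 > x) = 1/L x`,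
where `L` is càdlàg, non-decreasing, unbounded and slowly varying at infinity.  With
`M_n := max_{1 ≤ i ≤ n} Y_i`, the rescaled variable `L(M_n)/n` converges in law to a
Fréchet distribution with index `1`: for every `x > 0`,
`P( L(M_n) ≤ n·x ) → e^{-1/x}` as `n → ∞`. -/
theorem L_max_frechet_law
    {Ω : Type*} [MeasurableSpace Ω] (P : Measure Ω) [IsProbabilityMeasure P]
    (L : ℝ → ℝ)
    (hLpos : ∀ x, 0 ≤ x → 0 < L x)
    (hLmono : MonotoneOn L (Set.Ici 0))
    (hLcadlag : ∀ x ≥ 0, ContinuousWithinAt L (Set.Ici x) x)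
    (hLunb : Tendsto L atTop atTop)
    (hLsv : ∀ v > 0, Tendsto (fun u => L (u * v) / L u) atTop (nhds 1))
    (Y : ℕ → Ω → ℝ)
    (hYmeas : ∀ i, Measurable (Y i))
    (hYindep : iIndepFun Y P)
    (hYid : ∀ i, Measure.map (Y i) P = Measure.map (Y 1) P)
    (hYpos : ∀ i, ∀ᵐ ω ∂P, 0 < Y i ω)
    (hYtail : ∀ x : ℝ, 0 ≤ x → P {ω | x < Y 1 ω} = ENNReal.ofReal (1 / L x)) :
    ∀ x > 0,
      Tendsto
        (fun k : ℕ =>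
          (P {ω | L (⨆ i ∈ Finset.Icc 1 k, Y i ω) ≤ (k : ℝ) * x}).toReal)
        atTop (nhds (Real.exp (-1 / x))) := by
  intro x hx
  classical
  rw [show (-1 : ℝ) / x = -(1 / x) by ring]
  -- the generalized inverse of L
  set S : ℝ → Set ℝ := fun c => {y | 0 ≤ y ∧ c < L y} with hS
  have hSne : ∀ c, (S c).Nonempty := by
    intro c
    obtain ⟨y, hy1, hy2⟩ :=
      ((hLunb.eventually (eventually_gt_atTop c)).and (eventually_ge_atTop 0)).exists
    exact ⟨y, hy2, hy1⟩
  have hSbdd : ∀ c, BddBelow (S c) := fun c => ⟨0, fun y hy => hy.1⟩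
  set T : ℝ → ℝ := fun c => sInf (S c) with hT
  have hT0 : ∀ c, 0 ≤ T c := fun c => le_csInf (hSne c) fun y hy => hy.1
  have hTlt : ∀ c y, 0 ≤ y → y < T c → L y ≤ c := by
    intro c y hy0 hyT
    by_contra h
    push_neg at h
    exact absurd (csInf_le (hSbdd c) ⟨hy0, h⟩) (not_le.2 hyT)
  have hTgt : ∀ c y, T c < y → c < L y := by
    intro c y hyT
    obtain ⟨z, hz, hzy⟩ := exists_lt_of_csInf_lt (hSne c) hyT
    exact hz.2.trans_le (hLmono hz.1 (hz.1.trans hzy.le) hzy.le)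
  have hTge : ∀ c, c ≤ L (T c) := by
    intro c
    have h1 : Tendsto L (nhdsWithin (T c) (Set.Ioi (T c))) (nhds (L (T c))) :=
      (hLcadlag (T c) (hT0 c)).mono_left (nhdsWithin_mono _ Set.Ioi_subset_Ici_self)
    refine ge_of_tendsto h1 ?_
    filter_upwards [self_mem_nhdsWithin] with y hy
    exact (hTgt c y hy).le
  have hTbig : ∀ c M, 0 ≤ M → L M ≤ c → M ≤ T c := by
    intro c M hM0 hMc
    refine le_csInf (hSne c) fun z hz => ?_
    by_contra h
    push_neg at h
    exact absurd hz.2 (not_lt.2 ((hLmono hz.1 hM0 h.le).trans hMc))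
  -- the sequence t k = T (k x) tends to infinity
  have hkx : Tendsto (fun k : ℕ => (k : ℝ) * x) atTop atTop :=
    tendsto_natCast_atTop_atTop.atTop_mul_const hx
  set t : ℕ → ℝ := fun k => T ((k : ℝ) * x) with htdef
  have hTtop : Tendsto t atTop atTop := by
    rw [tendsto_atTop]
    intro b
    filter_upwards [hkx.eventually (eventually_ge_atTop (L (max b 0)))] with k hk
    exact le_trans (le_max_left b 0) (hTbig _ _ (le_max_right b 0) hk)
  have hratio : Tendsto (fun k : ℕ => L (t k * (1 / 2)) / L (t k)) atTop (nhds 1) :=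
    (hLsv (1 / 2) (by norm_num)).comp hTtop
  have hev1 : ∀ᶠ k : ℕ in atTop, 1 ≤ t k := by
    filter_upwards [hkx.eventually (eventually_ge_atTop (L 1))] with k hk
    exact hTbig _ _ zero_le_one hk
  set a : ℕ → ℝ := fun k => 1 / L (t k) with hadef
  set b : ℕ → ℝ := fun k => 1 / L (t k * (1 / 2)) with hbdef
  -- eventual numeric facts
  have hfacts : ∀ᶠ k : ℕ in atTop,
      (1 ≤ t k ∧ 0 < L (t k) ∧ 0 < L (t k * (1 / 2)) ∧ (k : ℝ) * x ≤ L (t k) ∧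
        L (t k * (1 / 2)) ≤ (k : ℝ) * x ∧ 1 ≤ (k : ℝ)) := by
    filter_upwards [hev1, eventually_ge_atTop 1] with k h1 h2
    have ht0 : (0 : ℝ) ≤ t k := by linarith
    have ht20 : (0 : ℝ) ≤ t k * (1 / 2) := by linarith
    refine ⟨h1, hLpos _ ht0, hLpos _ ht20, hTge _, ?_, ?_⟩
    · exact hTlt _ _ ht20 (by linarith)
    · exact_mod_cast h2
  have hka_le : ∀ᶠ k : ℕ in atTop, (k : ℝ) * a k ≤ 1 / x := by
    filter_upwards [hfacts] with k ⟨h1, h2, h3, h4, h5, h6⟩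
    have hkx0 : 0 < (k : ℝ) * x := by nlinarith
    have : a k ≤ 1 / ((k : ℝ) * x) := by
      simp only [hadef]
      exact one_div_le_one_div_of_le hkx0 h4
    calc (k : ℝ) * a k ≤ (k : ℝ) * (1 / ((k : ℝ) * x)) := by
          exact mul_le_mul_of_nonneg_left this (by linarith)
      _ = 1 / x := by field_simp
  have hkb_ge : ∀ᶠ k : ℕ in atTop, 1 / x ≤ (k : ℝ) * b k := by
    filter_upwards [hfacts] with k ⟨h1, h2, h3, h4, h5, h6⟩
    have hkx0 : 0 < (k : ℝ) * x := by nlinarith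
    have : 1 / ((k : ℝ) * x) ≤ b k := by
      simp only [hbdef]
      exact one_div_le_one_div_of_le h3 h5
    calc 1 / x = (k : ℝ) * (1 / ((k : ℝ) * x)) := by field_simp
      _ ≤ (k : ℝ) * b k := mul_le_mul_of_nonneg_left this (by linarith)
  have hab : ∀ᶠ k : ℕ in atTop,
      a k = b k * (L (t k * (1 / 2)) / L (t k)) := by
    filter_upwards [hfacts] with k ⟨h1, h2, h3, h4, h5, h6⟩
    simp only [hadef, hbdef]
    have h3' : (0 : ℝ) < L (t k / 2) := by
      rwa [show t k / 2 = t k * (1 / 2) by ring]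
    field_simp
  -- k * a k → 1/x and k * b k → 1/x
  have hbtend : Tendsto (fun k : ℕ => (k : ℝ) * b k) atTop (nhds (1 / x)) := by
    have hupper : Tendsto (fun k : ℕ => (1 / x) / (L (t k * (1 / 2)) / L (t k)))
        atTop (nhds ((1 / x) / 1)) := tendsto_const_nhds.div hratio one_ne_zero
    rw [div_one] at hupper
    refine tendsto_of_tendsto_of_tendsto_of_le_of_le' tendsto_const_nhds hupper hkb_ge ?_
    filter_upwards [hfacts, hka_le, hab] with k ⟨h1, h2, h3, h4, h5, h6⟩ hka habk
    have hrho : 0 < L (t k * (1 / 2)) / L (t k) := div_pos h3 h2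
    have hb' : b k = a k / (L (t k * (1 / 2)) / L (t k)) := by
      rw [habk, mul_div_assoc, div_self (ne_of_gt hrho), mul_one]
    rw [hb', ← mul_div_assoc]
    gcongr
  have hatend : Tendsto (fun k : ℕ => (k : ℝ) * a k) atTop (nhds (1 / x)) := by
    have hlower : Tendsto (fun k : ℕ => (1 / x) * (L (t k * (1 / 2)) / L (t k)))
        atTop (nhds ((1 / x) * 1)) := tendsto_const_nhds.mul hratio
    rw [mul_one] at hlower
    refine tendsto_of_tendsto_of_tendsto_of_le_of_le' hlower tendsto_const_nhds ?_ hka_le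
    filter_upwards [hfacts, hkb_ge, hab] with k ⟨h1, h2, h3, h4, h5, h6⟩ hkb habk
    have hrho : 0 ≤ L (t k * (1 / 2)) / L (t k) := le_of_lt (div_pos h3 h2)
    calc (1 / x) * (L (t k * (1 / 2)) / L (t k))
        ≤ ((k : ℝ) * b k) * (L (t k * (1 / 2)) / L (t k)) :=
          mul_le_mul_of_nonneg_right hkb hrho
      _ = (k : ℝ) * a k := by rw [habk]; ring
  -- probability of the product events
  have prodForm : ∀ (k : ℕ) (s : ℝ), 0 ≤ s →
      P (⋂ i ∈ Finset.Icc 1 k, {ω | Y i ω ≤ s}) = (1 - ENNReal.ofReal (1 / L s)) ^ k := by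
    intro k s hs
    have h1 : P (⋂ i ∈ Finset.Icc 1 k, Y i ⁻¹' Set.Iic s)
        = ∏ i ∈ Finset.Icc 1 k, P (Y i ⁻¹' Set.Iic s) :=
      (iIndepFun_iff_measure_inter_preimage_eq_mul.1 hYindep) (Finset.Icc 1 k)
        (fun i _ => measurableSet_Iic)
    have h2 : ∀ i : ℕ, P (Y i ⁻¹' Set.Iic s) = 1 - ENNReal.ofReal (1 / L s) := by
      intro i
      have hmap : P (Y i ⁻¹' Set.Iic s) = (P.map (Y i)) (Set.Iic s) :=
        (Measure.map_apply (hYmeas i) measurableSet_Iic).symm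
      rw [hmap, hYid i, Measure.map_apply (hYmeas 1) measurableSet_Iic]
      have hmeas : MeasurableSet {ω | s < Y 1 ω} := (hYmeas 1) measurableSet_Ioi
      have hA : Y 1 ⁻¹' Set.Iic s = {ω | s < Y 1 ω}ᶜ := by
        ext ω; simp [not_lt]
      rw [hA, prob_compl_eq_one_sub hmeas, hYtail s hs]
    have h3 : (⋂ i ∈ Finset.Icc 1 k, {ω | Y i ω ≤ s})
        = ⋂ i ∈ Finset.Icc 1 k, Y i ⁻¹' Set.Iic s := rfl
    rw [h3, h1]
    rw [Finset.prod_congr rfl fun i _ => h2 i, Finset.prod_const, Nat.card_Icc]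
    simp
  have toRealPow : ∀ (k : ℕ) (s : ℝ), 0 ≤ s →
      ((1 - ENNReal.ofReal (1 / L s)) ^ k).toReal = (1 - 1 / L s) ^ k := by
    intro k s hs
    have h1 : ENNReal.ofReal (1 / L s) ≤ 1 := by
      rw [← hYtail s hs]; exact prob_le_one
    have hLs := hLpos s hs
    have h0 : (0 : ℝ) ≤ 1 / L s := by positivity
    have hle1 : 1 / L s ≤ 1 := ENNReal.ofReal_le_one.1 h1
    have hb : (0 : ℝ) ≤ 1 - 1 / L s := by linarith
    have heq : (1 : ℝ≥0∞) - ENNReal.ofReal (1 / L s) = ENNReal.ofReal (1 - 1 / L s) := by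
      rw [ENNReal.ofReal_sub _ h0, ENNReal.ofReal_one]
    rw [heq, ← ENNReal.ofReal_pow hb, ENNReal.toReal_ofReal (pow_nonneg hb k)]
  have hpos : ∀ᵐ ω ∂P, ∀ i, 0 < Y i ω := ae_all_iff.2 hYpos
  -- the two limiting bounds
  have hlowtend : Tendsto (fun k : ℕ => (1 - b k) ^ k) atTop (nhds (Real.exp (-(1 / x)))) :=
    aux_pow_tendsto (by positivity) hbtend
  have hhightend : Tendsto (fun k : ℕ => (1 - a k) ^ k) atTop (nhds (Real.exp (-(1 / x)))) :=
    aux_pow_tendsto (by positivity) hatend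
  refine tendsto_of_tendsto_of_tendsto_of_le_of_le' hlowtend hhightend ?_ ?_
  · -- lower bound
    filter_upwards [hfacts] with k ⟨h1, h2, h3, h4, h5, h6⟩
    have ht20 : (0 : ℝ) ≤ t k * (1 / 2) := by linarith
    have hk1 : 1 ∈ Finset.Icc 1 k := by
      simp only [Finset.mem_Icc]
      constructor
      · exact le_refl 1
      · exact_mod_cast Nat.one_le_cast.1 h6
    have hsub : ∀ᵐ ω ∂P, ω ∈ (⋂ i ∈ Finset.Icc 1 k, {ω | Y i ω ≤ t k * (1 / 2)}) →
        ω ∈ {ω | L (⨆ i ∈ Finset.Icc 1 k, Y i ω) ≤ (k : ℝ) * x} := by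
      filter_upwards [hpos] with ω hω hmem
      simp only [Set.mem_iInter, Set.mem_setOf_eq] at hmem ⊢
      have hsup_le : (⨆ i ∈ Finset.Icc 1 k, Y i ω) ≤ t k * (1 / 2) :=
        aux_biSup_le ht20 fun i hi => hmem i hi
      have hsup_nonneg : 0 ≤ ⨆ i ∈ Finset.Icc 1 k, Y i ω :=
        le_trans (hω 1).le (aux_le_biSup (f := fun i => Y i ω) hk1)
      calc L (⨆ i ∈ Finset.Icc 1 k, Y i ω) ≤ L (t k * (1 / 2)) :=
            hLmono hsup_nonneg ht20 hsup_le
        _ ≤ (k : ℝ) * x := h5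
    have hmle : P (⋂ i ∈ Finset.Icc 1 k, {ω | Y i ω ≤ t k * (1 / 2)})
        ≤ P {ω | L (⨆ i ∈ Finset.Icc 1 k, Y i ω) ≤ (k : ℝ) * x} :=
      measure_mono_ae hsub
    have := ENNReal.toReal_mono (measure_ne_top P _) hmle
    rw [prodForm k _ ht20, toRealPow k _ ht20] at this
    exact this
  · -- upper bound
    filter_upwards [hfacts] with k ⟨h1, h2, h3, h4, h5, h6⟩
    have ht0 : (0 : ℝ) ≤ t k := by linarith
    have hsub : ∀ᵐ ω ∂P, ω ∈ {ω | L (⨆ i ∈ Finset.Icc 1 k, Y i ω) ≤ (k : ℝ) * x} →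
        ω ∈ (⋂ i ∈ Finset.Icc 1 k, {ω | Y i ω ≤ t k}) := by
      filter_upwards [hpos] with ω hω hmem
      simp only [Set.mem_iInter, Set.mem_setOf_eq]
      intro i hi
      by_contra hcon
      push_neg at hcon
      have hsup : Y i ω ≤ ⨆ j ∈ Finset.Icc 1 k, Y j ω :=
        aux_le_biSup (f := fun j => Y j ω) hi
      have : (k : ℝ) * x < L (⨆ j ∈ Finset.Icc 1 k, Y j ω) :=
        hTgt _ _ (lt_of_lt_of_le hcon hsup)
      linarith
    have hmle : P {ω | L (⨆ i ∈ Finset.Icc 1 k, Y i ω) ≤ (k : ℝ) * x}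
        ≤ P (⋂ i ∈ Finset.Icc 1 k, {ω | Y i ω ≤ t k}) :=
      measure_mono_ae hsub
    have := ENNReal.toReal_mono (measure_ne_top P _) hmle
    rw [prodForm k _ ht0, toRealPow k _ ht0] at this
    exact this
end
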